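/- arXiv:1907.12078 — 10 statements merged into one kernel-verified Lean document; each statement's English description precedes it below -/
import Mathlib

section
/- Every finite graph has an avoidable vertex, i.e., a vertex v such that for any two nonadjacent neighbors x and y of v, there exists an induced cycle containing the path x–v–y (equivalently, an x,y-path all of whose internal vertices are outside the closed neighborhood of v). -/
open SimpleGraph

/-- A walk `c` from `v` to `v` is an induced (chordless) cycle if it is a cycle and
every edge of the graph between vertices of the cycle is an edge of the cycle. -/
def IsInducedCycle {V : Type*} (G : SimpleGraph V) {v : V} (c : G.Walk v v) : Prop :=
  c.IsCycle ∧ ∀ x ∈ c.support, ∀ y ∈ c.support, G.Adj x y → s(x, y) ∈ c.edges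

/-- A vertex `v` is avoidable if every induced path `x - v - y` on three vertices
closes to an induced cycle. -/
def Avoidable {V : Type*} (G : SimpleGraph V) (v : V) : Prop :=
  ∀ x y : V, G.Adj v x → G.Adj v y → x ≠ y → ¬ G.Adj x y →
    ∃ c : G.Walk v v, IsInducedCycle G c ∧ s(x, v) ∈ c.edges ∧ s(v, y) ∈ c.edges

section AvoidableProof

universe u

variable {V : Type*}

/-- Walk-based avoidability: for each pair of nonadjacent neighbors there is a connecting
walk whose internal vertices avoid the closed neighborhood of `v`. -/
def Avoid' (G : SimpleGraph V) (v : V) : Prop :=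
  ∀ x y : V, G.Adj v x → G.Adj v y → x ≠ y → ¬ G.Adj x y →
    ∃ p : G.Walk x y, ∀ z ∈ p.support, z ≠ x → z ≠ y → z ≠ v ∧ ¬ G.Adj v z

lemma edge_of_length_one {G : SimpleGraph V} {a b : V} (p : G.Walk a b) (h : p.length = 1) :
    s(a, b) ∈ p.edges := by
  cases p with
  | nil => simp at h
  | cons h' q =>
    cases q with
    | nil => simp
    | cons h'' q' => simp [SimpleGraph.Walk.length_cons] at h

lemma avoid'_avoidable {G : SimpleGraph V} {v : V} (h : Avoid' G v) : Avoidable G v := by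
  classical
  intro x y hvx hvy hxy hnadj
  obtain ⟨p0, hp0⟩ := h x y hvx hvy hxy hnadj
  set P : G.Walk x y → Prop := fun q => ∀ z ∈ q.support, z ≠ x → z ≠ y → z ≠ v ∧ ¬ G.Adj v z
    with hPdef
  have hex : ∃ n, ∃ q : G.Walk x y, q.length = n ∧ P q := ⟨p0.length, p0, rfl, hp0⟩
  obtain ⟨q0, hq0len, hq0P⟩ := Nat.find_spec hex
  have hmin : ∀ q : G.Walk x y, P q → Nat.find hex ≤ q.length := fun q hq =>
    Nat.find_le ⟨q, rfl, hq⟩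
  set r : G.Walk x y := q0.bypass with hrdef
  have hrP : P r := fun z hz => hq0P z (q0.support_bypass_subset hz)
  have hrlen : ∀ q : G.Walk x y, P q → r.length ≤ q.length := by
    intro q hq
    calc r.length ≤ q0.length := q0.length_bypass_le
    _ = Nat.find hex := hq0len
    _ ≤ q.length := hmin q hq
  have hrpath : r.IsPath := q0.bypass_isPath
  -- chord-freeness of the minimal connecting path
  have hchord : ∀ a ∈ r.support, ∀ b ∈ r.support, G.Adj a b → s(a, b) ∈ r.edges := by
    intro a ha b hb hab
    by_contra hne
    set t : G.Walk x a := r.takeUntil a ha with htdef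
    set d : G.Walk a y := r.dropUntil a ha with hddef
    have hts : t.append d = r := r.take_spec ha
    have hlen : t.length + d.length = r.length := by
      rw [← SimpleGraph.Walk.length_append, hts]
    have hb' : b ∈ t.support ∨ b ∈ d.support := by
      rw [← hts] at hb
      exact (SimpleGraph.Walk.mem_support_append_iff _ _).mp hb
    cases hb' with
    | inr hbd =>
      set d2 : G.Walk b y := d.dropUntil b hbd with hd2def
      set q' : G.Walk x y := t.append (SimpleGraph.Walk.cons hab d2) with hq'def
      have hq'P : P q' := by
        intro z hz hzx hzy
        have hz' : z ∈ r.support := by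
          rw [hq'def] at hz
          rcases (SimpleGraph.Walk.mem_support_append_iff _ _).mp hz with h1 | h2
          · exact r.support_takeUntil_subset ha h1
          · rcases (SimpleGraph.Walk.mem_support_iff _).mp h2 with rfl | h3
            · exact ha
            · have : z ∈ d2.support := by
                simpa using h3
              exact r.support_dropUntil_subset ha (d.support_dropUntil_subset hbd this)
        exact hrP z hz' hzx hzy
      have hd2len : (d.takeUntil b hbd).length + d2.length = d.length := by
        rw [← SimpleGraph.Walk.length_append, d.take_spec hbd]
      have htb2 : 2 ≤ (d.takeUntil b hbd).length := by
        by_contra hlt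
        interval_cases hh : (d.takeUntil b hbd).length
        · exact hab.ne (SimpleGraph.Walk.eq_of_length_eq_zero hh)
        · exact hne (r.edges_dropUntil_subset ha
            (d.edges_takeUntil_subset hbd (edge_of_length_one _ hh)))
      have : q'.length < r.length := by
        have : q'.length = t.length + (d2.length + 1) := by
          rw [hq'def, SimpleGraph.Walk.length_append, SimpleGraph.Walk.length_cons]
        omega
      exact absurd (hrlen q' hq'P) (by omega)
    | inl hbt =>
      set t2 : G.Walk x b := t.takeUntil b hbt with ht2def
      set q' : G.Walk x y := t2.append (SimpleGraph.Walk.cons hab.symm d) with hq'def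
      have hq'P : P q' := by
        intro z hz hzx hzy
        have hz' : z ∈ r.support := by
          rw [hq'def] at hz
          rcases (SimpleGraph.Walk.mem_support_append_iff _ _).mp hz with h1 | h2
          · exact r.support_takeUntil_subset ha (t.support_takeUntil_subset hbt h1)
          · rcases (SimpleGraph.Walk.mem_support_iff _).mp h2 with rfl | h3
            · exact r.support_takeUntil_subset ha hbt
            · have : z ∈ d.support := by simpa using h3
              exact r.support_dropUntil_subset ha this
        exact hrP z hz' hzx hzy
      have ht2len : t2.length + (t.dropUntil b hbt).length = t.length := by
        rw [← SimpleGraph.Walk.length_append, t.take_spec hbt]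
      have htb2 : 2 ≤ (t.dropUntil b hbt).length := by
        by_contra hlt
        interval_cases hh : (t.dropUntil b hbt).length
        · exact hab.ne (SimpleGraph.Walk.eq_of_length_eq_zero hh).symm
        · refine hne ?_
          have := r.edges_takeUntil_subset ha
            (t.edges_dropUntil_subset hbt (edge_of_length_one _ hh))
          rwa [Sym2.eq_swap] at this
      have : q'.length < r.length := by
        have : q'.length = t2.length + (d.length + 1) := by
          rw [hq'def, SimpleGraph.Walk.length_append, SimpleGraph.Walk.length_cons]
        omega
      exact absurd (hrlen q' hq'P) (by omega)
  -- now build the induced cycle v - x - ... - y - v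
  have hxv : x ≠ v := hvx.ne'
  have hyv : y ≠ v := hvy.ne'
  have hvsupp : v ∉ r.support := by
    intro hv
    by_cases h1 : v = x
    · exact hxv h1.symm
    by_cases h2 : v = y
    · exact hyv h2.symm
    exact (hrP v hv h1 h2).1 rfl
  set c : G.Walk v v := SimpleGraph.Walk.cons hvx
    (r.append (SimpleGraph.Walk.cons hvy.symm SimpleGraph.Walk.nil)) with hcdef
  have hcsupp : c.support = v :: (r.support ++ [v]) := by
    rw [hcdef]
    simp [SimpleGraph.Walk.support_append]
  have hcedges : c.edges = s(v, x) :: (r.edges ++ [s(y, v)]) := by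
    rw [hcdef]
    simp [SimpleGraph.Walk.edges_append]
  have hmemsupp : ∀ z, z ∈ c.support ↔ z = v ∨ z ∈ r.support := by
    intro z
    rw [hcsupp]
    simp only [List.mem_cons, List.mem_append, List.mem_singleton]
    tauto
  have hsvx : s(v, x) ∈ c.edges := by rw [hcedges]; simp
  have hsyv : s(y, v) ∈ c.edges := by rw [hcedges]; simp
  refine ⟨c, ⟨?_, ?_⟩, ?_, ?_⟩
  · -- IsCycle
    refine ⟨⟨⟨?_⟩, ?_⟩, ?_⟩
    · -- edges nodup
      rw [hcedges]
      refine List.nodup_cons.mpr ⟨?_, ?_⟩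
      · intro hmem
        rcases List.mem_append.mp hmem with h1 | h2
        · exact hvsupp (r.fst_mem_support_of_mem_edges h1)
        · rw [List.mem_singleton] at h2
          rcases Sym2.eq_iff.mp h2 with ⟨h4, h5⟩ | ⟨h4, h5⟩
          · exact hxv h5
          · exact hxy h5
      · refine List.Nodup.append hrpath.isTrail.edges_nodup (List.nodup_singleton _) ?_
        intro e he1 he2
        rw [List.mem_singleton] at he2
        subst he2
        exact hvsupp (r.snd_mem_support_of_mem_edges he1)
    · rw [hcdef]; exact fun h => by simp at h
    · rw [hcsupp]
      simp only [List.tail_cons]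
      exact List.nodup_append'.mpr ⟨hrpath.support_nodup, List.nodup_singleton _,
        by intro a ha1 ha2; rw [List.mem_singleton] at ha2; subst ha2; exact hvsupp ha1⟩
  · -- induced
    intro a ha b hb hab
    rw [hmemsupp] at ha hb
    rcases ha with rfl | ha <;> rcases hb with rfl | hb
    · exact absurd hab (G.loopless.irrefl _)
    · by_cases h1 : b = x
      · subst h1; exact hsvx
      by_cases h2 : b = y
      · subst h2; rw [Sym2.eq_swap]; exact hsyv
      · exact absurd hab (hrP b hb h1 h2).2
    · by_cases h1 : a = x
      · subst h1; rw [Sym2.eq_swap]; exact hsvx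
      by_cases h2 : a = y
      · subst h2; exact hsyv
      · exact absurd hab.symm (hrP a ha h1 h2).2
    · have := hchord a ha b hb hab
      rw [hcedges]
      simp only [List.mem_cons, List.mem_append]
      tauto
  · rw [Sym2.eq_swap]; exact hsvx
  · rw [Sym2.eq_swap]; exact hsyv

/-- `G - u` with the neighborhood of `u` completed into a clique. -/
def satGraph (G : SimpleGraph V) (u : V) : SimpleGraph {v : V // v ≠ u} where
  Adj a b := (a : V) ≠ (b : V) ∧ (G.Adj a b ∨ (G.Adj u a ∧ G.Adj u b))
  symm := by
    refine ⟨?_⟩; rintro a b ⟨h1, h2⟩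
    exact ⟨h1.symm, by tauto⟩
  loopless := by refine ⟨?_⟩; rintro a ⟨h1, -⟩; exact h1 rfl

lemma satGraph_adj {G : SimpleGraph V} {u : V} {a b : {v : V // v ≠ u}} :
    (satGraph G u).Adj a b ↔ (a : V) ≠ (b : V) ∧ (G.Adj a b ∨ (G.Adj u a ∧ G.Adj u b)) :=
  Iff.rfl

open Classical in
/-- Lift a walk in `satGraph G u` to a walk in `G`, replacing fill edges by detours via `u`. -/
noncomputable def liftWalk (G : SimpleGraph V) (u : V) :
    {a b : {v : V // v ≠ u}} → (satGraph G u).Walk a b → G.Walk (a : V) (b : V)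
  | _, _, .nil => .nil
  | a, _, .cons (v := c) h p =>
    if hg : G.Adj a c then .cons hg (liftWalk G u p)
    else
      .cons ((satGraph_adj.mp h).2.resolve_left hg).1.symm
        (.cons ((satGraph_adj.mp h).2.resolve_left hg).2 (liftWalk G u p))

lemma liftWalk_support {G : SimpleGraph V} {u : V} {a b : {v : V // v ≠ u}}
    (p : (satGraph G u).Walk a b) :
    ∀ z ∈ (liftWalk G u p).support,
      z = u ∨ ∃ h : z ≠ u, (⟨z, h⟩ : {v : V // v ≠ u}) ∈ p.support := by
  induction p with
  | @nil w =>
    intro z hz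
    rw [liftWalk] at hz
    simp only [SimpleGraph.Walk.support_nil, List.mem_singleton] at hz
    subst hz
    exact Or.inr ⟨w.2, by simp⟩
  | @cons a c b h p ih =>
    intro z hz
    rw [liftWalk] at hz
    split_ifs at hz with hg
    · simp only [SimpleGraph.Walk.support_cons, List.mem_cons] at hz
      rcases hz with rfl | hz
      · exact Or.inr ⟨a.2, by simp⟩
      · rcases ih z hz with h1 | ⟨h2, h3⟩
        · exact Or.inl h1
        · exact Or.inr ⟨h2, by simp [h3]⟩
    · simp only [SimpleGraph.Walk.support_cons, List.mem_cons] at hz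
      rcases hz with rfl | rfl | hz
      · exact Or.inr ⟨a.2, by simp⟩
      · exact Or.inl rfl
      · rcases ih z hz with h1 | ⟨h2, h3⟩
        · exact Or.inl h1
        · exact Or.inr ⟨h2, by simp [h3]⟩

/-- Key induction: for every clique `K ≠ V` there is a walk-avoidable vertex outside `K`. -/
lemma key : ∀ (n : ℕ) {V : Type u} [Fintype V] [Nonempty V] (G : SimpleGraph V) (K : Set V),
    Fintype.card V = n → G.IsClique K → K ≠ Set.univ → ∃ w ∉ K, Avoid' G w := by
  intro n
  induction n using Nat.strong_induction_on with
  | _ n ih =>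
    intro V _ _ G K hcard hK hKne
    classical
    by_cases hcomp : ∃ u : V, (∀ k ∈ K, k = u ∨ G.Adj u k) ∧ ∃ z, z ≠ u ∧ ¬ G.Adj u z
    · -- main case
      obtain ⟨u, hu, z, hzu, hzadj⟩ := hcomp
      haveI hV' : Nonempty {v : V // v ≠ u} := ⟨⟨z, hzu⟩⟩
      have hn1 : 1 ≤ n := by
        have := Fintype.card_pos (α := V)
        omega
      have hcard' : Fintype.card {v : V // v ≠ u} = n - 1 := by
        have h1 : Fintype.card {v : V // ¬ v = u} =
            Fintype.card V - Fintype.card {v : V // v = u} :=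
          Fintype.card_subtype_compl _
        have h2 : Fintype.card {v : V // v = u} = 1 := Fintype.card_subtype_eq u
        have h3 : Fintype.card {v : V // v ≠ u} = Fintype.card {v : V // ¬ v = u} := rfl
        omega
      set K' : Set {v : V // v ≠ u} := {a | G.Adj u (a : V)} with hK'def
      have hK'clique : (satGraph G u).IsClique K' := by
        intro a ha b hb hab
        exact satGraph_adj.mpr ⟨Subtype.coe_injective.ne hab, Or.inr ⟨ha, hb⟩⟩
      have hK'ne : K' ≠ Set.univ := by
        rw [Set.ne_univ_iff_exists_notMem]
        exact ⟨⟨z, hzu⟩, hzadj⟩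
      obtain ⟨w', hw'K, hw'A⟩ := ih (n - 1) (by omega) (satGraph G u) K' hcard' hK'clique hK'ne
      set w : V := (w' : V) with hwdef
      have hwu : w ≠ u := w'.2
      have hwuadj : ¬ G.Adj u w := hw'K
      refine ⟨w, ?_, ?_⟩
      · intro hwK
        rcases hu w hwK with h1 | h1
        · exact hwu h1
        · exact hwuadj h1
      · intro x y hwx hwy hxy hnadj
        have hxu : x ≠ u := by rintro rfl; exact hwuadj hwx.symm
        have hyu : y ≠ u := by rintro rfl; exact hwuadj hwy.symm
        by_cases hS : G.Adj u x ∧ G.Adj u y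
        · refine ⟨SimpleGraph.Walk.cons hS.1.symm (SimpleGraph.Walk.cons hS.2
            SimpleGraph.Walk.nil), ?_⟩
          intro t ht htx hty
          simp only [SimpleGraph.Walk.support_cons, SimpleGraph.Walk.support_nil,
            List.mem_cons, List.not_mem_nil, or_false] at ht
          rcases ht with rfl | rfl | rfl
          · exact absurd rfl htx
          · exact ⟨Ne.symm hwu, fun hadj => hwuadj hadj.symm⟩
          · exact absurd rfl hty
        · set x' : {v : V // v ≠ u} := ⟨x, hxu⟩ with hx'def
          set y' : {v : V // v ≠ u} := ⟨y, hyu⟩ with hy'def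
          have hH1 : (satGraph G u).Adj w' x' := satGraph_adj.mpr ⟨hwx.ne, Or.inl hwx⟩
          have hH2 : (satGraph G u).Adj w' y' := satGraph_adj.mpr ⟨hwy.ne, Or.inl hwy⟩
          have hxy' : x' ≠ y' := fun h => hxy (congrArg Subtype.val h)
          have hnadj' : ¬ (satGraph G u).Adj x' y' := by
            rw [satGraph_adj]
            rintro ⟨-, h | h⟩
            · exact hnadj h
            · exact hS h
          obtain ⟨p, hp⟩ := hw'A x' y' hH1 hH2 hxy' hnadj'
          refine ⟨liftWalk G u p, ?_⟩
          intro t ht htx hty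
          rcases liftWalk_support p t ht with rfl | ⟨htu, ht2⟩
          · exact ⟨Ne.symm hwu, fun hadj => hwuadj hadj.symm⟩
          · obtain ⟨htw', htadj'⟩ := hp ⟨t, htu⟩ ht2
              (fun h => htx (congrArg Subtype.val h)) (fun h => hty (congrArg Subtype.val h))
            refine ⟨fun h => htw' (Subtype.ext h), ?_⟩
            intro hadj
            exact htadj' (satGraph_adj.mpr ⟨Ne.symm hadj.ne', Or.inl hadj⟩)
    · -- G is complete
      push_neg at hcomp
      have hKdom : ∀ k ∈ K, ∀ t, t ≠ k → G.Adj k t := by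
        intro k hk
        refine hcomp k ?_
        intro k' hk'
        by_cases h : k' = k
        · exact Or.inl h
        · exact Or.inr (hK hk hk' (Ne.symm h))
      have hdom : ∀ a b : V, a ≠ b → G.Adj a b := by
        intro a b hab
        refine hcomp a ?_ b (Ne.symm hab)
        intro k hk
        by_cases h : k = a
        · exact Or.inl h
        · exact Or.inr (hKdom k hk a (Ne.symm h)).symm
      obtain ⟨w, hw⟩ := Set.ne_univ_iff_exists_notMem K |>.mp hKne
      exact ⟨w, hw, fun x y h1 h2 hxy hnadj => absurd (hdom x y hxy) hnadj⟩

end AvoidableProof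

/-- Every finite (nonempty) graph has an avoidable vertex. -/
theorem stmt_0 {V : Type*} [Fintype V] [Nonempty V] (G : SimpleGraph V) :
    ∃ v : V, Avoidable G v := by
  obtain ⟨w, -, hw⟩ := key (Fintype.card V) G ∅ rfl (by simp) Set.empty_ne_univ
  exact ⟨w, avoid'_avoidable hw⟩
end

section
/- A vertex v of a finite graph G is avoidable if and only if v is a simplicial vertex in some minimal triangulation of G. -/
open SimpleGraph

/-- A graph is chordal if every cycle of length at least four has a chord. -/
def IsChordal {V : Type*} (G : SimpleGraph V) : Prop :=
  ∀ (v : V) (c : G.Walk v v), c.IsCycle → 4 ≤ c.length →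
    ∃ x ∈ c.support, ∃ y ∈ c.support, G.Adj x y ∧ s(x, y) ∉ c.edges

/-- A vertex is simplicial if its neighborhood is a clique. -/
def Simplicial {V : Type*} (G : SimpleGraph V) (v : V) : Prop :=
  G.IsClique (G.neighborSet v)

/-- `H` is a minimal triangulation of `G`: a chordal supergraph of `G` on the same
vertex set such that no chordal graph lies properly between `G` and `H`. -/
def IsMinimalTriangulation {V : Type*} (G H : SimpleGraph V) : Prop :=
  G ≤ H ∧ IsChordal H ∧ ∀ H' : SimpleGraph V, G ≤ H' → H' ≤ H → H' ≠ H → ¬ IsChordal H'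

namespace AvoidableProofAux

variable {V : Type*} {G : SimpleGraph V}

variable {V : Type*} {G : SimpleGraph V}

lemma eq_of_length_zero {a b : V} (p : G.Walk a b) (h : p.length = 0) : a = b := by
  cases p with
  | nil => rfl
  | cons h' q => simp at h

lemma edges_of_length_one {a b : V} (p : G.Walk a b) (h : p.length = 1) :
    p.edges = [s(a, b)] := by
  cases p with
  | nil => simp at h
  | cons h' q =>
    cases q with
    | nil => simp
    | cons h'' q' => simp [Walk.length_cons] at h

lemma edge_at_head {a b z : V} (p : G.Walk a b) (hn : p.support.Nodup)
    (he : s(a, z) ∈ p.edges) : ∃ (h : G.Adj a z) (q : G.Walk z b), p = Walk.cons h q := by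
  cases p with
  | nil => simp at he
  | cons h' q =>
    rw [Walk.edges_cons, List.mem_cons] at he
    rcases he with he | he
    · rw [Sym2.congr_right] at he
      subst he
      exact ⟨h', q, rfl⟩
    · exfalso
      have : a ∈ q.support := Walk.fst_mem_support_of_mem_edges q he
      rw [Walk.support_cons, List.nodup_cons] at hn
      exact hn.1 this

lemma exists_incident_edge {a b : V} (p : G.Walk a b) (hnil : ¬ p.Nil) :
    ∀ w ∈ p.support, ∃ z, s(w, z) ∈ p.edges := by
  induction p with
  | nil => exact absurd Walk.nil_nil hnil
  | @cons u c b h q ih =>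
    intro w hw
    rw [Walk.support_cons, List.mem_cons] at hw
    rcases hw with rfl | hw
    · exact ⟨c, by simp⟩
    · by_cases hq : q.Nil
      · cases q with
        | nil =>
          simp only [Walk.support_nil, List.mem_singleton] at hw
          subst hw
          exact ⟨u, by simp [Sym2.eq_swap]⟩
        | cons h' q' => simp at hq
      · obtain ⟨z, hz⟩ := ih hq w hw
        exact ⟨z, by simp [hz]⟩


lemma closed_nil_of_nodup {a : V} (p : G.Walk a a) (hn : p.support.Nodup) : p.Nil := by
  cases p with
  | nil => exact Walk.nil_nil
  | cons h q =>
    exfalso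
    rw [Walk.support_cons, List.nodup_cons] at hn
    exact hn.1 q.end_mem_support

lemma cycle_structure {v : V} {c : G.Walk v v} (hc : c.IsCycle) :
    ∃ (u₁ u₂ : V) (h₁ : G.Adj v u₁) (h₂ : G.Adj u₂ v) (r : G.Walk u₁ u₂),
      c = Walk.cons h₁ (r.concat h₂) ∧ v ∉ r.support ∧ r.support.Nodup ∧ u₁ ≠ u₂ ∧
      r.length + 2 = c.length := by
  have hc3 := hc.three_le_length
  have hnil : ¬ c.Nil := hc.not_nil
  rw [Walk.not_nil_iff] at hnil
  obtain ⟨u₁, h₁, p, rfl⟩ := hnil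
  have hpn : p.support.Nodup := by
    have := hc.support_nodup
    rwa [Walk.support_cons, List.tail_cons] at this
  have hpnil : ¬ p.Nil := by
    intro h
    rw [Walk.nil_iff_length_eq] at h
    simp [Walk.length_cons, h] at hc3
  have hrev : ¬ p.reverse.Nil := by
    rwa [Walk.nil_iff_length_eq, Walk.length_reverse, ← Walk.nil_iff_length_eq]
  rw [Walk.not_nil_iff] at hrev
  obtain ⟨u₂, h₂, r', hr'⟩ := hrev
  have hp : p = r'.reverse.concat h₂.symm := by
    have := congrArg Walk.reverse hr'
    rw [Walk.reverse_reverse, Walk.reverse_cons] at this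
    exact this
  have hrevsupp : p.reverse.support.Nodup := by
    rw [Walk.support_reverse]
    exact (List.nodup_reverse).2 hpn
  rw [hr', Walk.support_cons, List.nodup_cons] at hrevsupp
  refine ⟨u₁, u₂, h₁, h₂.symm, r'.reverse, by rw [hp], ?_, ?_, ?_, ?_⟩
  · rw [Walk.support_reverse, List.mem_reverse]
    exact hrevsupp.1
  · rw [Walk.support_reverse]
    exact (List.nodup_reverse).2 hrevsupp.2
  · intro he
    -- then r'.reverse : G.Walk u₁ u₂ with u₁ = u₂ is a closed nodup walk, so nil
    have hnodup : r'.reverse.support.Nodup := by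
      rw [Walk.support_reverse]; exact (List.nodup_reverse).2 hrevsupp.2
    subst he
    have := closed_nil_of_nodup _ hnodup
    rw [Walk.nil_iff_length_eq, Walk.length_reverse] at this
    have hlen : p.length = r'.length + 1 := by
      rw [hp, Walk.length_concat, Walk.length_reverse]
    simp [Walk.length_cons, hlen, this] at hc3
  · rw [Walk.length_cons, hp, Walk.length_concat, Walk.length_reverse]

lemma cycle_chord_at_base {v : V} {c : G.Walk v v} (hc : c.IsCycle) (hl : 4 ≤ c.length) :
    ∃ u₁ u₂, G.Adj v u₁ ∧ G.Adj v u₂ ∧ u₁ ≠ u₂ ∧ u₁ ∈ c.support ∧ u₂ ∈ c.support ∧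
      s(u₁, u₂) ∉ c.edges := by
  obtain ⟨u₁, u₂, h₁, h₂, r, hceq, hvr, hrn, hne, hlen⟩ := cycle_structure hc
  have hu1 : u₁ ∈ r.support := r.start_mem_support
  have hu2 : u₂ ∈ r.support := r.end_mem_support
  have hsupp : ∀ w ∈ r.support, w ∈ c.support := by
    intro w hw
    rw [hceq, Walk.support_cons, Walk.support_concat]
    simp [hw]
  refine ⟨u₁, u₂, h₁, h₂.symm, hne, hsupp _ hu1, hsupp _ hu2, ?_⟩
  intro hmem
  rw [hceq, Walk.edges_cons, Walk.edges_concat, List.mem_cons, List.concat_eq_append, List.mem_append, List.mem_singleton] at hmem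
  rcases hmem with hmem | hmem | hmem
  · rw [Sym2.eq_iff] at hmem
    rcases hmem with ⟨h, h'⟩ | ⟨h, h'⟩
    · exact hvr (h ▸ hu1)
    · exact hvr (h' ▸ hu2)
  · -- s(u₁,u₂) ∈ r.edges : forces r to be a single edge, cycle length 3
    obtain ⟨hadj, q, hq⟩ := edge_at_head r hrn hmem
    have hqn : q.support.Nodup := by
      rw [hq, Walk.support_cons, List.nodup_cons] at hrn
      exact hrn.2
    have := closed_nil_of_nodup q hqn
    rw [Walk.nil_iff_length_eq] at this
    have : r.length = 1 := by rw [hq, Walk.length_cons, this]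
    omega
  · rw [Sym2.eq_iff] at hmem
    rcases hmem with ⟨h, h'⟩ | ⟨h, h'⟩
    · exact hne h
    · exact hvr (h ▸ hu1)


lemma mem_support_closed_iff {v x : V} (c : G.Walk v v) (hnil : ¬ c.Nil) :
    x ∈ c.support ↔ x ∈ c.support.tail := by
  rw [Walk.not_nil_iff] at hnil
  obtain ⟨u, h, q, rfl⟩ := hnil
  rw [Walk.support_cons, List.tail_cons, List.mem_cons]
  constructor
  · rintro (rfl | h')
    · exact q.end_mem_support
    · exact h'
  · exact Or.inr

lemma mem_support_rotate_iff [DecidableEq V] {v w x : V} {c : G.Walk v v} (hc : c.IsCycle) (h : w ∈ c.support) :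
    x ∈ (c.rotate w h).support ↔ x ∈ c.support := by
  rw [mem_support_closed_iff _ (hc.rotate h).not_nil, mem_support_closed_iff _ hc.not_nil]
  exact (Walk.support_rotate c w h).mem_iff

lemma isCycle_apex {v x y : V} {Q : G.Walk x y} (hQ : Q.IsPath)
    (hvx : G.Adj v x) (hyv : G.Adj y v) (hv : v ∉ Q.support) (hxy : x ≠ y) :
    (Walk.cons hvx (Q.concat hyv)).IsCycle := by
  rw [Walk.isCycle_def]
  refine ⟨?_, by simp, ?_⟩
  · rw [Walk.isTrail_def, Walk.edges_cons, Walk.edges_concat, List.nodup_cons]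
    constructor
    · rw [List.concat_eq_append, List.mem_append, List.mem_singleton]
      rintro (hmem | hmem)
      · exact hv (Walk.fst_mem_support_of_mem_edges Q hmem)
      · rw [Sym2.eq_iff] at hmem
        rcases hmem with ⟨h1, h2⟩ | ⟨h1, h2⟩
        · exact hvx.ne h2.symm
        · exact hxy h2
    · rw [List.concat_eq_append]
      refine List.Nodup.append hQ.isTrail.edges_nodup (List.nodup_singleton _) ?_
      intro e he he'
      rw [List.mem_singleton] at he'
      subst he'
      exact hv (Walk.snd_mem_support_of_mem_edges Q he)
  · rw [Walk.support_cons, List.tail_cons, Walk.support_concat]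
    refine List.Nodup.append hQ.support_nodup (List.nodup_singleton _) ?_
    intro a ha ha'
    rw [List.mem_singleton] at ha'
    subst ha'
    exact hv ha

lemma exists_induced_path [DecidableEq V] {x y : V} (h : G.Reachable x y) :
    ∃ Q : G.Walk x y, Q.IsPath ∧
      ∀ a ∈ Q.support, ∀ b ∈ Q.support, G.Adj a b → s(a, b) ∈ Q.edges := by
  classical
  have hex : ∃ n, ∃ w : G.Walk x y, w.length = n := ⟨h.some.length, h.some, rfl⟩
  set n₀ := Nat.find hex with hn₀
  obtain ⟨w, hw⟩ := Nat.find_spec hex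
  have hmin : ∀ w' : G.Walk x y, n₀ ≤ w'.length := fun w' => Nat.find_min' hex ⟨w', rfl⟩
  refine ⟨w.bypass, w.bypass_isPath, ?_⟩
  have hQlen : w.bypass.length = n₀ :=
    le_antisymm (le_trans w.length_bypass_le (le_of_eq hw)) (hmin _)
  set Q := w.bypass with hQdef
  intro a ha b hb hab
  by_contra hne
  have hlenQ : Q.length = n₀ := hQlen
  -- split Q at b
  have hspec := Q.take_spec hb
  have hlensum : (Q.takeUntil b hb).length + (Q.dropUntil b hb).length = n₀ := by
    rw [← hlenQ, ← Walk.length_append, hspec]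
  by_cases hat : a ∈ (Q.takeUntil b hb).support
  · set t := Q.takeUntil b hb with ht
    set d := Q.dropUntil b hb with hd
    have hsum2 : (t.takeUntil a hat).length + (t.dropUntil a hat).length = t.length := by
      rw [← Walk.length_append, t.take_spec hat]
    have h2 : 2 ≤ (t.dropUntil a hat).length := by
      rcases Nat.lt_or_ge (t.dropUntil a hat).length 2 with hlt | hge
      · have hl01 : (t.dropUntil a hat).length = 0 ∨ (t.dropUntil a hat).length = 1 := by omega
        rcases hl01 with hl | hl
        · exact absurd (eq_of_length_zero _ hl) hab.ne
        · exfalso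
          apply hne
          have : (t.dropUntil a hat).edges = [s(a, b)] := edges_of_length_one _ hl
          have hsub : (t.dropUntil a hat).edges ⊆ Q.edges := by
            intro e he
            exact Q.edges_takeUntil_subset hb (t.edges_dropUntil_subset hat he)
          exact hsub (this ▸ List.mem_singleton_self _)
      · exact hge
    have : ((t.takeUntil a hat).append (Walk.cons hab d)).length < n₀ := by
      rw [Walk.length_append, Walk.length_cons]
      omega
    exact Nat.lt_irrefl _ (Nat.lt_of_le_of_lt (hmin _) this)
  · have had : a ∈ (Q.dropUntil b hb).support := by
      have := ha
      rw [← hspec, Walk.mem_support_append_iff] at this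
      rcases this with h' | h'
      · exact absurd h' hat
      · exact h'
    set t := Q.takeUntil b hb with ht
    set d := Q.dropUntil b hb with hd
    have hsum2 : (d.takeUntil a had).length + (d.dropUntil a had).length = d.length := by
      rw [← Walk.length_append, d.take_spec had]
    have h2 : 2 ≤ (d.takeUntil a had).length := by
      rcases Nat.lt_or_ge (d.takeUntil a had).length 2 with hlt | hge
      · have hl01 : (d.takeUntil a had).length = 0 ∨ (d.takeUntil a had).length = 1 := by omega
        rcases hl01 with hl | hl
        · exact absurd (eq_of_length_zero _ hl).symm hab.ne
        · exfalso
          apply hne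
          have : (d.takeUntil a had).edges = [s(b, a)] := edges_of_length_one _ hl
          have hsub : (d.takeUntil a had).edges ⊆ Q.edges := by
            intro e he
            exact Q.edges_dropUntil_subset hb (d.edges_takeUntil_subset had he)
          rw [Sym2.eq_swap]
          exact hsub (this ▸ List.mem_singleton_self _)
      · exact hge
    have : (t.append (Walk.cons hab.symm (d.dropUntil a had))).length < n₀ := by
      rw [Walk.length_append, Walk.length_cons]
      omega
    exact Nat.lt_irrefl _ (Nat.lt_of_le_of_lt (hmin _) this)


variable {V : Type*}

def restrict (G : SimpleGraph V) (W : Set V) : SimpleGraph V where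
  Adj a b := G.Adj a b ∧ a ∈ W ∧ b ∈ W
  symm := ⟨fun a b ⟨h, ha, hb⟩ => ⟨h.symm, hb, ha⟩⟩
  loopless := ⟨fun a ⟨h, _, _⟩ => G.loopless.irrefl a h⟩

lemma restrict_le (G : SimpleGraph V) (W : Set V) : restrict G W ≤ G := fun _ _ h => h.1

lemma restrict_adj {G : SimpleGraph V} {W : Set V} {a b : V} :
    (restrict G W).Adj a b ↔ G.Adj a b ∧ a ∈ W ∧ b ∈ W := Iff.rfl

def decross (H : SimpleGraph V) (X Y : Set V) : SimpleGraph V where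
  Adj a b := H.Adj a b ∧ ¬ ((a ∈ X ∧ b ∈ Y) ∨ (a ∈ Y ∧ b ∈ X))
  symm := by
    constructor
    rintro a b ⟨h, hc⟩
    refine ⟨h.symm, fun h' => hc ?_⟩
    rcases h' with ⟨h1, h2⟩ | ⟨h1, h2⟩
    · exact Or.inr ⟨h2, h1⟩
    · exact Or.inl ⟨h2, h1⟩
  loopless := ⟨fun a ⟨h, _⟩ => H.loopless.irrefl a h⟩

lemma decross_le (H : SimpleGraph V) (X Y : Set V) : decross H X Y ≤ H := fun _ _ h => h.1

lemma decross_adj {H : SimpleGraph V} {X Y : Set V} {a b : V} :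
    (decross H X Y).Adj a b ↔ H.Adj a b ∧ ¬ ((a ∈ X ∧ b ∈ Y) ∨ (a ∈ Y ∧ b ∈ X)) := Iff.rfl

lemma walk_meets {K : SimpleGraph V} {X M : Set V}
    (hclosed : ∀ a b, K.Adj a b → a ∈ X → b ∉ M → b ∈ X) :
    ∀ {a b : V} (w : K.Walk a b), a ∈ X → b ∉ X → ∃ m ∈ w.support, m ∈ M := by
  intro a b w
  induction w with
  | nil => intro ha hb; exact absurd ha hb
  | @cons u c d h q ih =>
    intro ha hb
    by_cases hm : c ∈ M
    · exact ⟨c, by simp, hm⟩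
    · by_cases hx : c ∈ X
      · obtain ⟨m, hm1, hm2⟩ := ih hx hb
        exact ⟨m, by simp [hm1], hm2⟩
      · exact absurd (hclosed u c h ha hm) hx


lemma avoidable_mpr {V : Type*} (G : SimpleGraph V) (v : V) (H : SimpleGraph V)
    (hGH : G ≤ H) (hHch : IsChordal H)
    (hmin : ∀ H' : SimpleGraph V, G ≤ H' → H' ≤ H → H' ≠ H → ¬ IsChordal H')
    (hs : Simplicial H v) : Avoidable G v := by
  classical
  intro x y hvx hvy hxy hnadj
  set M : Set V := {u | (u = v ∨ G.Adj v u) ∧ u ≠ x ∧ u ≠ y} with hM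
  set GW : SimpleGraph V := restrict G Mᶜ with hGWdef
  set X : Set V := {u | GW.Reachable x u} with hXdef
  have hxM : x ∉ M := fun h => h.2.1 rfl
  have hyM : y ∉ M := fun h => h.2.2 rfl
  have hvM : v ∈ M := ⟨Or.inl rfl, hvx.ne, hvy.ne⟩
  have hxX : x ∈ X := Reachable.refl x
  have hXM : ∀ u ∈ X, u ∉ M := by
    intro u hu
    obtain ⟨w⟩ := hu
    by_cases hnil : w.Nil
    · rw [← hnil.eq]; exact hxM
    · have : ¬ w.reverse.Nil := by
        rwa [Walk.nil_iff_length_eq, Walk.length_reverse, ← Walk.nil_iff_length_eq]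
      rw [Walk.not_nil_iff] at this
      obtain ⟨z, hz, q, hq⟩ := this
      exact fun hm => (hz.2.1 : u ∈ Mᶜ) hm
  have hMadj : ∀ m₁ m₂, m₁ ∈ M → m₂ ∈ M → m₁ ≠ m₂ → H.Adj m₁ m₂ := by
    intro m₁ m₂ h1 h2 hne
    rcases h1.1 with rfl | h1'
    · rcases h2.1 with h2'' | h2'
      · exact absurd h2''.symm hne
      · exact hGH h2'
    · rcases h2.1 with rfl | h2'
      · exact (hGH h1').symm
      · exact hs (hGH h1') (hGH h2') hne
  -- Step 1 : x and y are connected outside M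
  have key : GW.Reachable x y := by
    by_contra hy
    set Y : Set V := {u | u ∉ M ∧ u ∉ X} with hYdef
    set Hs : SimpleGraph V := decross H X Y with hHsdef
    have hclosed : ∀ a b, Hs.Adj a b → a ∈ X → b ∉ M → b ∈ X := by
      intro a b hab haX hbM
      by_cases hbX : b ∈ X
      · exact hbX
      · exact absurd (Or.inl ⟨haX, ⟨hbM, hbX⟩⟩) hab.2
    have hGHs : G ≤ Hs := by
      intro a b hab
      refine ⟨hGH hab, ?_⟩
      rintro (⟨h1, h2⟩ | ⟨h1, h2⟩)
      · exact h2.2 (h1.trans (Adj.reachable ⟨hab, hXM a h1, h2.1⟩))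
      · exact h1.2 (h2.trans (Adj.reachable ⟨hab.symm, hXM b h2, h1.1⟩))
    have hHsH : Hs ≤ H := decross_le H X Y
    have hyY : y ∈ Y := ⟨hyM, hy⟩
    have hHsne : Hs ≠ H := by
      intro h
      have hadjxy : H.Adj x y := hs (hGH hvx) (hGH hvy) hxy
      have : Hs.Adj x y := h ▸ hadjxy
      exact this.2 (Or.inl ⟨hxX, hyY⟩)
    have hHschordal : IsChordal Hs := by
      intro u c hc hl
      by_cases hsplit : (∃ p ∈ c.support, p ∈ X) ∧ ∃ q ∈ c.support, q ∈ Y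
      · obtain ⟨⟨p, hp, hpX⟩, ⟨q, hq, hqY⟩⟩ := hsplit
        have hpq : p ≠ q := fun h => hqY.2 (h ▸ hpX)
        set c' := c.rotate p hp with hc'def
        have hc' : c'.IsCycle := hc.rotate hp
        have hq' : q ∈ c'.support := (mem_support_rotate_iff hc hp).mpr hq
        set a1 := c'.takeUntil q hq' with ha1
        set a2 := c'.dropUntil q hq' with ha2
        have hspec : a1.append a2 = c' := c'.take_spec hq'
        have htail : c'.support.tail = a1.support.tail ++ a2.support.tail := by
          conv_lhs => rw [← hspec]
          rw [Walk.support_append, a1.support_eq_cons]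
          simp
        have hnodup : (a1.support.tail ++ a2.support.tail).Nodup := by
          rw [← htail]; exact hc'.support_nodup
        have hdisj := List.disjoint_of_nodup_append hnodup
        obtain ⟨m₁, hm₁s, hm₁M⟩ := walk_meets hclosed a1 hpX (fun h => hqY.2 h)
        obtain ⟨m₂, hm₂s', hm₂M⟩ := walk_meets hclosed a2.reverse hpX (fun h => hqY.2 h)
        have hm₂s : m₂ ∈ a2.support := by
          rwa [Walk.support_reverse, List.mem_reverse] at hm₂s'
        have hm₁t : m₁ ∈ a1.support.tail := by
          rcases List.mem_cons.mp (a1.support_eq_cons ▸ hm₁s : m₁ ∈ p :: a1.support.tail) with h | h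
          · exact absurd (h ▸ hm₁M) (hXM p hpX)
          · exact h
        have hm₂t : m₂ ∈ a2.support.tail := by
          rcases List.mem_cons.mp (a2.support_eq_cons ▸ hm₂s : m₂ ∈ q :: a2.support.tail) with h | h
          · exact absurd (h ▸ hm₂M) hqY.1
          · exact h
        have hmne : m₁ ≠ m₂ := fun h => hdisj hm₁t (h ▸ hm₂t)
        have hchordedge : s(m₁, m₂) ∉ c'.edges := by
          conv => rw [← hspec]
          rw [Walk.edges_append, List.mem_append]
          rintro (hmem | hmem)
          · have h2 : m₂ ∈ a1.support := Walk.snd_mem_support_of_mem_edges a1 hmem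
            rcases List.mem_cons.mp (a1.support_eq_cons ▸ h2 : m₂ ∈ p :: a1.support.tail) with h | h
            · exact absurd (h ▸ hm₂M) (hXM p hpX)
            · exact hdisj h hm₂t
          · have h1 : m₁ ∈ a2.support := Walk.fst_mem_support_of_mem_edges a2 hmem
            rcases List.mem_cons.mp (a2.support_eq_cons ▸ h1 : m₁ ∈ q :: a2.support.tail) with h | h
            · exact absurd (h ▸ hm₁M) hqY.1
            · exact hdisj hm₁t h
        have hHsadj : Hs.Adj m₁ m₂ := by
          refine ⟨hMadj m₁ m₂ hm₁M hm₂M hmne, ?_⟩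
          rintro (⟨h1, h2⟩ | ⟨h1, h2⟩)
          · exact hXM m₁ h1 hm₁M
          · exact h1.1 hm₁M
        have hms1 : m₁ ∈ c.support := by
          rw [← mem_support_rotate_iff hc hp]
          exact c'.support_takeUntil_subset hq' hm₁s
        have hms2 : m₂ ∈ c.support := by
          rw [← mem_support_rotate_iff hc hp]
          exact c'.support_dropUntil_subset hq' hm₂s
        refine ⟨m₁, hms1, m₂, hms2, hHsadj, ?_⟩
        intro hmem
        exact hchordedge ((Walk.rotate_edges c p hp).mem_iff.mpr hmem)
      · have hedges : ∀ e ∈ c.edges, e ∈ H.edgeSet :=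
          fun e he => edgeSet_mono hHsH (c.edges_subset_edgeSet he)
        have hcH := hc.transfer hedges
        obtain ⟨pp, hpp, qq, hqq, hadj, hnmem⟩ :=
          hHch u (c.transfer H hedges) hcH (by rw [Walk.length_transfer]; exact hl)
        rw [Walk.support_transfer] at hpp hqq
        rw [Walk.edges_transfer] at hnmem
        rcases not_and_or.mp hsplit with h | h
        · push_neg at h
          refine ⟨pp, hpp, qq, hqq, ⟨hadj, ?_⟩, hnmem⟩
          rintro (⟨h1, h2⟩ | ⟨h1, h2⟩)
          · exact h pp hpp h1
          · exact h qq hqq h2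
        · push_neg at h
          refine ⟨pp, hpp, qq, hqq, ⟨hadj, ?_⟩, hnmem⟩
          rintro (⟨h1, h2⟩ | ⟨h1, h2⟩)
          · exact h qq hqq h2
          · exact h pp hpp h1
    exact hmin Hs hGHs hHsH hHsne hHschordal
  -- Step 2 : build the induced cycle
  obtain ⟨Q, hQpath, hQind⟩ := exists_induced_path key
  have hQnotnil : ¬ Q.Nil := Walk.not_nil_of_ne hxy
  have hQsupM : ∀ w ∈ Q.support, w ∉ M := by
    intro w hw
    obtain ⟨z, hz⟩ := exists_incident_edge Q hQnotnil w hw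
    have := Q.edges_subset_edgeSet hz
    exact (this : GW.Adj w z).2.1
  have hvQ : v ∉ Q.support := fun h => hQsupM v h hvM
  have hQlen : 2 ≤ Q.length := by
    rcases Nat.lt_or_ge Q.length 2 with hlt | hge
    · exfalso
      have hl01 : Q.length = 0 ∨ Q.length = 1 := by omega
      rcases hl01 with hl | hl
      · exact hxy (eq_of_length_zero Q hl)
      · have : Q.edges = [s(x, y)] := edges_of_length_one Q hl
        have : s(x, y) ∈ Q.edges := this ▸ List.mem_singleton_self _
        exact hnadj (Q.edges_subset_edgeSet this).1
    · exact hge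
  have hedgesG : ∀ e ∈ Q.edges, e ∈ G.edgeSet :=
    fun e he => edgeSet_mono (restrict_le G Mᶜ) (Q.edges_subset_edgeSet he)
  set Q' := Q.transfer G hedgesG with hQ'def
  have hQ'path : Q'.IsPath := hQpath.transfer hedgesG
  have hvQ' : v ∉ Q'.support := by rwa [Walk.support_transfer]
  set c : G.Walk v v := Walk.cons hvx (Q'.concat hvy.symm) with hcdef
  have hccyc : c.IsCycle := isCycle_apex hQ'path hvx hvy.symm hvQ' hxy
  have hcsupp : ∀ a, a ∈ c.support ↔ a = v ∨ a ∈ Q.support := by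
    intro a
    rw [hcdef, Walk.support_cons, Walk.support_concat, Walk.support_transfer]
    simp only [List.mem_cons, List.concat_eq_append, List.mem_append, List.mem_singleton]
    tauto
  have hcedges : ∀ e, e ∈ c.edges ↔ e = s(v, x) ∨ e ∈ Q.edges ∨ e = s(y, v) := by
    intro e
    rw [hcdef, Walk.edges_cons, Walk.edges_concat, Walk.edges_transfer]
    simp only [List.mem_cons, List.concat_eq_append, List.mem_append, List.mem_singleton]
    tauto
  refine ⟨c, ⟨hccyc, ?_⟩, ?_, ?_⟩
  · intro a ha b hb hab
    rcases (hcsupp a).mp ha with ha' | haQ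
    · rcases (hcsupp b).mp hb with hb' | hbQ
      · rw [ha', hb'] at hab
        exact absurd hab (G.loopless.irrefl _)
      · rw [ha'] at hab ⊢
        have hbM : b ∉ M := hQsupM b hbQ
        have hbxy : b = x ∨ b = y := by
          by_contra hcon
          push_neg at hcon
          exact hbM ⟨Or.inr hab, hcon.1, hcon.2⟩
        rcases hbxy with hb2 | hb2 <;> rw [hb2]
        · exact (hcedges _).mpr (Or.inl rfl)
        · exact (hcedges _).mpr (Or.inr (Or.inr (Sym2.eq_swap)))
    · rcases (hcsupp b).mp hb with hb' | hbQ
      · rw [hb'] at hab ⊢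
        have haM : a ∉ M := hQsupM a haQ
        have haxy : a = x ∨ a = y := by
          by_contra hcon
          push_neg at hcon
          exact haM ⟨Or.inr hab.symm, hcon.1, hcon.2⟩
        rcases haxy with ha2 | ha2 <;> rw [ha2]
        · exact (hcedges _).mpr (Or.inl Sym2.eq_swap)
        · exact (hcedges _).mpr (Or.inr (Or.inr rfl))
      · have hgw : GW.Adj a b := ⟨hab, hQsupM a haQ, hQsupM b hbQ⟩
        exact (hcedges _).mpr (Or.inr (Or.inl (hQind a haQ b hbQ hgw)))
  · exact (hcedges _).mpr (Or.inl Sym2.eq_swap)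
  · exact (hcedges _).mpr (Or.inr (Or.inr Sym2.eq_swap))

def cliqueFill (G : SimpleGraph V) (v : V) : SimpleGraph V where
  Adj a b := G.Adj a b ∨ (G.Adj v a ∧ G.Adj v b ∧ a ≠ b)
  symm := by
    constructor
    rintro a b (h | ⟨h1, h2, h3⟩)
    · exact Or.inl h.symm
    · exact Or.inr ⟨h2, h1, h3.symm⟩
  loopless := by
    constructor
    rintro a (h | ⟨h1, h2, h3⟩)
    · exact G.loopless.irrefl a h
    · exact h3 rfl

def unstar (K : SimpleGraph V) (v : V) : SimpleGraph V where
  Adj a b := K.Adj a b ∧ a ≠ v ∧ b ≠ v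
  symm := ⟨fun a b ⟨h, h1, h2⟩ => ⟨h.symm, h2, h1⟩⟩
  loopless := ⟨fun a ⟨h, _, _⟩ => K.loopless.irrefl a h⟩

def starAt (G : SimpleGraph V) (v : V) : SimpleGraph V where
  Adj a b := (a = v ∧ G.Adj v b) ∨ (b = v ∧ G.Adj v a)
  symm := by
    constructor
    rintro a b (⟨h1, h2⟩ | ⟨h1, h2⟩)
    · exact Or.inr ⟨h1, h2⟩
    · exact Or.inl ⟨h1, h2⟩
  loopless := by
    constructor
    rintro a (⟨rfl, h⟩ | ⟨rfl, h⟩) <;> exact G.loopless.irrefl _ h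

set_option maxHeartbeats 1600000 in
lemma avoidable_mp {V : Type*} [Fintype V] (G : SimpleGraph V) (v : V)
    (hav : Avoidable G v) :
    ∃ H : SimpleGraph V, (G ≤ H ∧ IsChordal H ∧
      ∀ H' : SimpleGraph V, G ≤ H' → H' ≤ H → H' ≠ H → ¬ IsChordal H') ∧ Simplicial H v := by
  classical
  set G' := cliqueFill G v with hG'def
  set A := unstar G' v with hAdef
  set B := unstar (⊤ : SimpleGraph V) v with hBdef
  have hAB : A ≤ B := fun a b h => ⟨h.1.ne, h.2.1, h.2.2⟩
  have hBchordal : IsChordal B := by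
    intro u c hc hl
    obtain ⟨u₁, u₂, h₁, h₂, hne, hm1, hm2, hnmem⟩ := cycle_chord_at_base hc hl
    exact ⟨u₁, hm1, u₂, hm2, ⟨hne, h₁.2.2, h₂.2.2⟩, hnmem⟩
  have hex : ∃ n, ∃ K : SimpleGraph V, (A ≤ K ∧ K ≤ B ∧ IsChordal K) ∧ K.edgeSet.ncard = n :=
    ⟨_, B, ⟨hAB, le_refl B, hBchordal⟩, rfl⟩
  obtain ⟨H₀, hH₀S, hH₀card⟩ := Nat.find_spec hex
  have hmincard : ∀ K : SimpleGraph V, (A ≤ K ∧ K ≤ B ∧ IsChordal K) →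
      Nat.find hex ≤ K.edgeSet.ncard := fun K hK => Nat.find_min' hex ⟨K, hK, rfl⟩
  have hH₀min : ∀ K : SimpleGraph V, (A ≤ K ∧ K ≤ B ∧ IsChordal K) → K ≤ H₀ → K = H₀ := by
    intro K hK hle
    have hsub := edgeSet_mono hle
    have hcard : H₀.edgeSet.ncard ≤ K.edgeSet.ncard := by
      rw [hH₀card]; exact hmincard K hK
    exact edgeSet_inj.mp (Set.eq_of_subset_of_ncard_le hsub hcard (Set.toFinite _))
  have hAH₀ : A ≤ H₀ := hH₀S.1
  have hH₀B : H₀ ≤ B := hH₀S.2.1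
  set H := H₀ ⊔ starAt G v with hHdef
  have hH₀nov : ∀ a b, H₀.Adj a b → a ≠ v := fun a b h => (hH₀B h).2.1
  have hHv : ∀ b, H.Adj v b ↔ G.Adj v b := by
    intro b
    rw [hHdef, sup_adj]
    constructor
    · rintro (h | h)
      · exact absurd rfl (hH₀nov _ _ h)
      · rcases h with ⟨_, h⟩ | ⟨hb1, h⟩
        · exact h
        · exact absurd h (G.loopless.irrefl _)
    · intro h
      exact Or.inr (Or.inl ⟨rfl, h⟩)
  have hGH : G ≤ H := by
    intro a b hab
    rw [hHdef, sup_adj]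
    by_cases ha : a = v
    · subst ha; exact Or.inr (Or.inl ⟨rfl, hab⟩)
    · by_cases hb : b = v
      · subst hb; exact Or.inr (Or.inr ⟨rfl, hab.symm⟩)
      · exact Or.inl (hAH₀ ⟨Or.inl hab, ha, hb⟩)
  have hsimp : Simplicial H v := by
    intro a ha b hb hne
    have ha' : G.Adj v a := (hHv a).mp ha
    have hb' : G.Adj v b := (hHv b).mp hb
    rw [hHdef, sup_adj]
    exact Or.inl (hAH₀ ⟨Or.inr ⟨ha', hb', hne⟩, ha'.ne', hb'.ne'⟩)
  have hHchordal : IsChordal H := by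
    intro u c hc hl
    by_cases hvc : v ∈ c.support
    · have hc' : (c.rotate v hvc).IsCycle := hc.rotate hvc
      have hlen' : (c.rotate v hvc).length = c.length := by
        have h1 := (Walk.rotate_edges c v hvc).perm.length_eq
        rwa [Walk.length_edges, Walk.length_edges] at h1
      obtain ⟨u₁, u₂, h₁, h₂, hne, hm1, hm2, hnmem⟩ :=
        cycle_chord_at_base hc' (by rw [hlen']; exact hl)
      have hg1 : G.Adj v u₁ := (hHv u₁).mp h₁
      have hg2 : G.Adj v u₂ := (hHv u₂).mp h₂
      have hadj : H.Adj u₁ u₂ := by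
        rw [hHdef, sup_adj]
        exact Or.inl (hAH₀ ⟨Or.inr ⟨hg1, hg2, hne⟩, hg1.ne', hg2.ne'⟩)
      refine ⟨u₁, (mem_support_rotate_iff hc hvc).mp hm1,
        u₂, (mem_support_rotate_iff hc hvc).mp hm2, hadj, ?_⟩
      intro hmem
      exact hnmem ((Walk.rotate_edges c v hvc).mem_iff.mpr hmem)
    · have hedges : ∀ e ∈ c.edges, e ∈ H₀.edgeSet := by
        intro e
        induction e using Sym2.ind with
        | _ a b =>
          intro he
          have ha : a ∈ c.support := Walk.fst_mem_support_of_mem_edges c he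
          have hb : b ∈ c.support := Walk.snd_mem_support_of_mem_edges c he
          have hH : H.Adj a b := c.edges_subset_edgeSet he
          rw [mem_edgeSet]
          rw [hHdef, sup_adj] at hH
          rcases hH with h | h
          · exact h
          · rcases h with ⟨h1, _⟩ | ⟨h1, _⟩
            · exact absurd (h1 ▸ ha) hvc
            · exact absurd (h1 ▸ hb) hvc
      have hcH := hc.transfer hedges
      obtain ⟨p, hp, q, hq, hadj, hnmem⟩ :=
        hH₀S.2.2 u (c.transfer H₀ hedges) hcH (by rw [Walk.length_transfer]; exact hl)
      rw [Walk.support_transfer] at hp hq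
      rw [Walk.edges_transfer] at hnmem
      refine ⟨p, hp, q, hq, ?_, hnmem⟩
      rw [hHdef, sup_adj]
      exact Or.inl hadj
  have hminimal : ∀ H' : SimpleGraph V, G ≤ H' → H' ≤ H → H' ≠ H → ¬ IsChordal H' := by
    intro H' hGH' hH'H hne hch
    by_cases hG' : G' ≤ H'
    · set H'' := unstar H' v with hH''def
      have hAH'' : A ≤ H'' := fun a b h => ⟨hG' h.1, h.2.1, h.2.2⟩
      have hH''B : H'' ≤ B := fun a b h => ⟨h.1.ne, h.2.1, h.2.2⟩
      have hH''H₀ : H'' ≤ H₀ := by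
        intro a b h
        have hH : H.Adj a b := hH'H h.1
        rw [hHdef, sup_adj] at hH
        rcases hH with h' | h'
        · exact h'
        · rcases h' with ⟨h3, _⟩ | ⟨h3, _⟩
          · exact absurd h3 h.2.1
          · exact absurd h3 h.2.2
      have hH''chordal : IsChordal H'' := by
        intro u c hc hl
        have hedges : ∀ e ∈ c.edges, e ∈ H'.edgeSet := fun e he =>
          edgeSet_mono (fun a b (h : H''.Adj a b) => h.1) (c.edges_subset_edgeSet he)
        have hsupv : ∀ w ∈ c.support, w ≠ v := by
          intro w hw
          obtain ⟨z, hz⟩ := exists_incident_edge c hc.not_nil w hw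
          exact (c.edges_subset_edgeSet hz).2.1
        have hcH := hc.transfer hedges
        obtain ⟨p, hp, q, hq, hadj, hnmem⟩ :=
          hch u (c.transfer H' hedges) hcH (by rw [Walk.length_transfer]; exact hl)
        rw [Walk.support_transfer] at hp hq
        rw [Walk.edges_transfer] at hnmem
        exact ⟨p, hp, q, hq, ⟨hadj, hsupv p hp, hsupv q hq⟩, hnmem⟩
      have hH''eq : H'' = H₀ := hH₀min H'' ⟨hAH'', hH''B, hH''chordal⟩ hH''H₀
      apply hne
      ext a b
      constructor
      · exact fun h => hH'H h
      · intro h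
        rw [hHdef, sup_adj] at h
        rcases h with h' | h'
        · have : H''.Adj a b := by rw [hH''eq]; exact h'
          exact this.1
        · rcases h' with ⟨h1, h2⟩ | ⟨h1, h2⟩
          · rw [h1]; exact hGH' h2
          · rw [h1]; exact (hGH' h2).symm
    · have hxy' : ∃ x y, G.Adj v x ∧ G.Adj v y ∧ x ≠ y ∧ ¬ G.Adj x y ∧ ¬ H'.Adj x y := by
        by_contra hcon
        push_neg at hcon
        apply hG'
        intro a b hab
        rcases hab with h | ⟨h1, h2, h3⟩
        · exact hGH' h
        · by_cases hGab : G.Adj a b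
          · exact hGH' hGab
          · exact hcon a b h1 h2 h3 hGab
      obtain ⟨x, y, hvx, hvy, hxy, hnadj, hNH⟩ := hxy'
      obtain ⟨C, ⟨hCcyc, hCind⟩, hCx, hCy⟩ := hav x y hvx hvy hxy hnadj
      obtain ⟨u₁, u₂, h₁, h₂, r, hCeq, hvr, hrn, hu12, hrlen⟩ := cycle_structure hCcyc
      have hCedges : ∀ e, e ∈ C.edges ↔ e = s(v, u₁) ∨ e ∈ r.edges ∨ e = s(u₂, v) := by
        intro e
        rw [hCeq, Walk.edges_cons, Walk.edges_concat, List.mem_cons, List.concat_eq_append,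
          List.mem_append, List.mem_singleton]
      have hCsupp : ∀ w, w ∈ C.support ↔ w = v ∨ w ∈ r.support := by
        intro w
        rw [hCeq, Walk.support_cons, Walk.support_concat, List.mem_cons,
          List.mem_append, List.mem_singleton]
        tauto
      have hatv : ∀ z, s(v, z) ∈ C.edges → z = u₁ ∨ z = u₂ := by
        intro z hz
        rcases (hCedges _).mp hz with h | h | h
        · exact Or.inl (Sym2.congr_right.mp h)
        · exact absurd (Walk.fst_mem_support_of_mem_edges r h) hvr
        · rw [Sym2.eq_iff] at h
          rcases h with ⟨h1, h2⟩ | ⟨h1, h2⟩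
          · exfalso; apply hvr; rw [h1]; exact r.end_mem_support
          · exact Or.inr h2
      have hxvC : x = u₁ ∨ x = u₂ := hatv x (by rw [Sym2.eq_swap] at hCx; exact hCx)
      have hyvC : y = u₁ ∨ y = u₂ := hatv y hCy
      obtain ⟨P, hPsupp, hPv, hPedges, hpair⟩ :
          ∃ P : G.Walk x y, (∀ w ∈ P.support, w ∈ r.support) ∧ v ∉ P.support ∧
            (∀ e ∈ P.edges, e ∈ C.edges) ∧
            ((x = u₁ ∧ y = u₂) ∨ (x = u₂ ∧ y = u₁)) := by
        rcases hxvC with hx | hx <;> rcases hyvC with hy | hy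
        · exact absurd (hx.trans hy.symm) hxy
        · refine ⟨r.copy hx.symm hy.symm, ?_, ?_, ?_, Or.inl ⟨hx, hy⟩⟩
          · intro w hw; rwa [Walk.support_copy] at hw
          · rw [Walk.support_copy]; exact hvr
          · intro e he; rw [Walk.edges_copy] at he
            exact (hCedges e).mpr (Or.inr (Or.inl he))
        · refine ⟨r.reverse.copy hx.symm hy.symm, ?_, ?_, ?_, Or.inr ⟨hx, hy⟩⟩
          · intro w hw; rw [Walk.support_copy, Walk.support_reverse, List.mem_reverse] at hw
            exact hw
          · rw [Walk.support_copy, Walk.support_reverse, List.mem_reverse]; exact hvr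
          · intro e he; rw [Walk.edges_copy, Walk.edges_reverse, List.mem_reverse] at he
            exact (hCedges e).mpr (Or.inr (Or.inl he))
        · exact absurd (hx.trans hy.symm) hxy
      set W : Set V := {w | w ∈ C.support ∧ w ≠ v} with hWdef
      set K := restrict H' W with hKdef
      have hPK : ∀ e ∈ P.edges, e ∈ K.edgeSet := by
        intro e
        induction e using Sym2.ind with
        | _ a b =>
          intro he
          have ha : a ∈ P.support := Walk.fst_mem_support_of_mem_edges P he
          have hb : b ∈ P.support := Walk.snd_mem_support_of_mem_edges P he
          refine ⟨hGH' (P.edges_subset_edgeSet he), ?_, ?_⟩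
          · exact ⟨(hCsupp a).mpr (Or.inr (hPsupp a ha)), fun h => hPv (h ▸ ha)⟩
          · exact ⟨(hCsupp b).mpr (Or.inr (hPsupp b hb)), fun h => hPv (h ▸ hb)⟩
      have hreach : K.Reachable x y := ⟨P.transfer K hPK⟩
      obtain ⟨Q, hQpath, hQind⟩ := exists_induced_path hreach
      have hQnotnil : ¬ Q.Nil := Walk.not_nil_of_ne hxy
      have hQW : ∀ w ∈ Q.support, w ∈ C.support ∧ w ≠ v := by
        intro w hw
        obtain ⟨z, hz⟩ := exists_incident_edge Q hQnotnil w hw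
        exact (Q.edges_subset_edgeSet hz).2.1
      have hQlen : 2 ≤ Q.length := by
        rcases Nat.lt_or_ge Q.length 2 with hlt | hge
        · exfalso
          have hl01 : Q.length = 0 ∨ Q.length = 1 := by omega
          rcases hl01 with hl | hl
          · exact hxy (eq_of_length_zero Q hl)
          · have h1 : Q.edges = [s(x, y)] := edges_of_length_one Q hl
            have h2 : s(x, y) ∈ Q.edges := h1 ▸ List.mem_singleton_self _
            exact hNH (Q.edges_subset_edgeSet h2).1
        · exact hge
      have hQH' : ∀ e ∈ Q.edges, e ∈ H'.edgeSet := fun e he =>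
        edgeSet_mono (restrict_le H' W) (Q.edges_subset_edgeSet he)
      set Q' := Q.transfer H' hQH' with hQ'def
      have hQ'path : Q'.IsPath := hQpath.transfer hQH'
      have hvQ' : v ∉ Q'.support := by
        rw [hQ'def, Walk.support_transfer]
        exact fun h => (hQW v h).2 rfl
      have hvxH' : H'.Adj v x := hGH' hvx
      have hyvH' : H'.Adj y v := (hGH' hvy).symm
      set D : H'.Walk v v := Walk.cons hvxH' (Q'.concat hyvH') with hDdef
      have hDcyc : D.IsCycle := isCycle_apex hQ'path hvxH' hyvH' hvQ' hxy
      have hDlen : 4 ≤ D.length := by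
        rw [hDdef, Walk.length_cons, Walk.length_concat, hQ'def, Walk.length_transfer]
        omega
      obtain ⟨p, hp, q, hq, hadj, hnmem⟩ := hch v D hDcyc hDlen
      have hDsupp : ∀ a, a ∈ D.support ↔ a = v ∨ a ∈ Q.support := by
        intro a
        rw [hDdef, Walk.support_cons, Walk.support_concat, hQ'def, Walk.support_transfer]
        simp only [List.mem_cons, List.concat_eq_append, List.mem_append, List.mem_singleton]
        tauto
      have hDedges : ∀ e, e ∈ D.edges ↔ e = s(v, x) ∨ e ∈ Q.edges ∨ e = s(y, v) := by
        intro e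
        rw [hDdef, Walk.edges_cons, Walk.edges_concat, hQ'def, Walk.edges_transfer]
        simp only [List.mem_cons, List.concat_eq_append, List.mem_append, List.mem_singleton]
        tauto
      have hvchord : ∀ b ∈ Q.support, H'.Adj v b → b = x ∨ b = y := by
        intro b hb hadjb
        have hgb : G.Adj v b := (hHv b).mp (hH'H hadjb)
        have hbC : b ∈ C.support := (hQW b hb).1
        have hsvb : s(v, b) ∈ C.edges := hCind v C.start_mem_support b hbC hgb
        rcases hatv b hsvb with h | h
        · rcases hpair with ⟨hx1, _⟩ | ⟨_, hy1⟩
          · exact Or.inl (h.trans hx1.symm)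
          · exact Or.inr (h.trans hy1.symm)
        · rcases hpair with ⟨_, hy2⟩ | ⟨hx2, _⟩
          · exact Or.inr (h.trans hy2.symm)
          · exact Or.inl (h.trans hx2.symm)
      rcases (hDsupp p).mp hp with hp' | hpQ
      · rcases (hDsupp q).mp hq with hq' | hqQ
        · rw [hp', hq'] at hadj
          exact absurd hadj (H'.loopless.irrefl v)
        · rw [hp'] at hadj hnmem
          rcases hvchord q hqQ hadj with h | h <;> rw [h] at hnmem
          · exact hnmem ((hDedges _).mpr (Or.inl rfl))
          · exact hnmem ((hDedges _).mpr (Or.inr (Or.inr Sym2.eq_swap)))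
      · rcases (hDsupp q).mp hq with hq' | hqQ
        · rw [hq'] at hadj hnmem
          rcases hvchord p hpQ hadj.symm with h | h <;> rw [h] at hnmem
          · exact hnmem ((hDedges _).mpr (Or.inl Sym2.eq_swap))
          · exact hnmem ((hDedges _).mpr (Or.inr (Or.inr rfl)))
        · have hKpq : K.Adj p q := ⟨hadj, hQW p hpQ, hQW q hqQ⟩
          exact hnmem ((hDedges _).mpr (Or.inr (Or.inl (hQind p hpQ q hqQ hKpq))))
  exact ⟨H, ⟨hGH, hHchordal, hminimal⟩, hsimp⟩

end AvoidableProofAux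

/-- A vertex of a finite graph is avoidable iff it is simplicial in some minimal
triangulation of the graph. -/
theorem stmt_3 {V : Type*} [Fintype V] (G : SimpleGraph V) (v : V) :
    Avoidable G v ↔ ∃ H : SimpleGraph V, IsMinimalTriangulation G H ∧ Simplicial H v := by
  constructor
  · intro hav
    obtain ⟨H, hmt, hs⟩ := AvoidableProofAux.avoidable_mp G v hav
    exact ⟨H, hmt, hs⟩
  · rintro ⟨H, ⟨h1, h2, h3⟩, hs⟩
    exact AvoidableProofAux.avoidable_mpr G v H h1 h2 h3 hs
end

section
/- For every finite graph G and every non-universal vertex v of G, there exists an avoidable vertex a of G that is neither equal to v nor adjacent to v. -/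
open SimpleGraph

section Aux

universe u

variable {V : Type*} {G : SimpleGraph V}

/-- Path-based avoidability: every induced `P3` with midpoint `a` can be closed by a walk
whose vertices (apart from the endpoints) avoid the closed neighborhood of `a`. -/
def AvoidableP (G : SimpleGraph V) (a : V) : Prop :=
  ∀ x y : V, G.Adj a x → G.Adj a y → x ≠ y → ¬ G.Adj x y →
    ∃ p : G.Walk x y, a ∉ p.support ∧ ∀ z ∈ p.support, z = x ∨ z = y ∨ ¬ G.Adj a z

lemma shortcut {y u w : V} (hadj : G.Adj u w) :
    ∀ {x : V} (q : G.Walk x y), u ∈ q.support → w ∈ q.support → s(u, w) ∉ q.edges →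
    ∃ r : G.Walk x y, r.length < q.length ∧ ∀ z ∈ r.support, z ∈ q.support := by
  classical
  intro x q
  induction q with
  | nil =>
    intro hu hw _
    simp only [Walk.support_nil, List.mem_singleton] at hu hw
    exact absurd (hu.trans hw.symm) hadj.ne
  | @cons x b y h q IH =>
    intro hu hw he
    simp only [Walk.support_cons, List.mem_cons] at hu hw
    by_cases hux : u = x
    · subst hux
      have hwq : w ∈ q.support := by
        rcases hw with h1 | h1
        · exact absurd h1.symm hadj.ne
        · exact h1
      have hbw : b ≠ w := by
        rintro rfl
        exact he (by simp [Walk.edges_cons])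
      refine ⟨Walk.cons hadj (q.dropUntil w hwq), ?_, ?_⟩
      · have hlen : (q.takeUntil w hwq).length + (q.dropUntil w hwq).length = q.length := by
          rw [← Walk.length_append, Walk.take_spec]
        have h1 : (q.takeUntil w hwq).length ≠ 0 := fun h0 =>
          hbw (Walk.eq_of_length_eq_zero h0)
        simp only [Walk.length_cons]
        omega
      · intro z hz
        simp only [Walk.support_cons, List.mem_cons] at hz ⊢
        rcases hz with rfl | hz
        · exact Or.inl rfl
        · exact Or.inr (Walk.support_dropUntil_subset q hwq hz)
    · by_cases hwx : w = x
      · subst hwx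
        have huq : u ∈ q.support := hu.resolve_left hux
        have hbu : b ≠ u := by
          rintro rfl
          exact he (by simp [Walk.edges_cons, Sym2.eq_swap])
        refine ⟨Walk.cons hadj.symm (q.dropUntil u huq), ?_, ?_⟩
        · have hlen : (q.takeUntil u huq).length + (q.dropUntil u huq).length = q.length := by
            rw [← Walk.length_append, Walk.take_spec]
          have h1 : (q.takeUntil u huq).length ≠ 0 := fun h0 =>
            hbu (Walk.eq_of_length_eq_zero h0)
          simp only [Walk.length_cons]
          omega
        · intro z hz
          simp only [Walk.support_cons, List.mem_cons] at hz ⊢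
          rcases hz with rfl | hz
          · exact Or.inl rfl
          · exact Or.inr (Walk.support_dropUntil_subset q huq hz)
      · have huq : u ∈ q.support := hu.resolve_left hux
        have hwq : w ∈ q.support := hw.resolve_left hwx
        have he' : s(u, w) ∉ q.edges := fun hh => he (by simp [Walk.edges_cons, hh])
        obtain ⟨r, hr1, hr2⟩ := IH huq hwq he'
        refine ⟨Walk.cons h r, ?_, ?_⟩
        · simp only [Walk.length_cons]; omega
        · intro z hz
          simp only [Walk.support_cons, List.mem_cons] at hz ⊢
          rcases hz with rfl | hz
          · exact Or.inl rfl
          · exact Or.inr (hr2 z hz)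

lemma exists_chordless (s : Set V) {x y : V} :
    ∀ (n : ℕ) (p : G.Walk x y), p.length ≤ n → (∀ z ∈ p.support, z ∈ s) →
    ∃ q : G.Walk x y, q.IsPath ∧ (∀ z ∈ q.support, z ∈ s) ∧
      ∀ u ∈ q.support, ∀ w ∈ q.support, G.Adj u w → s(u, w) ∈ q.edges := by
  classical
  intro n
  induction n using Nat.strong_induction_on with
  | _ n IHn =>
    intro p hl hs
    by_cases hc : ∀ u ∈ p.bypass.support, ∀ w ∈ p.bypass.support, G.Adj u w →
        s(u, w) ∈ p.bypass.edges
    · exact ⟨p.bypass, p.bypass_isPath, fun z hz => hs z (p.support_bypass_subset hz), hc⟩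
    · push_neg at hc
      obtain ⟨u, hu, w, hw, hadj, he⟩ := hc
      obtain ⟨r, hr1, hr2⟩ := shortcut hadj p.bypass hu hw he
      have hrn : r.length ≤ r.length := le_rfl
      have hlt : r.length < n := by
        have := p.length_bypass_le
        omega
      exact IHn r.length hlt r le_rfl
        (fun z hz => hs z (p.support_bypass_subset (hr2 z hz)))

lemma close_cycle {a x y : V} (hax : G.Adj a x) (hay : G.Adj a y) (hxy : x ≠ y)
    (hnxy : ¬ G.Adj x y) (p : G.Walk x y) (hp : p.IsPath)
    (hchord : ∀ u ∈ p.support, ∀ w ∈ p.support, G.Adj u w → s(u, w) ∈ p.edges)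
    (hint : ∀ z ∈ p.support, z ≠ x → z ≠ y → ¬ G.Adj a z) (hanot : a ∉ p.support) :
    ∃ c : G.Walk a a, IsInducedCycle G c ∧ s(x, a) ∈ c.edges ∧ s(a, y) ∈ c.edges := by
  set c : G.Walk a a := Walk.cons hax (p.append (Walk.cons hay.symm Walk.nil)) with hc
  have hsupp : c.support = a :: (p.support ++ [a]) := by
    simp [hc, Walk.support_cons, Walk.support_append]
  have hedges : c.edges = s(a, x) :: (p.edges ++ [s(y, a)]) := by
    simp [hc, Walk.edges_cons, Walk.edges_append]
  have hmem : ∀ z, z ∈ c.support ↔ z = a ∨ z ∈ p.support := by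
    intro z
    rw [hsupp]
    simp only [List.mem_cons, List.mem_append, List.mem_singleton]
    tauto
  have hax_mem : s(a, x) ∈ c.edges := by rw [hedges]; exact List.mem_cons_self
  have hya_mem : s(y, a) ∈ c.edges := by
    rw [hedges]
    exact List.mem_cons_of_mem _ (List.mem_append_right _ (List.mem_singleton.mpr rfl))
  refine ⟨c, ⟨?_, ?_⟩, ?_, ?_⟩
  · -- IsCycle
    rw [Walk.isCycle_def]
    refine ⟨?_, by simp [hc], ?_⟩
    · rw [Walk.isTrail_def, hedges]
      refine List.Nodup.cons ?_ ?_
      · intro hmem'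
        rcases List.mem_append.mp hmem' with h1 | h1
        · exact hanot (Walk.fst_mem_support_of_mem_edges p h1)
        · rw [List.mem_singleton] at h1
          rw [Sym2.eq_iff] at h1
          rcases h1 with ⟨h2, _⟩ | ⟨_, h3⟩
          · exact hay.ne h2
          · exact hxy h3
      · rw [List.nodup_append]
        refine ⟨hp.isTrail.edges_nodup, List.nodup_singleton _, ?_⟩
        intro e he1 e2 he2 hee
        rw [List.mem_singleton] at he2
        subst he2
        subst hee
        exact hanot (Walk.snd_mem_support_of_mem_edges p he1)
    · rw [hsupp]
      simp only [List.tail_cons]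
      rw [List.nodup_append]
      exact ⟨hp.support_nodup, List.nodup_singleton _,
        fun z hz1 z' hz2 hzz => hanot (by rw [List.mem_singleton] at hz2; rw [← hz2, ← hzz]; exact hz1)⟩
  · -- chord condition
    intro u hu w hw hadj
    rcases (hmem u).mp hu with rfl | hu'
    · rcases (hmem w).mp hw with rfl | hw'
      · exact absurd rfl hadj.ne
      · by_cases hwx : w = x
        · subst hwx; exact hax_mem
        · by_cases hwy : w = y
          · subst hwy; rw [Sym2.eq_swap]; exact hya_mem
          · exact absurd hadj (hint w hw' hwx hwy)
    · rcases (hmem w).mp hw with rfl | hw'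
      · by_cases hux : u = x
        · subst hux; rw [Sym2.eq_swap]; exact hax_mem
        · by_cases huy : u = y
          · subst huy; exact hya_mem
          · exact absurd hadj.symm (hint u hu' hux huy)
      · have := hchord u hu' w hw' hadj
        rw [hedges]
        exact List.mem_cons_of_mem _ (List.mem_append_left _ this)
  · rw [Sym2.eq_swap]; exact hax_mem
  · rw [Sym2.eq_swap]; exact hya_mem

/-- Lifting avoidability from the graph with `u` deleted, provided no induced `P3`
centered at `a` uses `u`. -/
lemma lift_del {u a : V} (hau : a ≠ u)
    (hpair : ∀ y : V, G.Adj a u → G.Adj a y → u ≠ y → ¬ G.Adj u y → False)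
    (h : AvoidableP (G.comap (Subtype.val : {z : V // z ≠ u} → V)) ⟨a, hau⟩) :
    AvoidableP G a := by
  intro x y hax hay hxy hnxy
  have hxu : x ≠ u := by
    rintro rfl
    exact hpair y hax hay hxy hnxy
  have hyu : y ≠ u := by
    rintro rfl
    exact hpair x hay hax hxy.symm (fun hh => hnxy hh.symm)
  obtain ⟨p, hpa, hps⟩ := h ⟨x, hxu⟩ ⟨y, hyu⟩ hax hay
    (fun hh => hxy (congrArg Subtype.val hh)) hnxy
  refine ⟨p.map (⟨Subtype.val, fun hh => hh⟩ : _ →g G), ?_, ?_⟩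
  · intro hmem
    rw [Walk.support_map] at hmem
    obtain ⟨z, hz, hzv⟩ := List.mem_map.mp hmem
    have : z = ⟨a, hau⟩ := Subtype.ext hzv
    exact hpa (this ▸ hz)
  · intro z hz
    rw [Walk.support_map] at hz
    obtain ⟨z', hz', rfl⟩ := List.mem_map.mp hz
    rcases hps z' hz' with h1 | h1 | h1
    · exact Or.inl (congrArg Subtype.val h1)
    · exact Or.inr (Or.inl (congrArg Subtype.val h1))
    · exact Or.inr (Or.inr h1)

/-- `G` with the neighborhood of `v` completed to a clique. -/
def Gstar (G : SimpleGraph V) (v : V) : SimpleGraph V where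
  Adj x y := G.Adj x y ∨ (G.Adj v x ∧ G.Adj v y ∧ x ≠ y)
  symm := by
    refine ⟨?_⟩
    intro x y hh
    rcases hh with hh | ⟨h1, h2, h3⟩
    · exact Or.inl hh.symm
    · exact Or.inr ⟨h2, h1, h3.symm⟩
  loopless := by
    refine ⟨?_⟩
    intro x hh
    rcases hh with hh | ⟨_, _, h3⟩
    · exact G.loopless.irrefl x hh
    · exact h3 rfl

lemma down_walk {v : V} : ∀ {x y : V} (p : (Gstar G v).Walk x y),
    ∃ q : G.Walk x y, ∀ z ∈ q.support, z = v ∨ z ∈ p.support := by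
  classical
  intro x y p
  induction p with
  | nil => exact ⟨Walk.nil, by simp⟩
  | @cons x b y h p IH =>
    obtain ⟨q, hq⟩ := IH
    by_cases hG : G.Adj x b
    · refine ⟨Walk.cons hG q, ?_⟩
      intro z hz
      simp only [Walk.support_cons, List.mem_cons] at hz ⊢
      rcases hz with rfl | hz
      · exact Or.inr (Or.inl rfl)
      · rcases hq z hz with h1 | h1
        · exact Or.inl h1
        · exact Or.inr (Or.inr h1)
    · have h' := h.resolve_left hG
      refine ⟨Walk.cons h'.1.symm (Walk.cons h'.2.1 q), ?_⟩
      intro z hz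
      simp only [Walk.support_cons, List.mem_cons] at hz ⊢
      rcases hz with rfl | rfl | hz
      · exact Or.inr (Or.inl rfl)
      · exact Or.inl rfl
      · rcases hq z hz with h1 | h1
        · exact Or.inl h1
        · exact Or.inr (Or.inr h1)

lemma lift_star {v a : V} (hva : ¬ G.Adj v a) (hav : a ≠ v)
    (h : AvoidableP (Gstar G v) a) : AvoidableP G a := by
  intro x y hax hay hxy hnxy
  by_cases hS : G.Adj v x ∧ G.Adj v y
  · refine ⟨Walk.cons hS.1.symm (Walk.cons hS.2 Walk.nil), ?_, ?_⟩
    · simp only [Walk.support_cons, Walk.support_nil, List.mem_cons, List.mem_singleton]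
      push_neg
      exact ⟨hax.ne, ⟨hav, hay.ne, List.not_mem_nil⟩⟩
    · intro z hz
      simp only [Walk.support_cons, Walk.support_nil, List.mem_cons,
        List.mem_singleton] at hz
      rcases hz with rfl | rfl | rfl | h1
      · exact Or.inl rfl
      · exact Or.inr (Or.inr (fun hh => hva hh.symm))
      · exact Or.inr (Or.inl rfl)
      · exact (List.not_mem_nil h1).elim
  · have hnxy' : ¬ (Gstar G v).Adj x y := by
      rintro (h1 | ⟨h1, h2, _⟩)
      · exact hnxy h1
      · exact hS ⟨h1, h2⟩
    obtain ⟨p, hpa, hps⟩ := h x y (Or.inl hax) (Or.inl hay) hxy hnxy'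
    obtain ⟨q, hq⟩ := down_walk p
    refine ⟨q, ?_, ?_⟩
    · intro hzq
      rcases hq a hzq with h1 | h1
      · exact hav h1
      · exact hpa h1
    · intro z hz
      rcases hq z hz with rfl | hz'
      · exact Or.inr (Or.inr (fun hh => hva hh.symm))
      · rcases hps z hz' with h1 | h1 | h1
        · exact Or.inl h1
        · exact Or.inr (Or.inl h1)
        · exact Or.inr (Or.inr (fun hh => h1 (Or.inl hh)))

lemma avoidable_of_avoidableP {a : V} (h : AvoidableP G a) : Avoidable G a := by
  intro x y hax hay hxy hnxy
  obtain ⟨p, hpa, hps⟩ := h x y hax hay hxy hnxy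
  obtain ⟨q, hq, hqs, hchord⟩ :=
    exists_chordless {z | (z = x ∨ z = y ∨ ¬ G.Adj a z) ∧ z ≠ a} p.length p le_rfl
      (fun z hz => ⟨hps z hz, fun hza => hpa (hza ▸ hz)⟩)
  exact close_cycle hax hay hxy hnxy q hq hchord
    (fun z hz h1 h2 => ((hqs z hz).1.resolve_left h1).resolve_left h2)
    (fun hzq => (hqs a hzq).2 rfl)

theorem key_s4 : ∀ n : ℕ,
    (∀ m : ℕ, ∀ (W : Type u) (_ : Fintype W) (G : SimpleGraph W) (v : W),
      Fintype.card W ≤ n → Gᶜ.edgeSet.ncard ≤ m → (∃ w, w ≠ v ∧ ¬ G.Adj v w) →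
      ∃ a, a ≠ v ∧ ¬ G.Adj v a ∧ AvoidableP G a) ∧
    (∀ (W : Type u) (_ : Fintype W) (G : SimpleGraph W) (T : Finset W),
      (∀ t1 ∈ T, ∀ t2 ∈ T, t1 ≠ t2 → G.Adj t1 t2) → (∃ w, w ∉ T) →
      Fintype.card W ≤ n →
      ∃ a, a ∉ T ∧ AvoidableP G a) := by
  intro n
  induction n with
  | zero =>
    constructor
    · intro m W _ G v hcard _ _
      have : 0 < Fintype.card W := Fintype.card_pos_iff.mpr ⟨v⟩
      omega
    · intro W _ G T _ hw hcard
      obtain ⟨w, _⟩ := hw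
      have : 0 < Fintype.card W := Fintype.card_pos_iff.mpr ⟨w⟩
      omega
  | succ n IH =>
    obtain ⟨IH1, IH2⟩ := IH
    have h1 : ∀ m : ℕ, ∀ (W : Type u) (_ : Fintype W) (G : SimpleGraph W) (v : W),
        Fintype.card W ≤ n + 1 → Gᶜ.edgeSet.ncard ≤ m → (∃ w, w ≠ v ∧ ¬ G.Adj v w) →
        ∃ a, a ≠ v ∧ ¬ G.Adj v a ∧ AvoidableP G a := by
      intro m
      induction m using Nat.strong_induction_on with
      | _ m IHm =>
        intro W _ G v hcard hm hv
        classical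
        by_cases hS : ∀ s1 s2 : W, G.Adj v s1 → G.Adj v s2 → s1 ≠ s2 → G.Adj s1 s2
        · -- neighborhood of v is a clique: delete v
          obtain ⟨w, hwv, hwn⟩ := hv
          let G' := G.comap (Subtype.val : {z : W // z ≠ v} → W)
          let T' : Finset {z : W // z ≠ v} := Finset.univ.filter (fun z => G.Adj v z.val)
          have hclique : ∀ t1 ∈ T', ∀ t2 ∈ T', t1 ≠ t2 → G'.Adj t1 t2 := by
            intro t1 ht1 t2 ht2 hne
            simp only [T', Finset.mem_filter, Finset.mem_univ, true_and] at ht1 ht2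
            exact hS _ _ ht1 ht2 (fun hh => hne (Subtype.ext hh))
          have hcard' : Fintype.card {z : W // z ≠ v} ≤ n := by
            have h9 : Fintype.card {z : W // z ≠ v} < Fintype.card W :=
              Fintype.card_subtype_lt (x := v) (by simp)
            omega
          obtain ⟨a', ha'T, ha'A⟩ := IH2 _ _ G' T' hclique
            ⟨⟨w, hwv⟩, by simp [T', hwn]⟩ hcard'
          have hnva : ¬ G.Adj v a'.val := by
            simpa [T'] using ha'T
          refine ⟨a'.val, a'.prop, hnva, ?_⟩
          exact lift_del a'.prop (fun y hau _ _ _ => hnva hau.symm) ha'A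
        · -- neighborhood of v is not a clique: complete it
          push_neg at hS
          obtain ⟨s1, s2, hvs1, hvs2, hne, hnadj⟩ := hS
          have hlt : (Gstar G v)ᶜ.edgeSet.ncard < Gᶜ.edgeSet.ncard := by
            apply Set.ncard_lt_ncard ?_ (Set.toFinite _)
            constructor
            · apply SimpleGraph.edgeSet_mono
              intro x y hxy
              rcases hxy with ⟨hne', hn⟩
              exact ⟨hne', fun hh => hn (Or.inl hh)⟩
            · intro hsub
              have h1 : s(s1, s2) ∈ Gᶜ.edgeSet := by
                rw [SimpleGraph.mem_edgeSet]
                exact ⟨hne, hnadj⟩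
              have h2 := hsub h1
              rw [SimpleGraph.mem_edgeSet] at h2
              exact h2.2 (Or.inr ⟨hvs1, hvs2, hne⟩)
          obtain ⟨w, hwv, hwn⟩ := hv
          obtain ⟨a, hav, hnva, hA⟩ := IHm ((Gstar G v)ᶜ.edgeSet.ncard) (by omega)
            W ‹Fintype W› (Gstar G v) v hcard le_rfl
            ⟨w, hwv, by
              rintro (hh | ⟨hh1, _, _⟩)
              · exact hwn hh
              · exact G.loopless.irrefl v hh1⟩
          have hnva' : ¬ G.Adj v a := fun hh => hnva (Or.inl hh)
          exact ⟨a, hav, hnva', lift_star hnva' hav hA⟩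
    have h2 : ∀ (W : Type u) (_ : Fintype W) (G : SimpleGraph W) (T : Finset W),
        (∀ t1 ∈ T, ∀ t2 ∈ T, t1 ≠ t2 → G.Adj t1 t2) → (∃ w, w ∉ T) →
        Fintype.card W ≤ n + 1 →
        ∃ a, a ∉ T ∧ AvoidableP G a := by
      intro W _ G T hT hw hcard
      classical
      by_cases hTe : ∃ t, t ∈ T
      · obtain ⟨t, htT⟩ := hTe
        by_cases huniv : ∀ z, z ≠ t → G.Adj t z
        · -- t is universal: delete it
          let G' := G.comap (Subtype.val : {z : W // z ≠ t} → W)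
          let T' : Finset {z : W // z ≠ t} := Finset.univ.filter (fun z => z.val ∈ T)
          obtain ⟨w, hwT⟩ := hw
          have hwt : w ≠ t := fun h => hwT (h ▸ htT)
          have hclique : ∀ t1 ∈ T', ∀ t2 ∈ T', t1 ≠ t2 → G'.Adj t1 t2 := by
            intro t1 ht1 t2 ht2 hne
            simp only [T', Finset.mem_filter, Finset.mem_univ, true_and] at ht1 ht2
            exact hT _ ht1 _ ht2 (fun hh => hne (Subtype.ext hh))
          have hcard' : Fintype.card {z : W // z ≠ t} ≤ n := by
            have h9 : Fintype.card {z : W // z ≠ t} < Fintype.card W :=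
              Fintype.card_subtype_lt (x := t) (by simp)
            omega
          obtain ⟨a', ha'T, ha'A⟩ := IH2 _ _ G' T' hclique
            ⟨⟨w, hwt⟩, by simp [T', hwT]⟩ hcard'
          have ha'T' : a'.val ∉ T := by simpa [T'] using ha'T
          refine ⟨a'.val, ha'T', ?_⟩
          exact lift_del a'.prop
            (fun y _ _ hty hnty => hnty (huniv y (Ne.symm hty))) ha'A
        · push_neg at huniv
          obtain ⟨z, hz1, hz2⟩ := huniv
          obtain ⟨a, hat, hnta, hA⟩ := h1 (Gᶜ.edgeSet.ncard) W ‹Fintype W› G t hcard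
            le_rfl ⟨z, hz1, hz2⟩
          exact ⟨a, fun haT => hnta (hT t htT a haT (fun hh => hat hh.symm)), hA⟩
      · by_cases hU : ∃ u z : W, z ≠ u ∧ ¬ G.Adj u z
        · obtain ⟨u, z, hz1, hz2⟩ := hU
          obtain ⟨a, _, _, hA⟩ := h1 (Gᶜ.edgeSet.ncard) W ‹Fintype W› G u hcard
            le_rfl ⟨z, hz1, hz2⟩
          exact ⟨a, fun h => hTe ⟨a, h⟩, hA⟩
        · push_neg at hU
          obtain ⟨w, hwT⟩ := hw
          refine ⟨w, hwT, ?_⟩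
          intro x y _ _ hxy hnxy
          exact absurd (hU x y (Ne.symm hxy)) hnxy
    exact ⟨h1, h2⟩

end Aux

/-- For every finite graph and every non-universal vertex `v`, there is an avoidable
vertex distinct from and nonadjacent to `v`. -/
theorem stmt_4 {V : Type*} [Fintype V] (G : SimpleGraph V) (v : V)
    (hv : ∃ w : V, w ≠ v ∧ ¬ G.Adj v w) :
    ∃ a : V, a ≠ v ∧ ¬ G.Adj v a ∧ Avoidable G a := by
  classical
  obtain ⟨a, h1, h2, h3⟩ := (key_s4 (Fintype.card V)).1 (Gᶜ.edgeSet.ncard) V ‹Fintype V› G v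
    le_rfl le_rfl hv
  exact ⟨a, h1, h2, avoidable_of_avoidableP h3⟩
end

section
/- Let σ = (v_1, …, v_n) be a Lexicographic Breadth First Search ordering of a connected graph G. For every triple of vertices a, b, c with a before b before c in σ and ac an edge of G, there exists a path from a to b in G all of whose internal vertices lie outside the closed neighborhood of v_n. -/
open SimpleGraph

/-- `σ` is an LBFS ordering of `G` (via the standard characterization of the orderings
produced by Lexicographic Breadth First Search): whenever `i < j < k`, `σ i` is adjacent
to `σ k` but not to `σ j`, there is an earlier vertex adjacent to `σ j` but not `σ k`. -/
def IsLBFSOrder {V : Type*} {n : ℕ} (G : SimpleGraph V) (σ : Fin n ≃ V) : Prop :=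
  ∀ i j k : Fin n, i < j → j < k → G.Adj (σ i) (σ k) → ¬ G.Adj (σ i) (σ j) →
    ∃ l : Fin n, l < i ∧ G.Adj (σ l) (σ j) ∧ ¬ G.Adj (σ l) (σ k)

/-- For an LBFS ordering of a connected graph: whenever `a ≺ b ≺ c` and `ac` is an edge,
there is an `a,b`-path whose internal vertices all avoid the closed neighborhood of the
last vertex of the ordering. -/
theorem stmt_5 {V : Type*} [Fintype V] (G : SimpleGraph V) (hG : G.Connected)
    (σ : Fin (Fintype.card V) ≃ V) (hσ : IsLBFSOrder G σ)
    (last : Fin (Fintype.card V)) (hlast : ∀ j, j ≤ last) :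
    ∀ i j k : Fin (Fintype.card V), i < j → j < k → G.Adj (σ i) (σ k) →
      ∃ p : G.Walk (σ i) (σ j), p.IsPath ∧
        ∀ w ∈ p.support, w ≠ σ i → w ≠ σ j → w ≠ σ last ∧ ¬ G.Adj (σ last) w := by
  classical
  suffices H : ∀ m : ℕ, ∀ i j k : Fin (Fintype.card V), i.val < m → i < j → j < k →
      G.Adj (σ i) (σ k) →
      ∃ w : G.Walk (σ i) (σ j), ∀ x ∈ w.support, x ≠ σ i → x ≠ σ j →
        x ≠ σ last ∧ ¬ G.Adj (σ last) x by
    intro i j k hij hjk hadj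
    obtain ⟨w, hw⟩ := H (i.val + 1) i j k (Nat.lt_succ_self _) hij hjk hadj
    exact ⟨w.toPath, w.toPath.2, fun x hx h1 h2 =>
      hw x (Walk.support_toPath_subset _ hx) h1 h2⟩
  intro m
  induction m with
  | zero => intro i _ _ h; exact absurd h (Nat.not_lt_zero _)
  | succ m ih =>
    intro i j k him hij hjk hadj
    by_cases hab : G.Adj (σ i) (σ j)
    · refine ⟨hab.toWalk, ?_⟩
      intro x hx h1 h2
      simp only [Walk.support_cons, Walk.support_nil, List.mem_cons] at hx
      rcases hx with rfl | rfl | h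
      · exact absurd rfl h1
      · exact absurd rfl h2
      · exact absurd h List.not_mem_nil
    · obtain ⟨l, hli, hlb, hlc⟩ := hσ i j k hij hjk hadj hab
      have hlm : l.val < m := by omega
      have hklast := hlast k
      by_cases hdN : σ l ≠ σ last ∧ ¬ G.Adj (σ last) (σ l)
      · -- case 1: σ l avoids N[σ last]
        obtain ⟨w, hw⟩ := ih l i j hlm hli hij hlb
        refine ⟨w.reverse.append hlb.toWalk, ?_⟩
        intro x hx h1 h2
        rw [Walk.mem_support_append_iff] at hx
        rcases hx with hx | hx
        · rw [Walk.support_reverse, List.mem_reverse] at hx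
          by_cases hxl : x = σ l
          · exact hxl ▸ hdN
          · exact hw x hx hxl h1
        · simp only [Walk.support_cons, Walk.support_nil, List.mem_cons] at hx
          rcases hx with rfl | rfl | h
          · exact hdN
          · exact absurd rfl h2
          · exact absurd h List.not_mem_nil
      · -- case 2: σ l ∈ N[σ last]
        have hlv : σ l ≠ σ last := σ.injective.ne (by omega)
        have hadjv : G.Adj (σ last) (σ l) := by
          by_contra h; exact hdN ⟨hlv, h⟩
        have hklast : k < last := by
          rcases lt_or_eq_of_le (hlast k) with h | h
          · exact h
          · exact absurd (h ▸ hadjv.symm) hlc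
        obtain ⟨e, hel, hec, hev⟩ := hσ l k last (by omega) hklast hadjv.symm hlc
        have hem : e.val < m := by omega
        obtain ⟨w1, hw1⟩ := ih e i k hem (by omega) (by omega) hec
        obtain ⟨w2, hw2⟩ := ih e j k hem (by omega) hjk hec
        refine ⟨w1.reverse.append w2, ?_⟩
        intro x hx h1 h2
        have hev' : σ e ≠ σ last := σ.injective.ne (by omega)
        have hevadj : ¬ G.Adj (σ last) (σ e) := fun h => hev h.symm
        rw [Walk.mem_support_append_iff] at hx
        rcases hx with hx | hx
    
        · rw [Walk.support_reverse, List.mem_reverse] at hx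
          by_cases hxe : x = σ e
          · exact hxe ▸ ⟨hev', hevadj⟩
          · exact hw1 x hx hxe h1
        · by_cases hxe : x = σ e
          · exact hxe ▸ ⟨hev', hevadj⟩
          · exact hw2 x hx hxe h2
end

section
/- The last vertex of any Lexicographic Breadth First Search ordering of a graph G is avoidable in G. Moreover, for every i, the vertex v_i is avoidable in the subgraph of G induced by {v_1, …, v_i}. -/
open SimpleGraph

namespace AvoidableAux

variable {V : Type*}

/-- The graph `G` restricted to the vertex set `A` (edges with both ends in `A`). -/
def HG (G : SimpleGraph V) (A : Set V) : SimpleGraph V where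
  Adj a b := G.Adj a b ∧ a ∈ A ∧ b ∈ A
  symm := by constructor; intro a b h; exact ⟨h.1.symm, h.2.2, h.2.1⟩
  loopless := by constructor; intro a h; exact G.loopless.irrefl a h.1

lemma HG_le (G : SimpleGraph V) (A : Set V) : HG G A ≤ G := fun _ _ h => h.1

lemma HG_support_mem {G : SimpleGraph V} {A : Set V} :
    ∀ {u w : V} (q : (HG G A).Walk u w), u ∈ A → ∀ z ∈ q.support, z ∈ A := by
  intro u w q
  induction q with
  | nil =>
    intro hu z hz
    simp only [SimpleGraph.Walk.support_nil, List.mem_singleton] at hz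
    exact hz ▸ hu
  | cons h q ih =>
    intro hu z hz
    rw [SimpleGraph.Walk.support_cons, List.mem_cons] at hz
    rcases hz with rfl | hz
    · exact hu
    · exact ih h.2.2 z hz

/-- chords of a minimum-length walk are walk edges -/
lemma chordlem {H : SimpleGraph V} : ∀ {u w : V} (p : H.Walk u w),
    (∀ q : H.Walk u w, p.length ≤ q.length) →
    ∀ a b, a ∈ p.support → b ∈ p.support → H.Adj a b → s(a, b) ∈ p.edges := by
  classical
  intro u w p
  induction p with
  | nil =>
    intro _ a b ha hb hab
    simp only [SimpleGraph.Walk.support_nil, List.mem_singleton] at ha hb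
    subst ha; subst hb
    exact absurd hab (H.irrefl)
  | @cons u u' w h q ih =>
    intro hmin a b ha hb hab
    have hqmin : ∀ r : H.Walk u' w, q.length ≤ r.length := by
      intro r
      have := hmin (SimpleGraph.Walk.cons h r)
      simpa [SimpleGraph.Walk.length_cons] using this
    have key : ∀ b', b' ∈ q.support → H.Adj u b' →
        s(u, b') ∈ (SimpleGraph.Walk.cons h q).edges := by
      intro b' hb' hub'
      by_cases hbu' : b' = u'
      · subst hbu'
        rw [SimpleGraph.Walk.edges_cons]
        exact List.mem_cons_self
      · exfalso
        have hlen := hmin (SimpleGraph.Walk.cons hub' (q.dropUntil b' hb'))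
        rw [SimpleGraph.Walk.length_cons, SimpleGraph.Walk.length_cons] at hlen
        have hsplit : (q.takeUntil b' hb').length + (q.dropUntil b' hb').length = q.length := by
          have := congrArg SimpleGraph.Walk.length (q.take_spec hb')
          rwa [SimpleGraph.Walk.length_append] at this
        have h0 : (q.takeUntil b' hb').length = 0 := by omega
        exact hbu' (SimpleGraph.Walk.eq_of_length_eq_zero h0).symm
    rw [SimpleGraph.Walk.support_cons, List.mem_cons] at ha hb
    rcases ha with rfl | ha
    · rcases hb with rfl | hb
      · exact absurd hab (H.irrefl)
      · exact key b hb hab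
    · rcases hb with rfl | hb
      · rw [Sym2.eq_swap]
        exact key a ha hab.symm
      · have := ih hqmin a b ha hb hab
        rw [SimpleGraph.Walk.edges_cons]
        exact List.mem_cons_of_mem _ this

/-- Phase A: descent argument showing the two nonadjacent neighbors of the last
vertex are connected outside the closed neighborhood. -/
lemma phaseA {n : ℕ} (G : SimpleGraph V) (σ : Fin n ≃ V) (hσ : IsLBFSOrder G σ)
    (i : Fin n) (hi : ∀ j, j ≤ i)
    (x y : V) (hvx : G.Adj (σ i) x) (hvy : G.Adj (σ i) y)
    (hnadj : ¬ G.Adj x y) (hpos : ((σ.symm x : Fin n) : ℕ) < ((σ.symm y : Fin n) : ℕ))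
    (A : Set V) (hA : ∀ w, w ∈ A ↔ (¬ G.Adj (σ i) w ∧ w ≠ σ i) ∨ w = x ∨ w = y) :
    (HG G A).Reachable x y := by
  by_contra hnr
  set v := σ i with hv
  set H := HG G A with hH
  set pos : V → ℕ := fun w => ((σ.symm w : Fin n) : ℕ) with hposdef
  have lb : ∀ a b c : V, pos a < pos b → pos b < pos c → G.Adj a c → ¬ G.Adj a b →
      ∃ d : V, pos d < pos a ∧ G.Adj d b ∧ ¬ G.Adj d c := by
    intro a b c h1 h2 hac hab
    obtain ⟨l, hl, h3, h4⟩ := hσ (σ.symm a) (σ.symm b) (σ.symm c) h1 h2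
      (by simpa using hac) (by simpa using hab)
    refine ⟨σ l, ?_, by simpa using h3, by simpa using h4⟩
    simpa [pos] using hl
  have posv : pos v = (i : ℕ) := by simp [pos, hv]
  have pos_lt : ∀ w : V, w ≠ v → pos w < (i : ℕ) := by
    intro w hw
    have h1 : σ.symm w ≤ i := hi _
    have h2 : σ.symm w ≠ i := by
      intro h
      apply hw
      rw [hv]
      simpa using congrArg σ h
    exact lt_of_le_of_ne h1 (fun hc => h2 (Fin.ext hc))
  have hxA : x ∈ A := (hA x).2 (Or.inr (Or.inl rfl))
  have hyA : y ∈ A := (hA y).2 (Or.inr (Or.inr rfl))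
  have hxv : x ≠ v := fun hc => G.irrefl (hc ▸ hvx)
  have hyv : y ≠ v := fun hc => G.irrefl (hc ▸ hvy)
  have nonnbr_mem : ∀ w : V, ¬ G.Adj v w → w ≠ v → w ∈ A := by
    intro w h1 h2
    exact (hA w).2 (Or.inl ⟨h1, h2⟩)
  have cross : ∀ s s' : V, (s = x ∧ s' = y ∨ s = y ∧ s' = x) → ∀ p q : V,
      p ∈ A → q ∈ A → H.Reachable s p → H.Reachable s' q → ¬ G.Adj p q := by
    intro s s' hss p q hp hq h1 h2 hadj
    have hHpq : H.Adj p q := ⟨hadj, hp, hq⟩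
    have hr : H.Reachable s s' := h1.trans (hHpq.reachable.trans h2.symm)
    rcases hss with ⟨rfl, rfl⟩ | ⟨rfl, rfl⟩
    · exact hnr hr
    · exact hnr hr.symm
  have descent : ∀ N : ℕ, ∀ a b t s s' : V,
      pos a < N →
      (s = x ∧ s' = y ∨ s = y ∧ s' = x) →
      pos a < pos b → pos b < pos t → t ≠ v →
      G.Adj a t → ¬ G.Adj a b →
      ¬ G.Adj v a → a ≠ v →
      b ∈ A → t ∈ A →
      H.Reachable s a → H.Reachable s' b → H.Reachable s t → False := by
    intro N
    induction N with
    | zero => intro a b t s s' hN; omega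
    | succ N ih =>
      intro a b t s s' hN hss hab_pos hbt_pos htv hat hab hva hav hbA htA hsa hs'b hst
      have haA : a ∈ A := nonnbr_mem a hva hav
      obtain ⟨d, hd_pos, hdb, hdt⟩ := lb a b t hab_pos hbt_pos hat hab
      have htpos : pos t < (i : ℕ) := pos_lt t htv
      have hdv_ne : d ≠ v := by
        intro hc
        rw [hc, posv] at hd_pos
        omega
      by_cases hvd : G.Adj v d
      · -- exit case: d is a neighbor of v
        obtain ⟨e, he_pos, het, hev⟩ := lb d t v (by omega) (by rw [posv]; omega) hvd.symm hdt
        have hev_ne : e ≠ v := by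
          intro hc
          rw [hc, posv] at he_pos
          omega
        have hevn : ¬ G.Adj v e := fun hc => hev hc.symm
        have heA : e ∈ A := nonnbr_mem e hevn hev_ne
        have hse : H.Reachable s e := hst.trans (Adj.reachable ⟨het.symm, htA, heA⟩)
        exact ih e b t s s' (by omega) hss (by omega) hbt_pos htv het
          (cross s s' hss e b heA hbA hse hs'b) hevn hev_ne hbA htA hse hs'b hst
      · -- continue case
        have hdA : d ∈ A := nonnbr_mem d hvd hdv_ne
        have hs'd : H.Reachable s' d := hs'b.trans (Adj.reachable ⟨hdb.symm, hbA, hdA⟩)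
        have hbv : b ≠ v := by
          intro hc
          rw [hc, posv] at hbt_pos
          omega
        have hss' : (s' = x ∧ s = y ∨ s' = y ∧ s = x) := by tauto
        exact ih d a b s' s (by omega) hss' hd_pos hab_pos hbv hdb
          (cross s' s hss' d a hdA haA hs'd hsa) hvd hdv_ne haA hbA hs'd hsa hs'b
  -- initial state
  have hpxy : pos x < pos y := hpos
  have hpyv : pos y < (i : ℕ) := pos_lt y hyv
  obtain ⟨u, hu_pos, huy, huv⟩ := lb x y v hpxy (by rw [posv]; exact hpyv) hvx.symm hnadj
  have huv_ne : u ≠ v := by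
    intro hc
    rw [hc, posv] at hu_pos
    have := pos_lt x hxv
    omega
  have huvn : ¬ G.Adj v u := fun hc => huv hc.symm
  have huA : u ∈ A := nonnbr_mem u huvn huv_ne
  have hyu : H.Reachable y u := Adj.reachable ⟨huy.symm, hyA, huA⟩
  exact descent (pos u + 1) u x y y x (Nat.lt_succ_self _) (Or.inr ⟨rfl, rfl⟩)
    hu_pos hpxy hyv huy
    (cross y x (Or.inr ⟨rfl, rfl⟩) u x huA hxA hyu (Reachable.refl x))
    huvn huv_ne hxA hyA hyu (Reachable.refl x) (Reachable.refl y)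

/-- Core lemma: the last vertex of an LBFS order is avoidable. -/
lemma core {n : ℕ} (G : SimpleGraph V) (σ : Fin n ≃ V) (hσ : IsLBFSOrder G σ)
    (i : Fin n) (hi : ∀ j, j ≤ i) : Avoidable G (σ i) := by
  classical
  intro x y hvx hvy hne hnadj
  set v := σ i with hv
  set A : Set V := {w | (¬ G.Adj v w ∧ w ≠ v) ∨ w = x ∨ w = y} with hAdef
  set H := HG G A with hH
  have hxA : x ∈ A := Or.inr (Or.inl rfl)
  have hyA : y ∈ A := Or.inr (Or.inr rfl)
  have hxv : x ≠ v := fun hc => G.irrefl (hc ▸ hvx)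
  have hyv : y ≠ v := fun hc => G.irrefl (hc ▸ hvy)
  have hvnA : v ∉ A := by
    intro hc
    rcases hc with ⟨_, hc⟩ | hc | hc
    · exact hc rfl
    · exact hxv hc.symm
    · exact hyv hc.symm
  have hreach : H.Reachable x y := by
    have hposne : ((σ.symm x : Fin n) : ℕ) ≠ ((σ.symm y : Fin n) : ℕ) := by
      intro hc
      exact hne (by
        have : σ.symm x = σ.symm y := Fin.ext hc
        have := congrArg σ this
        simpa using this)
    rcases lt_or_gt_of_ne hposne with h | h
    · exact phaseA G σ hσ i hi x y hvx hvy hnadj h A (fun w => Iff.rfl)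
    · refine (phaseA G σ hσ i hi y x hvy hvx (fun hc => hnadj hc.symm) h A ?_).symm
      intro w
      constructor
      · rintro (h1 | h2 | h3)
        · exact Or.inl h1
        · exact Or.inr (Or.inr h2)
        · exact Or.inr (Or.inl h3)
      · rintro (h1 | h2 | h3)
        · exact Or.inl h1
        · exact Or.inr (Or.inr h2)
        · exact Or.inr (Or.inl h3)
  -- Phase B: shortest path and induced cycle
  obtain ⟨p0, hp0⟩ := hreach.exists_walk_length_eq_dist
  set p := p0.bypass with hpdef
  have hp_path : p.IsPath := p0.bypass_isPath
  have hmin : ∀ q : H.Walk x y, p.length ≤ q.length := by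
    intro q
    calc p.length ≤ p0.length := p0.length_bypass_le
    _ = H.dist x y := hp0
    _ ≤ q.length := dist_le q
  have hchord := chordlem p hmin
  have hsupp : ∀ z ∈ p.support, z ∈ A := HG_support_mem p hxA
  have hvns : v ∉ p.support := fun hc => hvnA (hsupp v hc)
  let pG : G.Walk x y := p.mapLe (HG_le G A)
  have hpG_sup : pG.support = p.support := by
    rw [show pG = SimpleGraph.Walk.mapLe (HG_le G A) p from rfl, SimpleGraph.Walk.mapLe,
      SimpleGraph.Walk.support_map]
    show List.map id p.support = p.support
    simp
  have hpG_edg : pG.edges = p.edges := by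
    rw [show pG = SimpleGraph.Walk.mapLe (HG_le G A) p from rfl, SimpleGraph.Walk.mapLe,
      SimpleGraph.Walk.edges_map]
    show List.map (Sym2.map id) p.edges = p.edges
    simp [Sym2.map_id]
  let q : G.Walk x v := pG.concat hvy.symm
  let c : G.Walk v v := SimpleGraph.Walk.cons hvx q
  have hq_sup : q.support = pG.support ++ [v] := by
    simp [q, SimpleGraph.Walk.support_concat, List.concat_eq_append]
  have hq_edg : q.edges = pG.edges ++ [s(y, v)] := by
    simp [q, SimpleGraph.Walk.edges_concat, List.concat_eq_append]
  have hc_sup : c.support = v :: (pG.support ++ [v]) := by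
    simp [c, SimpleGraph.Walk.support_cons, hq_sup]
  have hc_edg : c.edges = s(v, x) :: (pG.edges ++ [s(y, v)]) := by
    simp [c, SimpleGraph.Walk.edges_cons, hq_edg]
  have hxy_edge_ne : s(v, x) ≠ s(y, v) := by
    intro hc
    rw [Sym2.eq_iff] at hc
    rcases hc with ⟨h1, h2⟩ | ⟨h1, h2⟩
    · exact hyv h1.symm
    · exact hne h2
  have hvx_not : s(v, x) ∉ pG.edges := by
    intro hc
    rw [hpG_edg] at hc
    exact hvns (SimpleGraph.Walk.fst_mem_support_of_mem_edges p hc)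
  have hyv_not : s(y, v) ∉ pG.edges := by
    intro hc
    rw [hpG_edg, Sym2.eq_swap] at hc
    exact hvns (SimpleGraph.Walk.fst_mem_support_of_mem_edges p hc)
  have hq_path : q.IsPath := by
    rw [SimpleGraph.Walk.isPath_def, hq_sup]
    rw [List.nodup_append]
    refine ⟨?_, List.nodup_singleton v, ?_⟩
    · rw [hpG_sup]; exact (SimpleGraph.Walk.isPath_def p).1 hp_path
    · intro z hz w hw hzw
      rw [List.mem_singleton] at hw
      rw [hzw, hw] at hz
      rw [hpG_sup] at hz
      exact hvns hz
  have hcyc : c.IsCycle := by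
    rw [SimpleGraph.Walk.cons_isCycle_iff]
    refine ⟨hq_path, ?_⟩
    rw [hq_edg]
    intro hc
    rcases List.mem_append.1 hc with hc | hc
    · exact hvx_not hc
    · rw [List.mem_singleton] at hc
      exact hxy_edge_ne hc
  have mem_sup : ∀ z, z ∈ c.support → z = v ∨ z ∈ p.support := by
    intro z hz
    rw [hc_sup, List.mem_cons] at hz
    rcases hz with rfl | hz
    · exact Or.inl rfl
    · rcases List.mem_append.1 hz with hz | hz
      · rw [hpG_sup] at hz; exact Or.inr hz
      · rw [List.mem_singleton] at hz; exact Or.inl hz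
  have head_mem : s(v, x) ∈ c.edges := by rw [hc_edg]; exact List.mem_cons_self
  have last_mem : s(y, v) ∈ c.edges := by
    rw [hc_edg]
    exact List.mem_cons_of_mem _ (List.mem_append.2 (Or.inr (List.mem_singleton.2 rfl)))
  have vcase : ∀ b, b ∈ p.support → G.Adj v b → s(v, b) ∈ c.edges := by
    intro b hb hadj
    rcases hsupp b hb with ⟨h1, _⟩ | rfl | rfl
    · exact absurd hadj h1
    · exact head_mem
    · rw [Sym2.eq_swap]; exact last_mem
  refine ⟨c, ⟨hcyc, ?_⟩, ?_, ?_⟩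
  · intro a ha b hb hadj
    rcases mem_sup a ha with rfl | ha'
    · rcases mem_sup b hb with rfl | hb'
      · exact absurd hadj (G.irrefl)
      · exact vcase b hb' hadj
    · rcases mem_sup b hb with rfl | hb'
      · rw [Sym2.eq_swap]
        exact vcase a ha' hadj.symm
      · have hHadj : H.Adj a b := ⟨hadj, hsupp a ha', hsupp b hb'⟩
        have := hchord a b ha' hb' hHadj
        rw [← hpG_edg] at this
        rw [hc_edg]
        exact List.mem_cons_of_mem _ (List.mem_append.2 (Or.inl this))
  · rw [Sym2.eq_swap]; exact head_mem
  · rw [Sym2.eq_swap]; exact last_mem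

end AvoidableAux

/-- The last vertex of an LBFS ordering is avoidable; moreover each vertex `σ i` is
avoidable in the subgraph induced by the vertices up to position `i`. -/
theorem stmt_6 {V : Type*} [Fintype V] (G : SimpleGraph V) (hG : G.Connected)
    (σ : Fin (Fintype.card V) ≃ V) (hσ : IsLBFSOrder G σ) :
    (∀ i : Fin (Fintype.card V), (∀ j, j ≤ i) → Avoidable G (σ i)) ∧
    (∀ i : Fin (Fintype.card V),
      Avoidable (G.induce {w : V | ∃ j, j ≤ i ∧ σ j = w}) ⟨σ i, ⟨i, le_refl i, rfl⟩⟩) := by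
  classical
  constructor
  · intro i hi
    exact AvoidableAux.core G σ hσ i hi
  · intro i
    set S : Set V := {w : V | ∃ j, j ≤ i ∧ σ j = w} with hS
    have hcast : ∀ j : Fin (i.val + 1), (j : ℕ) < Fintype.card V := fun j =>
      lt_of_le_of_lt (Nat.lt_succ_iff.mp j.isLt) i.isLt
    have hmem : ∀ j : Fin (i.val + 1), σ ⟨j, hcast j⟩ ∈ S := by
      intro j
      exact ⟨⟨j, hcast j⟩, by
        rw [Fin.le_def]
        exact Nat.lt_succ_iff.mp j.isLt, rfl⟩
    let f : Fin (i.val + 1) → ↥S := fun j => ⟨σ ⟨j, hcast j⟩, hmem j⟩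
    have hinj : Function.Injective f := by
      intro a b hab
      have h1 : σ ⟨a, hcast a⟩ = σ ⟨b, hcast b⟩ := congrArg Subtype.val hab
      have h2 := σ.injective h1
      have h3 : (a : ℕ) = (b : ℕ) := by injection h2
      exact Fin.ext h3
    have hsurj : Function.Surjective f := by
      rintro ⟨w, j, hj, rfl⟩
      refine ⟨⟨j, Nat.lt_succ_iff.mpr (Fin.le_def.mp hj)⟩, ?_⟩
      apply Subtype.ext
      show σ ⟨j, _⟩ = σ j
      exact congrArg σ (Fin.ext rfl)
    let σ' : Fin (i.val + 1) ≃ ↥S := Equiv.ofBijective f ⟨hinj, hsurj⟩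
    have hσ'app : ∀ j, σ' j = f j := fun j => rfl
    have hσ' : IsLBFSOrder (G.induce S) σ' := by
      intro a b c hab hbc hadj hnadj
      have hadj' : G.Adj (σ ⟨a, hcast a⟩) (σ ⟨c, hcast c⟩) := hadj
      have hnadj' : ¬ G.Adj (σ ⟨a, hcast a⟩) (σ ⟨b, hcast b⟩) := hnadj
      obtain ⟨l, hl, h1, h2⟩ := hσ ⟨a, hcast a⟩ ⟨b, hcast b⟩ ⟨c, hcast c⟩ hab hbc hadj' hnadj'
      have hlval : (l : ℕ) < a.val := hl
      refine ⟨⟨l, by omega⟩, hlval, ?_, ?_⟩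
      · show G.Adj (σ ⟨l, _⟩) (σ ⟨b, hcast b⟩)
        have : (⟨(l : ℕ), hcast ⟨l, by omega⟩⟩ : Fin (Fintype.card V)) = l := Fin.ext rfl
        rw [this]
        exact h1
      · show ¬ G.Adj (σ ⟨l, _⟩) (σ ⟨c, hcast c⟩)
        have : (⟨(l : ℕ), hcast ⟨l, by omega⟩⟩ : Fin (Fintype.card V)) = l := Fin.ext rfl
        rw [this]
        exact h2
    have htop : ∀ j : Fin (i.val + 1), j ≤ ⟨i.val, Nat.lt_succ_self _⟩ := by
      intro j
      rw [Fin.le_def]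
      exact Nat.lt_succ_iff.mp j.isLt
    have hres := AvoidableAux.core (G.induce S) σ' hσ' ⟨i.val, Nat.lt_succ_self _⟩ htop
    have heq : σ' ⟨i.val, Nat.lt_succ_self _⟩ = ⟨σ i, ⟨i, le_refl i, rfl⟩⟩ := by
      apply Subtype.ext
      show σ ⟨i.val, _⟩ = σ i
      exact congrArg σ (Fin.ext rfl)
    rw [heq] at hres
    exact hres
end

section
/- For every finite graph G and every vertex v of G, there is an avoidable vertex a of G whose distance from v equals the eccentricity of v. -/
open SimpleGraph

universe u

namespace AvoidAux

open Finset

variable {V : Type u} {G : SimpleGraph V}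


lemma edge_getVert_mem : ∀ {x y : V} (p : G.Walk x y) (i : ℕ), i < p.length →
    s(p.getVert i, p.getVert (i+1)) ∈ p.edges := by
  intro x y p
  induction p with
  | nil => intro i h; simp at h
  | cons h q ih =>
    intro i hi
    cases i with
    | zero => simp [Walk.getVert_zero]
    | succ n =>
      simp only [Walk.getVert_cons_succ, Walk.edges_cons, List.mem_cons]
      exact Or.inr (ih n (by simpa [Walk.length_cons, Nat.succ_lt_succ_iff] using hi))

lemma getVert_length_takeUntil [DecidableEq V] {x y u : V} (p : G.Walk x y) (h : u ∈ p.support) :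
    p.getVert (p.takeUntil u h).length = u := by
  have hs := p.take_spec h
  set q := p.takeUntil u h with hq
  set r := p.dropUntil u h with hr
  rw [show p = q.append r from hs.symm, Walk.getVert_append]
  simp

lemma exists_induced_path [DecidableEq V] {x y : V} (h : G.Reachable x y) :
    ∃ p : G.Walk x y, p.IsPath ∧
      ∀ a b, a ∈ p.support → b ∈ p.support → G.Adj a b → s(a, b) ∈ p.edges := by
  obtain ⟨p₀, hp₀⟩ := h.exists_walk_length_eq_dist
  refine ⟨p₀.bypass, p₀.bypass_isPath, ?_⟩
  have hlen : p₀.bypass.length = G.dist x y :=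
    le_antisymm (hp₀ ▸ p₀.length_bypass_le) (dist_le _)
  set p := p₀.bypass with hp
  intro a b ha hb hab
  have hmin : ∀ q : G.Walk x y, p.length ≤ q.length := fun q => hlen ▸ dist_le q
  set i := (p.takeUntil a ha).length with hi
  set j := (p.takeUntil b hb).length with hj
  have hgi : p.getVert i = a := getVert_length_takeUntil p ha
  have hgj : p.getVert j = b := getVert_length_takeUntil p hb
  have hiL : i ≤ p.length := p.length_takeUntil_le ha
  have hjL : j ≤ p.length := p.length_takeUntil_le hb
  have hsplit_i : i + (p.dropUntil a ha).length = p.length := by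
    conv_rhs => rw [← p.take_spec ha]
    rw [Walk.length_append]
  have hsplit_j : j + (p.dropUntil b hb).length = p.length := by
    conv_rhs => rw [← p.take_spec hb]
    rw [Walk.length_append]
  have h1 : p.length ≤ i + 1 + (p.dropUntil b hb).length := by
    have := hmin ((p.takeUntil a ha).append (Walk.cons hab (p.dropUntil b hb)))
    simpa [Walk.length_append, Walk.length_cons, Nat.add_assoc, Nat.add_comm, Nat.add_left_comm]
      using this
  have h2 : p.length ≤ j + 1 + (p.dropUntil a ha).length := by
    have := hmin ((p.takeUntil b hb).append (Walk.cons hab.symm (p.dropUntil a ha)))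
    simpa [Walk.length_append, Walk.length_cons, Nat.add_assoc, Nat.add_comm, Nat.add_left_comm]
      using this
  have hne : a ≠ b := hab.ne
  have hij : i ≠ j := fun hij => hne (by rw [← hgi, ← hgj, hij])
  rcases (by omega : j = i + 1 ∨ i = j + 1) with hc | hc
  · have hlt : i < p.length := by omega
    have := edge_getVert_mem p i hlt
    rwa [hgi, ← hc, hgj] at this
  · have hlt : j < p.length := by omega
    have := edge_getVert_mem p j hlt
    rw [hgj, ← hc, hgi] at this
    rwa [Sym2.eq_swap] at this

lemma walk_to_induce {S : Set V} : ∀ {x y : V} (p : G.Walk x y)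
    (_ : ∀ u ∈ p.support, u ∈ S) (hx : x ∈ S) (hy : y ∈ S),
    (G.induce S).Reachable ⟨x, hx⟩ ⟨y, hy⟩ := by
  intro x y p
  induction p with
  | nil => intro _ _ _; rfl
  | @cons a b c h q ih =>
    intro hp hx hy
    have hb : b ∈ S := hp b (by simp)
    have hq : ∀ u ∈ q.support, u ∈ S := fun u hu => hp u (by simp [hu])
    have hadj : (G.induce S).Adj ⟨a, hx⟩ ⟨b, hb⟩ := h
    exact hadj.reachable.trans (ih hq hb hy)

def induceOut (G : SimpleGraph V) (S : Set V) : G.induce S →g G where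
  toFun := Subtype.val
  map_rel' := fun h => h

/-- From escape walks to avoidability. -/
lemma avoid'_avoidable [DecidableEq V] {z : V}
    (h : ∀ x y : V, G.Adj z x → G.Adj z y → x ≠ y → ¬ G.Adj x y →
      ∃ p : G.Walk x y, ∀ u ∈ p.support, u = x ∨ u = y ∨ (¬ G.Adj z u ∧ u ≠ z)) :
    Avoidable G z := by
  intro x y hzx hzy hxy hnadj
  obtain ⟨p0, hp0⟩ := h x y hzx hzy hxy hnadj
  set S : Set V := {u | u = x ∨ u = y ∨ (¬ G.Adj z u ∧ u ≠ z)} with hS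
  have hxS : x ∈ S := Or.inl rfl
  have hyS : y ∈ S := Or.inr (Or.inl rfl)
  have hreach := walk_to_induce (S := S) p0 (fun u hu => hp0 u hu) hxS hyS
  obtain ⟨P', hP'path, hP'ind⟩ := exists_induced_path hreach
  set P : G.Walk x y := P'.map (induceOut G S) with hPdef
  have hPpath : P.IsPath :=
    Walk.map_isPath_of_injective Subtype.val_injective hP'path
  have hmem : ∀ u ∈ P.support, ∃ hu : u ∈ S, (⟨u, hu⟩ : S) ∈ P'.support := by
    intro u hu
    replace hu : u ∈ (P'.map (induceOut G S)).support := hu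
    rw [Walk.support_map] at hu
    obtain ⟨u', hu', he⟩ := List.mem_map.mp hu
    exact he ▸ ⟨u'.2, by exact hu'⟩
  have hPsupp : ∀ u ∈ P.support, u ∈ S := fun u hu => (hmem u hu).1
  have hzP : z ∉ P.support := by
    intro hz
    rcases hPsupp z hz with h1 | h2 | h3
    · exact hzx.ne h1
    · exact hzy.ne h2
    · exact h3.2 rfl
  have hPind : ∀ a b, a ∈ P.support → b ∈ P.support → G.Adj a b → s(a, b) ∈ P.edges := by
    intro a b ha hb hab
    obtain ⟨haS, ha'⟩ := hmem a ha
    obtain ⟨hbS, hb'⟩ := hmem b hb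
    have hadj' : (G.induce S).Adj ⟨a, haS⟩ ⟨b, hbS⟩ := hab
    have := hP'ind _ _ ha' hb' hadj'
    show s(a, b) ∈ (P'.map (induceOut G S)).edges
    rw [Walk.edges_map]
    exact List.mem_map.mpr ⟨s(⟨a, haS⟩, ⟨b, hbS⟩), this, rfl⟩
  -- build the cycle
  refine ⟨Walk.cons hzx (P.concat hzy.symm), ⟨?_, ?_⟩, ?_, ?_⟩
  · -- IsCycle
    rw [Walk.isCycle_def]
    refine ⟨?_, by simp, ?_⟩
    · rw [Walk.isTrail_def]
      simp only [Walk.edges_cons, Walk.edges_concat, List.concat_eq_append]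
      refine List.Nodup.cons ?_ (List.Nodup.append hPpath.isTrail.edges_nodup (by simp) ?_)
      · intro hc
        rcases List.mem_append.mp hc with hc | hc
        · exact hzP (Walk.fst_mem_support_of_mem_edges P hc)
        · simp only [List.mem_singleton, Sym2.eq_iff] at hc
          rcases hc with ⟨h1, h2⟩ | ⟨h1, h2⟩
          · exact hzy.ne h1
          · exact hxy h2
      · intro e he hf
        simp only [List.mem_singleton] at hf
        subst hf
        exact hzP (Walk.snd_mem_support_of_mem_edges P he)
    · simp only [Walk.support_cons, List.tail_cons, Walk.support_concat, List.concat_eq_append]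
      refine List.Nodup.append hPpath.support_nodup (by simp) ?_
      intro a ha hb
      simp only [List.mem_singleton] at hb
      subst hb
      exact hzP ha
  · -- induced
    intro a ha b hb hab
    have hsup : ∀ u, u ∈ (Walk.cons hzx (P.concat hzy.symm)).support → u = z ∨ u ∈ P.support := by
      intro u hu
      simp only [Walk.support_cons, Walk.support_concat, List.concat_eq_append,
        List.mem_cons, List.mem_append, List.mem_singleton] at hu
      tauto
    have hedge_in : ∀ e ∈ P.edges, e ∈ (Walk.cons hzx (P.concat hzy.symm)).edges := by
      intro e he
      simp only [Walk.edges_cons, Walk.edges_concat, List.concat_eq_append, List.mem_cons,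
        List.mem_append, List.mem_singleton]
      tauto
    have hz_case : ∀ u, u ∈ P.support → G.Adj z u →
        s(z, u) ∈ (Walk.cons hzx (P.concat hzy.symm)).edges := by
      intro u hu hadj
      rcases hPsupp u hu with h1 | h2 | h3
      · subst h1
        simp [Walk.edges_cons]
      · subst h2
        simp only [Walk.edges_cons, Walk.edges_concat, List.concat_eq_append, List.mem_cons,
          List.mem_append, List.mem_singleton]
        right; right; left; exact Sym2.eq_swap
      · exact absurd hadj h3.1
    rcases hsup a ha with rfl | haP
    · rcases hsup b hb with rfl | hbP
      · exact absurd hab (G.irrefl)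
      · exact hz_case b hbP hab
    · rcases hsup b hb with rfl | hbP
      · rw [Sym2.eq_swap]
        exact hz_case a haP hab.symm
      · exact hedge_in _ (hPind a b haP hbP hab)
  · rw [Sym2.eq_swap]; simp [Walk.edges_cons]
  · simp only [Walk.edges_cons, Walk.edges_concat, List.concat_eq_append, List.mem_cons,
      List.mem_append, List.mem_singleton]
    right; right; left; exact Sym2.eq_swap

/-- From avoidability back to escape walks. -/
lemma avoidable_extract {z x y : V} (hzx : G.Adj z x) (hzy : G.Adj z y) (hxy : x ≠ y)
    (c : G.Walk z z) (hc : IsInducedCycle G c) (hex : s(x, z) ∈ c.edges)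
    (hey : s(z, y) ∈ c.edges) :
    ∃ p : G.Walk x y, ∀ u ∈ p.support, u = x ∨ u = y ∨ (¬ G.Adj z u ∧ u ≠ z) := by
  obtain ⟨hcyc, hind⟩ := hc
  cases c with
  | nil => exact absurd rfl hcyc.ne_nil
  | @cons _ b _ h q =>
    cases q with
    | nil => exact absurd h (G.irrefl)
    | @cons _ b2 _ h₂ q₂ =>
      obtain ⟨w, r, hwz, hq⟩ := Walk.exists_cons_eq_concat h₂ q₂
      have hsup : (Walk.cons h (Walk.cons h₂ q₂)).support = z :: (r.support ++ [z]) := by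
        rw [hq]; simp [Walk.support_cons, Walk.support_concat, List.concat_eq_append]
      have hedg : (Walk.cons h (Walk.cons h₂ q₂)).edges = s(z, b) :: (r.edges ++ [s(w, z)]) := by
        rw [hq]; simp [Walk.edges_cons, Walk.edges_concat, List.concat_eq_append]
      have htail : (r.support ++ [z]).Nodup := by
        have := hcyc.support_nodup
        rwa [hsup, List.tail_cons] at this
      have hzr : z ∉ r.support := by
        intro hz
        rcases List.nodup_append'.mp htail with ⟨_, _, hdisj⟩
        exact hdisj hz (by simp)
      have hclassify : ∀ t, s(t, z) ∈ (Walk.cons h (Walk.cons h₂ q₂)).edges → t ≠ z →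
          t = b ∨ t = w := by
        intro t ht htz
        rw [hedg] at ht
        rcases List.mem_cons.mp ht with ht | ht
        · rw [Sym2.eq_iff] at ht
          rcases ht with ⟨h1, h2⟩ | ⟨h1, h2⟩
          · exact absurd h1 htz
          · exact Or.inl h1
        rcases List.mem_append.mp ht with ht | ht
        · exact absurd (Walk.snd_mem_support_of_mem_edges r ht) hzr
        · simp only [List.mem_singleton, Sym2.eq_iff] at ht
          rcases ht with ⟨h1, h2⟩ | ⟨h1, h2⟩
          · exact Or.inr h1
          · exact absurd h1 htz
      have hxbw : x = b ∨ x = w := hclassify x hex hzx.ne'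
      have hybw : y = b ∨ y = w := by
        have : s(y, z) ∈ (Walk.cons h (Walk.cons h₂ q₂)).edges := by rwa [Sym2.eq_swap] at hey
        exact hclassify y this hzy.ne'
      have hrsupp : ∀ u ∈ r.support, u = b ∨ u = w ∨ (¬ G.Adj z u ∧ u ≠ z) := by
        intro u hu
        have huz : u ≠ z := fun he => hzr (he ▸ hu)
        by_cases hadj : G.Adj z u
        · have humem : u ∈ (Walk.cons h (Walk.cons h₂ q₂)).support := by
            rw [hsup]; simp [hu]
          have : s(z, u) ∈ (Walk.cons h (Walk.cons h₂ q₂)).edges :=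
            hind z (by rw [hsup]; simp) u humem hadj
          have := hclassify u (by rwa [Sym2.eq_swap] at this) huz
          tauto
        · exact Or.inr (Or.inr ⟨hadj, huz⟩)
      rcases hxbw with rfl | rfl
      · rcases hybw with rfl | rfl
        · exact absurd rfl hxy
        · refine ⟨r, ?_⟩
          intro u hu; exact hrsupp u hu
      · rcases hybw with rfl | rfl
        · refine ⟨r.reverse, ?_⟩
          intro u hu
          rw [Walk.support_reverse, List.mem_reverse] at hu
          rcases hrsupp u hu with h1 | h1 | h1
          · exact Or.inr (Or.inl h1)
          · exact Or.inl h1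
          · exact Or.inr (Or.inr h1)
        · exact absurd rfl hxy


theorem aux_main (n : ℕ) : ∀ {V : Type u} [Fintype V] (G : SimpleGraph V),
    Fintype.card V ≤ n → G.Connected → ∀ v : V,
    ∃ a : V, Avoidable G a ∧ G.dist v a = Finset.univ.sup (fun u : V => G.dist v u) := by
  induction n with
  | zero =>
    intro V _ G hn hG v
    have : 0 < Fintype.card V := Fintype.card_pos_iff.mpr hG.nonempty
    omega
  | succ n ih =>
    intro V _ G hn hG v
    classical
    set d := Finset.univ.sup (fun u : V => G.dist v u) with hd
    have hdle : ∀ u : V, G.dist v u ≤ d := fun u => Finset.le_sup (Finset.mem_univ u)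
    rcases Nat.eq_zero_or_pos d with hd0 | hdpos
    · refine ⟨v, ?_, by rw [dist_self, hd0]⟩
      intro x y hvx _ _ _
      exfalso
      have h1 : G.dist v x = 0 := le_antisymm (hd0 ▸ hdle x) (Nat.zero_le _)
      exact hvx.ne (hG.dist_eq_zero_iff.mp h1)
    · -- main case
      have hreach : ∀ a b : V, G.Reachable a b := fun a b => hG.preconnected a b
      have hdist_adj : ∀ {p q : V}, G.Adj p q → G.dist v p ≤ G.dist v q + 1 := by
        intro p q hpq
        have h1 : G.dist q p ≤ 1 := by
          have := dist_le (Walk.cons hpq.symm Walk.nil)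
          simpa using this
        have h2 := hG.dist_triangle (u := v) (v := q) (w := p)
        omega
      -- the component of v avoiding N[z]
      set Rset : V → Set V :=
        fun z => {u | ∃ p : G.Walk v u, ∀ w ∈ p.support, ¬ G.Adj z w ∧ w ≠ z} with hRset
      have hRgood : ∀ z u, u ∈ Rset z → ¬ G.Adj z u ∧ u ≠ z := by
        rintro z u ⟨p, hp⟩; exact hp u p.end_mem_support
      have hRclosed : ∀ z u, u ∈ Rset z → ∀ t, G.Adj u t → ¬ G.Adj z t → t ≠ z → t ∈ Rset z := by
        rintro z u ⟨p, hp⟩ t hut hzt htz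
        refine ⟨p.concat hut, ?_⟩
        intro w hw
        rw [Walk.support_concat] at hw
        rcases List.mem_append.mp hw with hw | hw
        · exact hp w hw
        · simp only [List.mem_singleton] at hw; subst hw; exact ⟨hzt, htz⟩
      have hRsub : ∀ z u, u ∈ Rset z → ∃ p : G.Walk v u,
          (∀ w ∈ p.support, ¬ G.Adj z w ∧ w ≠ z) ∧ ∀ w ∈ p.support, w ∈ Rset z := by
        rintro z u ⟨p, hp⟩
        refine ⟨p, hp, ?_⟩
        intro w hw
        exact ⟨p.takeUntil w hw, fun t ht => hp t (p.support_takeUntil_subset hw ht)⟩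
      -- choose a at distance d maximizing the size of Rset
      have hne : (Finset.univ.filter (fun z : V => G.dist v z = d)).Nonempty := by
        obtain ⟨u₀, -, hu₀⟩ :=
          Finset.exists_mem_eq_sup Finset.univ ⟨v, Finset.mem_univ v⟩ (fun u : V => G.dist v u)
        exact ⟨u₀, Finset.mem_filter.mpr ⟨Finset.mem_univ _, hu₀.symm⟩⟩
      obtain ⟨a, haf, hamax⟩ := Finset.exists_max_image
        (Finset.univ.filter (fun z : V => G.dist v z = d)) (fun z => (Rset z).ncard) hne
      have had : G.dist v a = d := (Finset.mem_filter.mp haf).2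
      have hmax : ∀ z, G.dist v z = d → (Rset z).ncard ≤ (Rset a).ncard := fun z hz =>
        hamax z (Finset.mem_filter.mpr ⟨Finset.mem_univ _, hz⟩)
      set R := Rset a with hR
      -- levels of closed neighbors
      have hnbr_level : ∀ {z t : V}, G.dist v z = d → (G.Adj z t ∨ t = z) →
          d - 1 ≤ G.dist v t := by
        intro z t hz h
        rcases h with h | rfl
        · have := hdist_adj h
          omega
        · omega
      have hlevels : ∀ {z t : V}, G.dist v z = d → G.Adj z t →
          G.dist v t = d ∨ G.dist v t = d - 1 := by
        intro z t hz h
        have h1 := hnbr_level hz (Or.inl h)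
        have h2 := hdle t
        omega
      -- escape-to-v walks
      set A : V → V → Prop :=
        fun z t => ∃ p : G.Walk v t, ∀ w ∈ p.support, w ≠ t → ¬ G.Adj z w ∧ w ≠ z with hA
      have hA1 : ∀ z t, G.dist v z = d → G.dist v t = d - 1 → A z t := by
        intro z t hz ht
        obtain ⟨p, hp⟩ := (hreach v t).exists_walk_length_eq_dist
        refine ⟨p, ?_⟩
        intro w hw hwt
        by_contra hcon
        have hbad : G.Adj z w ∨ w = z := by
          by_contra hb; push_neg at hb; exact hcon ⟨hb.1, hb.2⟩
        have h1 : d - 1 ≤ G.dist v w := hnbr_level hz hbad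
        have hlen2 : (p.takeUntil w hw).length + (p.dropUntil w hw).length = p.length := by
          rw [← Walk.length_append, p.take_spec hw]
        have h2 : G.dist v w + G.dist w t ≤ G.dist v t := by
          calc G.dist v w + G.dist w t
              ≤ (p.takeUntil w hw).length + (p.dropUntil w hw).length :=
                Nat.add_le_add (dist_le _) (dist_le _)
            _ = p.length := hlen2
            _ = G.dist v t := hp
        have h3 : 1 ≤ G.dist w t := by
          rcases Nat.eq_zero_or_pos (G.dist w t) with h0 | hpos
          · exact absurd ((hreach w t).dist_eq_zero_iff.mp h0) hwt
          · omega
        omega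
      have hA2 : ∀ z t r, r ∈ Rset z → G.Adj r t → A z t := by
        intro z t r hr hrt
        obtain ⟨p, hp, -⟩ := hRsub z r hr
        refine ⟨p.concat hrt, ?_⟩
        intro w hw hwt
        rw [Walk.support_concat] at hw
        rcases List.mem_append.mp hw with hw | hw
        · exact hp w hw
        · simp only [List.mem_singleton] at hw; exact absurd hw hwt
      have hAcomb : ∀ z x y, A z x → A z y →
          ∃ p : G.Walk x y, ∀ u ∈ p.support, u = x ∨ u = y ∨ (¬ G.Adj z u ∧ u ≠ z) := by
        rintro z x y ⟨px, hpx⟩ ⟨py, hpy⟩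
        refine ⟨px.reverse.append py, ?_⟩
        intro u hu
        rw [Walk.support_append] at hu
        rcases List.mem_append.mp hu with hu | hu
        · rw [Walk.support_reverse, List.mem_reverse] at hu
          by_cases hux : u = x
          · exact Or.inl hux
          · exact Or.inr (Or.inr (hpx u hu hux))
        · have hu' : u ∈ py.support := List.mem_of_mem_tail hu
          by_cases huy : u = y
          · exact Or.inr (Or.inl huy)
          · exact Or.inr (Or.inr (hpy u hu' huy))
      -- the far set M
      set Mset : Set V := {z | G.dist v z = d ∧ z ∉ R ∧ ∀ r ∈ R, ¬ G.Adj z r} with hM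
      have hMR : ∀ z ∈ Mset, Rset z = R := by
        intro z hz
        obtain ⟨hzd, hzR, hzadj⟩ := hz
        have hsub : R ⊆ Rset z := by
          intro u hu
          obtain ⟨p, hp, hmem⟩ := hRsub a u hu
          refine ⟨p, ?_⟩
          intro w hw
          have hwR : w ∈ R := hmem w hw
          exact ⟨hzadj w hwR, fun he => hzR (he ▸ hwR)⟩
        exact (Set.eq_of_subset_of_ncard_le hsub (hmax z hzd) (Set.toFinite _)).symm
      have hNnotR : ∀ {z t : V}, z ∈ Mset → G.Adj z t → t ∉ R := by
        intro z t hz hadj ht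
        exact hz.2.2 t ht hadj
      have hF3 : ∀ z x t, z ∈ Mset → x ∈ Mset → G.Adj z t → G.dist v t = d - 1 →
          G.Adj x t := by
        intro z x t hzM hxM hzt htd
        by_contra hnadj
        have htx : t ≠ x := by
          intro he
          rw [he] at htd
          have := hxM.1
          omega
        have htR : t ∈ Rset x := by
          obtain ⟨p, hp⟩ := hA1 x t hxM.1 htd
          refine ⟨p, ?_⟩
          intro w hw
          by_cases hwt : w = t
          · subst hwt; exact ⟨hnadj, htx⟩
          · exact hp w hw hwt
        rw [hMR x hxM] at htR
        exact hzM.2.2 t htR hzt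
      -- case split on M
      rcases Set.eq_empty_or_nonempty Mset with hMe | ⟨x₀, hx₀M⟩
      · -- a itself is avoidable
        refine ⟨a, avoid'_avoidable ?_, had⟩
        intro x y hax hay hxy hnadj
        have hAax : ∀ t, G.Adj a t → A a t := by
          intro t hat
          rcases hlevels had hat with htd | htd
          · have htR : t ∉ R := fun ht => (hRgood a t ht).1 hat
            have htM : t ∉ Mset := by rw [hMe]; exact Set.notMem_empty t
            have hex : ¬ ∀ r ∈ R, ¬ G.Adj t r := fun hall => htM ⟨htd, htR, hall⟩
            push_neg at hex
            obtain ⟨r, hrR, htr⟩ := hex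
            exact hA2 a t r hrR htr.symm
          · exact hA1 a t had htd
        exact hAcomb a x y (hAax x hax) (hAax y hay)
      · -- recurse into the component of G[M] containing x₀
        set C : Set V := {u | ∃ p : G.Walk x₀ u, ∀ w ∈ p.support, w ∈ Mset} with hC
        have hx₀C : x₀ ∈ C := by
          refine ⟨Walk.nil, ?_⟩
          intro w hw
          simp only [Walk.support_nil, List.mem_singleton] at hw
          subst hw; exact hx₀M
        have hCM : C ⊆ Mset := by rintro u ⟨p, hp⟩; exact hp u p.end_mem_support
        have hCsupp : ∀ (u : V) (p : G.Walk x₀ u), (∀ w ∈ p.support, w ∈ Mset) →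
            ∀ w ∈ p.support, w ∈ C := by
          intro u p hp w hw
          exact ⟨p.takeUntil w hw, fun t ht => hp t (p.support_takeUntil_subset hw ht)⟩
        have hCclosed : ∀ u ∈ C, ∀ t, G.Adj u t → t ∈ Mset → t ∈ C := by
          rintro u ⟨p, hp⟩ t hut htM
          refine ⟨p.concat hut, ?_⟩
          intro w hw
          rw [Walk.support_concat] at hw
          rcases List.mem_append.mp hw with hw | hw
          · exact hp w hw
          · simp only [List.mem_singleton] at hw; subst hw; exact htM
        have hconn : (G.induce C).Connected := by
          rw [connected_iff]
          refine ⟨?_, ⟨⟨x₀, hx₀C⟩⟩⟩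
          have key : ∀ (m : ↥C), (G.induce C).Reachable ⟨x₀, hx₀C⟩ m := by
            rintro ⟨m, hm⟩
            obtain ⟨p, hp⟩ := id hm
            exact walk_to_induce p (hCsupp m p hp) hx₀C hm
          intro u w
          exact (key u).symm.trans (key w)
        have hvC : v ∉ C := by
          intro hv
          have h1 := (hCM hv).1
          rw [SimpleGraph.dist_self] at h1
          omega
        have hcard : Fintype.card ↥C < Fintype.card V := Fintype.card_subtype_lt hvC
        obtain ⟨a', ha'avoid, -⟩ := ih (G.induce C) (by omega) hconn ⟨x₀, hx₀C⟩
        set z := (a' : V) with hzdef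
        have hzC : z ∈ C := a'.2
        have hzM : z ∈ Mset := hCM hzC
        refine ⟨z, avoid'_avoidable ?_, hzM.1⟩
        intro x y hzx hzy hxy hnadj
        by_cases hxM : x ∈ Mset
        · -- then y ∈ Mset as well
          have hyM : y ∈ Mset := by
            rcases hlevels hzM.1 hzy with hyd | hyd
            · by_contra hyM
              have hyR : y ∉ R := hNnotR hzM hzy
              have hex : ¬ ∀ r ∈ R, ¬ G.Adj y r := fun hall => hyM ⟨hyd, hyR, hall⟩
              push_neg at hex
              obtain ⟨r, hrR, hyr⟩ := hex
              have hrRx : r ∈ Rset x := by rw [hMR x hxM]; exact hrR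
              have hyRx : y ∈ Rset x :=
                hRclosed x r hrRx y hyr.symm hnadj (Ne.symm hxy)
              rw [hMR x hxM] at hyRx
              exact hyR hyRx
            · exact absurd (hF3 z x y hzM hxM hzy hyd) hnadj
          have hxC : x ∈ C := hCclosed z hzC x hzx hxM
          have hyC : y ∈ C := hCclosed z hzC y hzy hyM
          have hzx' : (G.induce C).Adj a' ⟨x, hxC⟩ := hzx
          have hzy' : (G.induce C).Adj a' ⟨y, hyC⟩ := hzy
          have hxy' : (⟨x, hxC⟩ : ↥C) ≠ ⟨y, hyC⟩ := fun he => hxy (congrArg Subtype.val he)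
          have hnadj' : ¬ (G.induce C).Adj ⟨x, hxC⟩ ⟨y, hyC⟩ := fun h => hnadj h
          obtain ⟨c, hcind, hce1, hce2⟩ := ha'avoid _ _ hzx' hzy' hxy' hnadj'
          obtain ⟨p', hp'⟩ := avoidable_extract hzx' hzy' hxy' c hcind hce1 hce2
          refine ⟨Walk.map (induceOut G C) p', ?_⟩
          intro u hu
          replace hu : u ∈ (Walk.map (induceOut G C) p').support := hu
          rw [Walk.support_map] at hu
          obtain ⟨u', hu', rfl⟩ := List.mem_map.mp hu
          rcases hp' u' hu' with h1 | h1 | h1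
          · exact Or.inl (congrArg Subtype.val h1)
          · exact Or.inr (Or.inl (congrArg Subtype.val h1))
          · exact Or.inr (Or.inr ⟨fun hadj => h1.1 hadj, fun he => h1.2 (Subtype.ext he)⟩)
        · -- x not in M
          have hAzt : ∀ t, G.Adj z t → t ∉ Mset → A z t := by
            intro t hzt htM
            rcases hlevels hzM.1 hzt with htd | htd
            · have htR : t ∉ R := hNnotR hzM hzt
              have hex : ¬ ∀ r ∈ R, ¬ G.Adj t r := fun hall => htM ⟨htd, htR, hall⟩
              push_neg at hex
              obtain ⟨r, hrR, htr⟩ := hex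
              have hrRz : r ∈ Rset z := by rw [hMR z hzM]; exact hrR
              exact hA2 z t r hrRz htr.symm
            · exact hA1 z t hzM.1 htd
          by_cases hyM : y ∈ Mset
          · rcases hlevels hzM.1 hzx with hxd | hxd
            · have hxR : x ∉ R := hNnotR hzM hzx
              have hex : ¬ ∀ r ∈ R, ¬ G.Adj x r := fun hall => hxM ⟨hxd, hxR, hall⟩
              push_neg at hex
              obtain ⟨r, hrR, hxr⟩ := hex
              have hrRy : r ∈ Rset y := by rw [hMR y hyM]; exact hrR
              have hxRy : x ∈ Rset y :=
                hRclosed y r hrRy x hxr.symm (fun h => hnadj h.symm) hxy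
              rw [hMR y hyM] at hxRy
              exact absurd hxRy hxR
            · exact absurd (hF3 z y x hzM hyM hzx hxd) (fun h => hnadj h.symm)
          · exact hAcomb z x y (hAzt x hzx hxM) (hAzt y hzy hyM)


end AvoidAux

/-- For every vertex `v` of a finite connected graph there is an avoidable vertex whose
distance from `v` equals the eccentricity of `v`. -/
theorem stmt_7 {V : Type*} [Fintype V] (G : SimpleGraph V) (hG : G.Connected) (v : V) :
    ∃ a : V, Avoidable G a ∧ G.dist v a = Finset.univ.sup (fun u : V => G.dist v u) := by
  exact AvoidAux.aux_main (Fintype.card V) G le_rfl hG v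
end

section
/- Every finite connected graph with at least two vertices contains two distinct avoidable vertices whose distance from each other equals the diameter of the graph. -/
open SimpleGraph

namespace AvoidAux

variable {V : Type*}

/-- The forbidden set: closed neighborhood of `v` minus `{x, y}`. -/
def Fset (G : SimpleGraph V) (v x y : V) : Set V :=
  {w | (w = v ∨ G.Adj v w) ∧ w ≠ x ∧ w ≠ y}

/-- Reachability reformulation of avoidability. -/
def P (G : SimpleGraph V) (v : V) : Prop :=
  ∀ x y : V, G.Adj v x → G.Adj v y → x ≠ y → ¬ G.Adj x y →
    ∃ w : G.Walk x y, ∀ z ∈ w.support, z ∉ Fset G v x y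

/-- Restriction of a graph outside a set. -/
def out (G : SimpleGraph V) (S : Set V) : SimpleGraph V where
  Adj a b := G.Adj a b ∧ a ∉ S ∧ b ∉ S
  symm := ⟨fun a b ⟨h1, h2, h3⟩ => ⟨h1.symm, h3, h2⟩⟩
  loopless := ⟨fun a ⟨h1, _⟩ => G.loopless.irrefl a h1⟩

lemma walk_mono {A B : SimpleGraph V} (h : ∀ ⦃a b⦄, A.Adj a b → B.Adj a b)
    {x y : V} (w : A.Walk x y) :
    ∃ w' : B.Walk x y, w'.support = w.support ∧ w'.edges = w.edges := by
  induction w with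
  | nil => exact ⟨Walk.nil, rfl, rfl⟩
  | cons ha p ih =>
      obtain ⟨w', hs, he⟩ := ih
      exact ⟨Walk.cons (h ha) w', by simp [hs], by simp [he]⟩

lemma walk_detour {A B : SimpleGraph V} {S : Set V}
    (h : ∀ ⦃a b⦄, A.Adj a b → ∃ d : B.Walk a b, ∀ z ∈ d.support, z = a ∨ z = b ∨ z ∉ S)
    {x y : V} (w : A.Walk x y) :
    ∃ w' : B.Walk x y, ∀ z ∈ w'.support, z ∈ w.support ∨ z ∉ S := by
  induction w with
  | nil => exact ⟨Walk.nil, by simp⟩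
  | @cons a b c ha p ih =>
      obtain ⟨w', hw'⟩ := ih
      obtain ⟨d, hd⟩ := h ha
      refine ⟨d.append w', ?_⟩
      intro z hz
      rw [Walk.mem_support_append_iff] at hz
      rcases hz with hz | hz
      · rcases hd z hz with rfl | rfl | h' <;> simp [*]
      · rcases hw' z hz with h' | h' <;> simp [*]

lemma walk_out {G : SimpleGraph V} {S : Set V} {x y : V} (w : G.Walk x y)
    (hw : ∀ z ∈ w.support, z ∉ S) : Nonempty ((out G S).Walk x y) := by
  induction w with
  | nil => exact ⟨Walk.nil⟩
  | @cons a b c ha p ih =>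
      obtain ⟨w'⟩ := ih (fun z hz => hw z (by simp [hz]))
      exact ⟨Walk.cons ⟨ha, hw a (by simp), hw b (by simp)⟩ w'⟩

lemma out_support {G : SimpleGraph V} {S : Set V} {x y : V} (w : (out G S).Walk x y)
    (hy : y ∉ S) : ∀ z ∈ w.support, z ∉ S := by
  induction w with
  | nil => intro z hz; simp at hz; subst hz; exact hy
  | @cons a b c ha p ih =>
      intro z hz
      simp only [Walk.support_cons, List.mem_cons] at hz
      rcases hz with rfl | hz
      · exact ha.2.1
      · exact ih hy z hz

lemma support_dist_split {H : SimpleGraph V} {u a z : V} [DecidableEq V]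
    (p : H.Walk u a) (hz : z ∈ p.support) :
    H.dist u z + H.dist z a ≤ p.length := by
  have h1 := SimpleGraph.dist_le (p.takeUntil z hz)
  have h2 := SimpleGraph.dist_le (p.dropUntil z hz)
  have h3 : (p.takeUntil z hz).length + (p.dropUntil z hz).length = p.length := by
    rw [← Walk.length_append, Walk.take_spec]
  omega

lemma shortest_induced {H : SimpleGraph V} [DecidableEq V] {x y : V} (p : H.Walk x y)
    (hp : p.length ≤ H.dist x y) :
    ∀ a ∈ p.support, ∀ b ∈ p.support, H.Adj a b → s(a, b) ∈ p.edges := by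
  induction p with
  | nil =>
      intro a ha b hb hab
      simp only [Walk.support_nil, List.mem_singleton] at ha hb
      subst ha; subst hb
      exact absurd hab (H.irrefl)
  | @cons x c y h q ih =>
      intro a ha b hb hab
      have hdl : H.dist x y ≤ q.length + 1 := by
        simpa using SimpleGraph.dist_le (Walk.cons h q)
      simp only [Walk.length_cons] at hp
      have hdist : H.dist x y = q.length + 1 := le_antisymm hdl (by omega)
      have hq : q.length ≤ H.dist c y := by
        by_contra hcon
        push_neg at hcon
        obtain ⟨r, hr⟩ := SimpleGraph.Reachable.exists_walk_length_eq_dist ⟨q⟩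
        have := SimpleGraph.dist_le (Walk.cons h r)
        simp only [Walk.length_cons] at this
        omega
      -- key: a neighbor of x on q must be c
      have key : ∀ w (hw : w ∈ q.support), H.Adj x w → w = c := by
        intro w hw hxw
        have hd := SimpleGraph.dist_le (Walk.cons hxw (q.dropUntil w hw))
        simp only [Walk.length_cons] at hd
        have h3 : (q.takeUntil w hw).length + (q.dropUntil w hw).length = q.length := by
          rw [← Walk.length_append, Walk.take_spec]
        have h4 : (q.takeUntil w hw).length = 0 := by omega
        exact (Walk.eq_of_length_eq_zero h4).symm
      simp only [Walk.support_cons, List.mem_cons] at ha hb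
      rcases ha with rfl | ha
      · rcases hb with rfl | hb
        · exact absurd hab (H.irrefl)
        · have := key b hb hab
          subst this
          simp
      · rcases hb with rfl | hb
        · have := key a ha hab.symm
          subst this
          simp [Sym2.eq_swap]
        · have := ih hq a ha b hb hab
          simp [this]

lemma P.avoidable {G : SimpleGraph V} {v : V} (hP : P G v) : Avoidable G v := by
  classical
  intro x y hvx hvy hxy hnxy
  obtain ⟨w, hw⟩ := hP x y hvx hvy hxy hnxy
  set S := Fset G v x y with hS
  have hxS : x ∉ S := fun h => h.2.1 rfl
  have hyS : y ∉ S := fun h => h.2.2 rfl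
  have hvS : v ∈ S := ⟨Or.inl rfl, fun h => G.irrefl (h ▸ hvx), fun h => G.irrefl (h ▸ hvy)⟩
  obtain ⟨w₀⟩ := walk_out w hw
  obtain ⟨p, hplen⟩ := SimpleGraph.Reachable.exists_walk_length_eq_dist ⟨w₀⟩
  have hpath : p.IsPath := p.isPath_of_length_eq_dist hplen
  have hind := shortest_induced p (le_of_eq hplen)
  have hpS : ∀ z ∈ p.support, z ∉ S := out_support p hyS
  obtain ⟨p', hps, hpe⟩ := walk_mono (A := out G S) (B := G) (fun a b hab => hab.1) p
  have hvsup : v ∉ p'.support := by rw [hps]; exact fun h => hpS v h hvS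
  -- the cycle
  refine ⟨Walk.cons hvx (p'.concat hvy.symm), ⟨?_, ?_⟩, ?_, ?_⟩
  · -- IsCycle
    constructor
    constructor
    constructor
    · -- edges nodup
      simp only [Walk.edges_cons, Walk.edges_concat, List.concat_eq_append]
      refine List.Nodup.cons ?_ ?_
      · intro hmem
        rw [List.mem_append] at hmem
        rcases hmem with hmem | hmem
        · exact hvsup (p'.fst_mem_support_of_mem_edges hmem)
        · simp only [List.mem_singleton] at hmem
          rw [Sym2.eq_iff] at hmem
          rcases hmem with ⟨h1, h2⟩ | ⟨h1, h2⟩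
          · exact (G.ne_of_adj hvy) h1
          · exact hxy h2
      · refine List.Nodup.append ?_ (List.nodup_singleton _) ?_
        · rw [hpe]; exact hpath.isTrail.edges_nodup
        · intro e he hf
          simp only [List.mem_singleton] at hf
          subst hf
          exact hvsup (p'.snd_mem_support_of_mem_edges he)
    · simp
    · -- support tail nodup
      simp only [Walk.support_cons, List.tail_cons, Walk.support_concat]
      refine List.Nodup.append ?_ (List.nodup_singleton _) ?_
      · rw [hps]; exact hpath.support_nodup
      · intro a ha hf
        simp only [List.mem_singleton] at hf
        subst hf
        exact hvsup ha
  · -- induced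
    intro a ha b hb hab
    have hsup : ∀ z, z ∈ (Walk.cons hvx (p'.concat hvy.symm)).support → z = v ∨ z ∈ p'.support := by
      intro z hz
      simp only [Walk.support_cons, Walk.support_concat, List.concat_eq_append,
        List.mem_cons, List.mem_append, List.mem_singleton] at hz
      tauto
    have hedge_head : s(v, x) ∈ (Walk.cons hvx (p'.concat hvy.symm)).edges := by simp
    have hedge_last : s(y, v) ∈ (Walk.cons hvx (p'.concat hvy.symm)).edges := by
      simp [Walk.edges_concat]
    have hmemS : ∀ z ∈ p'.support, G.Adj v z → z = x ∨ z = y := by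
      intro z hz hvz
      have : z ∉ S := by rw [hps] at hz; exact hpS z hz
      rw [hS] at this
      by_contra hcon
      push_neg at hcon
      exact this ⟨Or.inr hvz, hcon.1, hcon.2⟩
    have hsub : p'.edges ⊆ (Walk.cons hvx (p'.concat hvy.symm)).edges := by
      intro e he
      simp [Walk.edges_concat, List.concat_eq_append]
      tauto
    rcases hsup a ha with rfl | ha' <;> rcases hsup b hb with rfl | hb'
    · exact absurd hab (G.irrefl)
    · rcases hmemS b hb' hab with rfl | rfl
      · exact hedge_head
      · rwa [Sym2.eq_swap] at hedge_last
    · rcases hmemS a ha' hab.symm with rfl | rfl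
      · rwa [Sym2.eq_swap] at hedge_head
      · exact hedge_last
    · have ha2 : a ∈ p.support := hps ▸ ha'
      have hb2 : b ∈ p.support := hps ▸ hb'
      have := hind a ha2 b hb2 ⟨hab, hpS a ha2, hpS b hb2⟩
      rw [← hpe] at this
      exact hsub this
  · rw [Sym2.eq_swap]; simp
  · simp [Walk.edges_concat, Sym2.eq_swap]



/-- Restriction of a graph inside a set. -/
def inn (G : SimpleGraph V) (S : Set V) : SimpleGraph V where
  Adj a b := G.Adj a b ∧ a ∈ S ∧ b ∈ S
  symm := ⟨fun a b ⟨h1, h2, h3⟩ => ⟨h1.symm, h3, h2⟩⟩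
  loopless := ⟨fun a ⟨h1, _⟩ => G.loopless.irrefl a h1⟩

lemma walk_support_mono {A B : SimpleGraph V} {x y : V} (w : A.Walk x y)
    (h : ∀ a b, A.Adj a b → a ∈ w.support → b ∈ w.support → B.Adj a b) :
    Nonempty (B.Walk x y) := by
  induction w with
  | nil => exact ⟨Walk.nil⟩
  | @cons a b c ha p ih =>
      obtain ⟨w'⟩ := ih (fun a' b' hab' h1 h2 => h a' b' hab' (by simp [h1]) (by simp [h2]))
      exact ⟨Walk.cons (h a b ha (by simp) (by simp)) w'⟩

lemma support_reachable {G : SimpleGraph V} {x y z : V} (p : G.Walk x y)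
    (hz : z ∈ p.support) : G.Reachable x z := by
  classical
  exact ⟨p.takeUntil z hz⟩

lemma inn_reach_mem {G : SimpleGraph V} {S : Set V} {a w : V}
    (h : (inn G S).Reachable a w) : w = a ∨ w ∈ S := by
  obtain ⟨p⟩ := h
  induction p with
  | nil => exact Or.inl rfl
  | @cons a b c ha p ih =>
      rcases ih with rfl | hs
      · exact Or.inr ha.2.2
      · exact Or.inr hs

section Sat

variable (G : SimpleGraph V) (D : Set V) (z₀ : V)

/-- The connected component of `z₀` in the restriction of `G` to `D`. -/
def comp : Set V := {w | (inn G D).Reachable z₀ w}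

/-- The neighborhood of that component. -/
def ncomp : Set V := {w | w ∉ comp G D z₀ ∧ ∃ c ∈ comp G D z₀, G.Adj w c}

/-- The graph restricted to `comp ∪ ncomp` with `ncomp` saturated into a clique. -/
def satG : SimpleGraph V where
  Adj a b := (G.Adj a b ∧ (a ∈ comp G D z₀ ∨ a ∈ ncomp G D z₀) ∧
      (b ∈ comp G D z₀ ∨ b ∈ ncomp G D z₀)) ∨
    (a ∈ ncomp G D z₀ ∧ b ∈ ncomp G D z₀ ∧ a ≠ b)
  symm := by
    refine ⟨?_⟩
    rintro a b (⟨h1, h2, h3⟩ | ⟨h1, h2, h3⟩)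
    · exact Or.inl ⟨h1.symm, h3, h2⟩
    · exact Or.inr ⟨h2, h1, h3.symm⟩
  loopless := by
    refine ⟨?_⟩
    rintro a (⟨h1, _⟩ | ⟨_, _, h3⟩)
    · exact G.loopless.irrefl a h1
    · exact h3 rfl

variable {G D z₀}

lemma z₀_mem_comp : z₀ ∈ comp G D z₀ := Reachable.refl z₀

lemma comp_sub (hz₀ : z₀ ∈ D) : ∀ w ∈ comp G D z₀, w ∈ D := by
  intro w hw
  rcases inn_reach_mem hw with rfl | h
  · exact hz₀
  · exact h

lemma ncomp_not_mem (hz₀ : z₀ ∈ D) : ∀ w ∈ ncomp G D z₀, w ∉ D := by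
  rintro w ⟨hwC, c, hcC, hwc⟩ hwD
  have h : (inn G D).Adj c w := ⟨hwc.symm, comp_sub hz₀ c hcC, hwD⟩
  exact hwC (hcC.trans h.reachable)

lemma nbr_mem {v w : V} (hv : v ∈ comp G D z₀) (h : G.Adj v w) :
    w ∈ comp G D z₀ ∨ w ∈ ncomp G D z₀ := by
  by_cases hw : w ∈ comp G D z₀
  · exact Or.inl hw
  · exact Or.inr ⟨hw, v, hv, h.symm⟩

lemma satG_adj_of {v w : V} (hv : v ∈ comp G D z₀) (h : G.Adj v w) :
    (satG G D z₀).Adj v w :=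
  Or.inl ⟨h, Or.inl hv, nbr_mem hv h⟩

lemma satG_reach : ∀ w, w ∈ comp G D z₀ ∨ w ∈ ncomp G D z₀ →
    (satG G D z₀).Reachable z₀ w := by
  have hc : ∀ w ∈ comp G D z₀, (satG G D z₀).Reachable z₀ w := by
    intro w hw
    obtain ⟨p⟩ := hw
    refine Nonempty.elim (walk_support_mono p ?_) fun q => ⟨q⟩
    intro a b hab ha hb
    exact Or.inl ⟨hab.1, Or.inl (support_reachable p ha), Or.inl (support_reachable p hb)⟩
  rintro w (hw | ⟨hwC, c, hcC, hwc⟩)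
  · exact hc w hw
  · exact (hc c hcC).trans (Adj.reachable (Or.inl ⟨hwc.symm, Or.inl hcC, Or.inr ⟨hwC, c, hcC, hwc⟩⟩))

/-- Lifting `P` from the saturated component graph back to the ambient graph. -/
lemma lift_P {v : V} (hv : v ∈ comp G D z₀)
    (hdet : ∀ a b, a ∈ ncomp G D z₀ → b ∈ ncomp G D z₀ → ¬ G.Adj a b → a ≠ b →
      ∃ d : G.Walk a b, ∀ z ∈ d.support, z = a ∨ z = b ∨ ¬(z = v ∨ G.Adj v z))
    (hP₁ : P (satG G D z₀) v) : P G v := by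
  intro x y hvx hvy hxy hnxy
  have hxF : x ∉ Fset G v x y := fun h => h.2.1 rfl
  have hyF : y ∉ Fset G v x y := fun h => h.2.2 rfl
  by_cases hxy1 : (satG G D z₀).Adj x y
  · have hnc : x ∈ ncomp G D z₀ ∧ y ∈ ncomp G D z₀ := by
      rcases hxy1 with ⟨h, _⟩ | ⟨h1, h2, _⟩
      · exact absurd h hnxy
      · exact ⟨h1, h2⟩
    obtain ⟨d, hd⟩ := hdet x y hnc.1 hnc.2 hnxy hxy
    refine ⟨d, ?_⟩
    intro z hz
    rcases hd z hz with rfl | rfl | h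
    · exact hxF
    · exact hyF
    · exact fun hf => h hf.1
  · obtain ⟨w₁, hw₁⟩ := hP₁ x y (satG_adj_of hv hvx) (satG_adj_of hv hvy) hxy hxy1
    have hFF : Fset G v x y ⊆ Fset (satG G D z₀) v x y := by
      rintro z ⟨h1, h2, h3⟩
      refine ⟨?_, h2, h3⟩
      rcases h1 with rfl | h1
      · exact Or.inl rfl
      · exact Or.inr (satG_adj_of hv h1)
    have hdet2 : ∀ ⦃a b⦄, (satG G D z₀).Adj a b →
        ∃ d : G.Walk a b, ∀ z ∈ d.support, z = a ∨ z = b ∨ z ∉ Fset G v x y := by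
      intro a b hab
      by_cases hHab : G.Adj a b
      · refine ⟨Walk.cons hHab Walk.nil, ?_⟩
        intro z hz
        simp only [Walk.support_cons, Walk.support_nil, List.mem_cons,
          List.mem_singleton, List.not_mem_nil, or_false] at hz
        tauto
      · have hnc : a ∈ ncomp G D z₀ ∧ b ∈ ncomp G D z₀ ∧ a ≠ b := by
          rcases hab with ⟨h, _⟩ | h
          · exact absurd h hHab
          · exact h
        obtain ⟨d, hd⟩ := hdet a b hnc.1 hnc.2.1 hHab hnc.2.2
        refine ⟨d, ?_⟩
        intro z hz
        rcases hd z hz with rfl | rfl | h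
        · exact Or.inl rfl
        · exact Or.inr (Or.inl rfl)
        · exact Or.inr (Or.inr (fun hf => h hf.1))
    obtain ⟨w', hw'⟩ := walk_detour hdet2 w₁
    refine ⟨w', ?_⟩
    intro z hz
    rcases hw' z hz with hz' | hz'
    · exact fun hf => hw₁ z hz' (hFF hf)
    · exact hz'

end Sat




/-- Key induction: a graph supported on `A` with a clique `K ⊊ A`
has a vertex outside `K` satisfying `P`. -/
lemma claim : ∀ (n : ℕ) (A : Finset V) (H : SimpleGraph V) (K : Finset V),
    A.card ≤ n →
    (∀ ⦃a b⦄, H.Adj a b → a ∈ A) →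
    K ⊆ A →
    (∀ a ∈ K, ∀ b ∈ K, a ≠ b → H.Adj a b) →
    (∃ a ∈ A, a ∉ K) →
    ∃ v ∈ A, v ∉ K ∧ P H v := by
  intro n
  induction n with
  | zero =>
      rintro A H K hcard _ _ _ ⟨a, ha, _⟩
      exact absurd (Finset.card_pos.mpr ⟨a, ha⟩) (by omega)
  | succ n ih =>
      rintro A H K hcard hsupp hKA hKcl ⟨a₀, ha₀A, ha₀K⟩
      classical
      by_cases hcomp : ∀ a ∈ A, ∀ b ∈ A, a ≠ b → H.Adj a b
      · refine ⟨a₀, ha₀A, ha₀K, ?_⟩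
        intro x y hvx hvy hxy hnxy
        exact absurd (hcomp x (hsupp hvx.symm) y (hsupp hvy.symm) hxy) hnxy
      · push_neg at hcomp
        obtain ⟨x₀, hx₀, y₀, hy₀, hxy₀, hnadj₀⟩ := hcomp
        -- choose a non-dominating vertex u whose closed neighborhood contains K
        have hu : ∃ u ∈ A, (∀ k ∈ K, k = u ∨ H.Adj u k) ∧ ∃ z ∈ A, z ≠ u ∧ ¬H.Adj u z := by
          by_cases hK : ∃ k ∈ K, ∃ z ∈ A, z ≠ k ∧ ¬H.Adj k z
          · obtain ⟨k, hk, z, hzA, hzk, hnadj⟩ := hK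
            refine ⟨k, hKA hk, ?_, z, hzA, hzk, hnadj⟩
            intro k' hk'
            by_cases h : k' = k
            · exact Or.inl h
            · exact Or.inr (hKcl k hk k' hk' (fun hh => h hh.symm))
          · push_neg at hK
            refine ⟨x₀, hx₀, ?_, y₀, hy₀, fun h => hxy₀ h.symm, hnadj₀⟩
            intro k hk
            by_cases h : k = x₀
            · exact Or.inl h
            · exact Or.inr (hK k hk x₀ hx₀ (fun hh => h hh.symm)).symm
        obtain ⟨u, huA, hKu, z₀, hz₀A, hz₀u, hz₀adj⟩ := hu
        set D : Set V := {w | w ∈ (A : Set V) ∧ w ≠ u ∧ ¬H.Adj u w} with hD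
        have hz₀D : z₀ ∈ D := ⟨hz₀A, hz₀u, hz₀adj⟩
        have hCD : ∀ w ∈ comp H D z₀, w ∈ D := comp_sub hz₀D
        have hNCu : ∀ w ∈ ncomp H D z₀, H.Adj u w := by
          rintro w ⟨hwC, c, hcC, hwc⟩
          have hwA : w ∈ A := hsupp hwc
          have hwD : w ∉ D := ncomp_not_mem hz₀D w ⟨hwC, c, hcC, hwc⟩
          by_cases hwu : w = u
          · subst hwu
            exact absurd hwc (hCD c hcC).2.2
          · by_contra hadj
            exact hwD ⟨hwA, hwu, hadj⟩
        have huC : u ∉ comp H D z₀ := fun h => (hCD u h).2.1 rfl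
        have huNC : u ∉ ncomp H D z₀ := fun h => H.irrefl (hNCu u h)
        -- sets for the recursive call
        set A₁ : Finset V := A.filter (fun w => w ∈ comp H D z₀ ∨ w ∈ ncomp H D z₀) with hA₁
        set K₁ : Finset V := A.filter (fun w => w ∈ ncomp H D z₀) with hK₁
        have hmemA : ∀ w, w ∈ comp H D z₀ ∨ w ∈ ncomp H D z₀ → w ∈ A := by
          rintro w (hw | hw)
          · exact (hCD w hw).1
          · exact hsupp (hNCu w hw).symm
        have hA₁card : A₁.card ≤ n := by
          have hsub : A₁ ⊆ A.erase u := by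
            intro w hw
            rw [hA₁, Finset.mem_filter] at hw
            refine Finset.mem_erase.mpr ⟨?_, hw.1⟩
            rintro rfl
            rcases hw.2 with h | h
            · exact huC h
            · exact huNC h
          have := Finset.card_le_card hsub
          rw [Finset.card_erase_of_mem huA] at this
          have : A₁.card ≤ A.card - 1 := this
          have hApos : 1 ≤ A.card := Finset.card_pos.mpr ⟨u, huA⟩
          omega
        have hrec := ih A₁ (satG H D z₀) K₁ hA₁card ?_ ?_ ?_ ?_
        · obtain ⟨v, hvA₁, hvK₁, hPv⟩ := hrec
          have hvC : v ∈ comp H D z₀ := by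
            rw [hA₁, Finset.mem_filter] at hvA₁
            rcases hvA₁.2 with h | h
            · exact h
            · exact absurd (Finset.mem_filter.mpr ⟨hvA₁.1, h⟩) hvK₁
          have hvD : v ∈ D := hCD v hvC
          refine ⟨v, hvD.1, ?_, ?_⟩
          · -- v ∉ K
            intro hvK
            rcases hKu v hvK with h | h
            · exact hvD.2.1 h
            · exact hvD.2.2 h
          · -- P H v, via lifting
            refine lift_P hvC ?_ hPv
            intro a b ha hb hnab hab
            refine ⟨Walk.cons (hNCu a ha).symm (Walk.cons (hNCu b hb) Walk.nil), ?_⟩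
            intro z hz
            simp only [Walk.support_cons, Walk.support_nil, List.mem_cons,
              List.mem_singleton, List.not_mem_nil, or_false] at hz
            rcases hz with rfl | rfl | rfl
            · exact Or.inl rfl
            · -- z = u
              refine Or.inr (Or.inr ?_)
              rintro (rfl | hadj)
              · exact hvD.2.1 rfl
              · exact hvD.2.2 hadj.symm
            · exact Or.inr (Or.inl rfl)
        · -- support of satG in A₁
          intro a b hab
          have ha : a ∈ comp H D z₀ ∨ a ∈ ncomp H D z₀ := by
            rcases hab with ⟨_, h, _⟩ | ⟨h, _, _⟩
            · exact h
            · exact Or.inr h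
          exact Finset.mem_filter.mpr ⟨hmemA a ha, ha⟩
        · -- K₁ ⊆ A₁
          intro w hw
          rw [hK₁, Finset.mem_filter] at hw
          exact Finset.mem_filter.mpr ⟨hw.1, Or.inr hw.2⟩
        · -- K₁ clique
          intro a ha b hb hab
          rw [hK₁, Finset.mem_filter] at ha hb
          exact Or.inr ⟨ha.2, hb.2, hab⟩
        · -- ∃ a ∈ A₁ \ K₁
          refine ⟨z₀, Finset.mem_filter.mpr ⟨hz₀A, Or.inl z₀_mem_comp⟩, ?_⟩
          intro h
          rw [hK₁, Finset.mem_filter] at h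
          exact h.2.1 z₀_mem_comp


/-- Every vertex has an avoidable vertex at eccentricity distance. -/
lemma main {W : Type*} [Fintype W] {G : SimpleGraph W} (hG : G.Connected) (u : W)
    (he : 1 ≤ Finset.univ.sup fun w => G.dist u w) :
    ∃ v, Avoidable G v ∧ G.dist u v = Finset.univ.sup fun w => G.dist u w := by
  classical
  set e := Finset.univ.sup fun w => G.dist u w with hedef
  have hle : ∀ w, G.dist u w ≤ e := fun w => Finset.le_sup (Finset.mem_univ w)
  obtain ⟨w₀, -, hw₀⟩ := Finset.exists_mem_eq_sup Finset.univ
    ⟨u, Finset.mem_univ u⟩ (fun w => G.dist u w)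
  set D : Set W := {w | e ≤ G.dist u w} with hD
  have hw₀D : w₀ ∈ D := le_of_eq hw₀
  have hCdist : ∀ w ∈ comp G D w₀, G.dist u w = e :=
    fun w hw => le_antisymm (hle w) (comp_sub hw₀D w hw)
  have hNC : ∀ w ∈ ncomp G D w₀, G.dist u w + 1 = e := by
    intro w hw
    obtain ⟨hwC, c, hcC, hwc⟩ := hw
    have h1 : G.dist u w < e := by
      have := ncomp_not_mem hw₀D w ⟨hwC, c, hcC, hwc⟩
      simp only [hD, Set.mem_setOf_eq, not_le] at this
      exact this
    have h2 : G.dist u c ≤ G.dist u w + G.dist w c := hG.dist_triangle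
    have h3 : G.dist w c ≤ 1 := by
      simpa using SimpleGraph.dist_le (Walk.cons hwc Walk.nil)
    have h4 := hCdist c hcC
    omega
  set A₁ : Finset W := Finset.univ.filter (fun w => w ∈ comp G D w₀ ∨ w ∈ ncomp G D w₀) with hA₁
  set K₁ : Finset W := Finset.univ.filter (fun w => w ∈ ncomp G D w₀) with hK₁
  have hrec := claim A₁.card A₁ (satG G D w₀) K₁ le_rfl ?_ ?_ ?_ ?_
  · obtain ⟨v, hvA₁, hvK₁, hPv⟩ := hrec
    have hvC : v ∈ comp G D w₀ := by
      rw [hA₁, Finset.mem_filter] at hvA₁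
      rcases hvA₁.2 with h | h
      · exact h
      · exact absurd (Finset.mem_filter.mpr ⟨Finset.mem_univ v, h⟩) hvK₁
    have hvdist := hCdist v hvC
    refine ⟨v, ?_, hvdist⟩
    refine P.avoidable (lift_P hvC ?_ hPv)
    intro a b ha hb hnab hab
    obtain ⟨pa, hpa⟩ := (hG.preconnected u a).exists_walk_length_eq_dist
    obtain ⟨pb, hpb⟩ := (hG.preconnected u b).exists_walk_length_eq_dist
    have key : ∀ (c : W), c ∈ ncomp G D w₀ → ∀ (p : G.Walk u c), p.length = G.dist u c →
        ∀ z ∈ p.support, z = c ∨ ¬(z = v ∨ G.Adj v z) := by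
      intro c hc p hp z hzp
      by_cases hzc : z = c
      · exact Or.inl hzc
      refine Or.inr ?_
      intro hzN
      have hzdist : e ≤ G.dist u z + 1 := by
        rcases hzN with rfl | hzN
        · rw [hvdist]; omega
        · rcases nbr_mem hvC hzN with h | h
          · rw [hCdist z h]; omega
          · rw [← hNC z h]
      have hsplit := support_dist_split p hzp
      rw [hp] at hsplit
      have hce := hNC c hc
      have hz0 : G.dist z c = 0 := by omega
      exact hzc ((hG.preconnected z c).dist_eq_zero_iff.mp hz0)
    refine ⟨pa.reverse.append pb, ?_⟩
    intro z hz
    rw [Walk.mem_support_append_iff] at hz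
    rcases hz with hz | hz
    · rw [Walk.support_reverse, List.mem_reverse] at hz
      rcases key a ha pa hpa z hz with rfl | h
      · exact Or.inl rfl
      · exact Or.inr (Or.inr h)
    · rcases key b hb pb hpb z hz with rfl | h
      · exact Or.inr (Or.inl rfl)
      · exact Or.inr (Or.inr h)
  · intro a b hab
    have ha : a ∈ comp G D w₀ ∨ a ∈ ncomp G D w₀ := by
      rcases hab with ⟨_, h, _⟩ | ⟨h, _, _⟩
      · exact h
      · exact Or.inr h
    exact Finset.mem_filter.mpr ⟨Finset.mem_univ a, ha⟩
  · intro w hw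
    rw [hK₁, Finset.mem_filter] at hw
    exact Finset.mem_filter.mpr ⟨Finset.mem_univ w, Or.inr hw.2⟩
  · intro a ha b hb hab
    rw [hK₁, Finset.mem_filter] at ha hb
    exact Or.inr ⟨ha.2, hb.2, hab⟩
  · refine ⟨w₀, Finset.mem_filter.mpr ⟨Finset.mem_univ w₀, Or.inl z₀_mem_comp⟩, ?_⟩
    intro h
    rw [hK₁, Finset.mem_filter] at h
    exact h.2.1 z₀_mem_comp

end AvoidAux

/-- Every finite connected graph with at least two vertices contains two distinct
avoidable vertices at distance equal to the diameter of the graph. -/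
theorem stmt_8 {V : Type*} [Fintype V] (G : SimpleGraph V) (hG : G.Connected)
    (h2 : 2 ≤ Fintype.card V) :
    ∃ a b : V, a ≠ b ∧ Avoidable G a ∧ Avoidable G b ∧
      G.dist a b = Finset.univ.sup (fun p : V × V => G.dist p.1 p.2) := by
  classical
  set Dm := Finset.univ.sup (fun p : V × V => G.dist p.1 p.2) with hDm
  have hecc_le : ∀ u : V, (Finset.univ.sup fun w => G.dist u w) ≤ Dm := by
    intro u
    refine Finset.sup_le ?_
    intro w _
    exact Finset.le_sup (f := fun p : V × V => G.dist p.1 p.2) (Finset.mem_univ (u, w))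
  obtain ⟨x, y, hxy⟩ := Fintype.exists_pair_of_one_lt_card h2
  have hDpos : 1 ≤ Dm := by
    have : 1 ≤ G.dist x y := hG.pos_dist_of_ne hxy
    exact le_trans this (Finset.le_sup (f := fun p : V × V => G.dist p.1 p.2)
      (Finset.mem_univ (x, y)))
  obtain ⟨⟨p₀, q₀⟩, -, hpq⟩ := Finset.exists_mem_eq_sup Finset.univ
    ⟨(x, y), Finset.mem_univ _⟩ (fun p : V × V => G.dist p.1 p.2)
  have hecc_p₀ : (Finset.univ.sup fun w => G.dist p₀ w) = Dm := by
    refine le_antisymm (hecc_le p₀) ?_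
    rw [hDm, hpq]
    exact Finset.le_sup (Finset.mem_univ q₀)
  obtain ⟨a, haAv, haDist⟩ := AvoidAux.main hG p₀ (by rw [hecc_p₀]; exact hDpos)
  rw [hecc_p₀] at haDist
  have hecc_a : (Finset.univ.sup fun w => G.dist a w) = Dm := by
    refine le_antisymm (hecc_le a) ?_
    rw [← haDist, SimpleGraph.dist_comm]
    exact Finset.le_sup (Finset.mem_univ p₀)
  obtain ⟨b, hbAv, hbDist⟩ := AvoidAux.main hG a (by rw [hecc_a]; exact hDpos)
  rw [hecc_a] at hbDist
  refine ⟨a, b, ?_, haAv, hbAv, hbDist⟩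
  intro hab
  rw [hab, SimpleGraph.dist_self] at hbDist
  omega
end

section
/- Every graph with at least one edge has a pseudo-avoidable edge, i.e., an edge e such that every (not necessarily induced) three-edge path with e as middle edge closes to a (not necessarily induced) cycle. -/
open SimpleGraph

section Aux

variable {V : Type*} {G : SimpleGraph V}

private lemma start_not_mem_dropUntil [DecidableEq V] {x y b : V}
    (p : G.Walk x y) (hp : p.IsPath) (hb : b ∈ p.support) (hbx : b ≠ x) :
    x ∉ (p.dropUntil b hb).support := by
  intro hx
  have hnd : ((p.takeUntil b hb).append (p.dropUntil b hb)).support.Nodup := by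
    rw [p.take_spec hb]; exact hp.support_nodup
  rw [SimpleGraph.Walk.support_append, List.nodup_append] at hnd
  rcases ((p.dropUntil b hb).mem_support_iff).mp hx with h | h
  · exact hbx h.symm
  · exact hnd.2.2 _ (p.takeUntil b hb).start_mem_support _ h rfl

private lemma exists_path_between [DecidableEq V] {x y a b : V}
    (p : G.Walk x y) (hp : p.IsPath)
    (ha : a ∈ p.support) (hb : b ∈ p.support)
    (hax : a ≠ x) (hbx : b ≠ x) :
    ∃ q : G.Walk b a, q.IsPath ∧ x ∉ q.support ∧ ∀ w ∈ q.support, w ∈ p.support := by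
  by_cases hmem : a ∈ (p.dropUntil b hb).support
  · refine ⟨(p.dropUntil b hb).takeUntil a hmem, (hp.dropUntil hb).takeUntil hmem, ?_, ?_⟩
    · intro hx
      exact start_not_mem_dropUntil p hp hb hbx
        (SimpleGraph.Walk.support_takeUntil_subset _ hmem hx)
    · intro w hw
      exact SimpleGraph.Walk.support_dropUntil_subset p hb
        (SimpleGraph.Walk.support_takeUntil_subset _ hmem hw)
  · have ha' : a ∈ (p.takeUntil b hb).support := by
      have h2 : a ∈ ((p.takeUntil b hb).append (p.dropUntil b hb)).support := by
        rw [p.take_spec hb]; exact ha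
      rw [SimpleGraph.Walk.support_append, List.mem_append] at h2
      rcases h2 with h | h
      · exact h
      · exact absurd (List.mem_of_mem_tail h) hmem
    refine ⟨((p.takeUntil b hb).dropUntil a ha').reverse,
      ((hp.takeUntil hb).dropUntil ha').reverse, ?_, ?_⟩
    · rw [SimpleGraph.Walk.support_reverse, List.mem_reverse]
      exact start_not_mem_dropUntil (p.takeUntil b hb) (hp.takeUntil hb) ha' hax
    · intro w hw
      rw [SimpleGraph.Walk.support_reverse, List.mem_reverse] at hw
      exact SimpleGraph.Walk.support_takeUntil_subset p hb
        (SimpleGraph.Walk.support_dropUntil_subset _ ha' hw)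

private lemma isPath_concat_aux {x y z : V} {q : G.Walk x y} (hq : q.IsPath)
    (h : G.Adj y z) (hz : z ∉ q.support) : (q.concat h).IsPath := by
  rw [← SimpleGraph.Walk.isPath_reverse_iff, SimpleGraph.Walk.reverse_concat]
  exact hq.reverse.cons (by rwa [SimpleGraph.Walk.support_reverse, List.mem_reverse])

private lemma build_cycle {x0 x1 a b : V} (h01 : G.Adj x0 x1)
    (ha : G.Adj a x1) (hb : G.Adj x0 b) (hax0 : a ≠ x0) (hbx1 : b ≠ x1)
    (q : G.Walk b a) (hq : q.IsPath) (h0 : x0 ∉ q.support) (h1 : x1 ∉ q.support) :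
    ∃ c : G.Walk x1 x1, c.IsCycle ∧
      s(a, x1) ∈ c.edges ∧ s(x1, x0) ∈ c.edges ∧ s(x0, b) ∈ c.edges := by
  have hq2 : (q.concat ha).IsPath := isPath_concat_aux hq ha h1
  have hx0 : x0 ∉ (q.concat ha).support := by
    rw [SimpleGraph.Walk.support_concat, List.mem_append]
    rintro (h | h)
    · exact h0 h
    · simp only [List.mem_singleton] at h
      exact h01.ne h
  have hpfin : (SimpleGraph.Walk.cons hb (q.concat ha)).IsPath := hq2.cons hx0
  have hne : s(x1, x0) ∉ (SimpleGraph.Walk.cons hb (q.concat ha)).edges := by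
    intro hmem
    rw [SimpleGraph.Walk.edges_cons] at hmem
    rcases List.mem_cons.mp hmem with h | h
    · rw [Sym2.eq_iff] at h
      rcases h with h | h
      · exact h01.ne h.1.symm
      · exact hbx1 h.1.symm
    · rw [SimpleGraph.Walk.edges_concat, List.concat_eq_append] at h
      rcases List.mem_append.mp h with h | h
      · exact h1 (q.fst_mem_support_of_mem_edges h)
      · rw [List.mem_singleton, Sym2.eq_iff] at h
        rcases h with h | h
        · exact h01.ne h.2
        · exact hax0 h.2.symm
  have hcyc := SimpleGraph.Path.cons_isCycle ⟨_, hpfin⟩ h01.symm hne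
  refine ⟨_, hcyc, ?_, ?_, ?_⟩ <;>
    simp [SimpleGraph.Walk.edges_cons, SimpleGraph.Walk.edges_concat]

end Aux

/-- Every graph with at least one edge has a pseudo-avoidable edge: an edge `uv` such
that every (not necessarily induced) three-edge path `a - u - v - b` closes to a
(not necessarily induced) cycle containing its three edges. -/
theorem stmt_9 {V : Type*} [Fintype V] (G : SimpleGraph V) (h : ∃ u v : V, G.Adj u v) :
    ∃ u v : V, G.Adj u v ∧
      ∀ a b : V, G.Adj a u → G.Adj v b → a ≠ b → a ≠ v → b ≠ u →
        ∃ c : G.Walk u u, c.IsCycle ∧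
          s(a, u) ∈ c.edges ∧ s(u, v) ∈ c.edges ∧ s(v, b) ∈ c.edges := by
  classical
  obtain ⟨u0, v0, huv0⟩ := h
  by_cases hdeg : ∃ x y : V, G.Adj x y ∧ ∀ w, G.Adj y w → w = x
  · obtain ⟨x, y, hxy, hy⟩ := hdeg
    refine ⟨x, y, hxy, ?_⟩
    intro a b _ hb _ _ hbu
    exact absurd (hy b hb) hbu
  push_neg at hdeg
  -- set of lengths of paths
  set S : Set ℕ := {n | ∃ (x y : V) (p : G.Walk x y), p.IsPath ∧ p.length = n} with hSdef
  have hS1 : 1 ∈ S := by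
    refine ⟨u0, v0, SimpleGraph.Walk.cons huv0 SimpleGraph.Walk.nil, ?_, rfl⟩
    simp [SimpleGraph.Walk.cons_isPath_iff, huv0.ne]
  have hbdd : BddAbove S := by
    refine ⟨Fintype.card V, ?_⟩
    rintro n ⟨x, y, p, hp, rfl⟩
    exact le_of_lt hp.length_lt
  have hmem := Nat.sSup_mem ⟨1, hS1⟩ hbdd
  have h1le : 1 ≤ sSup S := le_csSup hbdd hS1
  have hmax : ∀ (x y : V) (p : G.Walk x y), p.IsPath → p.length ≤ sSup S := by
    intro x y p hp
    exact le_csSup hbdd ⟨x, y, p, hp, rfl⟩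
  have hext : ∀ (x y : V) (p : G.Walk x y), p.IsPath → p.length = sSup S →
      ∀ z, G.Adj z x → z ∈ p.support := by
    intro x y p hp hl z hz
    by_contra hzs
    have hcons : (SimpleGraph.Walk.cons hz p).IsPath := hp.cons hzs
    have := hmax _ _ _ hcons
    rw [SimpleGraph.Walk.length_cons, hl] at this
    omega
  obtain ⟨x0, xk, P, hP, hPlen⟩ := hmem
  have hnn : ¬ P.Nil := by
    rw [SimpleGraph.Walk.nil_iff_length_eq]
    omega
  obtain ⟨x1, h01, P', rfl⟩ := SimpleGraph.Walk.not_nil_iff.mp hnn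
  have hP' : P'.IsPath := hP.of_cons
  have hx0P' : x0 ∉ P'.support := ((SimpleGraph.Walk.cons_isPath_iff _ _).mp hP).2
  refine ⟨x1, x0, h01.symm, ?_⟩
  intro a b ha hb hab hax0 hbx1
  -- b is on P'
  have hbP : b ∈ (SimpleGraph.Walk.cons h01 P').support :=
    hext x0 xk _ hP hPlen b hb.symm
  have hbP' : b ∈ P'.support := by
    rw [SimpleGraph.Walk.support_cons, List.mem_cons] at hbP
    rcases hbP with h' | h'
    · exact absurd h'.symm hb.ne
    · exact h'
  by_cases haP : a ∈ P'.support
  · obtain ⟨q, hq, h1q, hsub⟩ := exists_path_between P' hP' haP hbP' ha.ne hbx1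
    have h0q : x0 ∉ q.support := fun hx => hx0P' (hsub _ hx)
    exact build_cycle h01 ha hb hax0 hbx1 q hq h0q h1q
  · have hQ : (SimpleGraph.Walk.cons ha P').IsPath := hP'.cons haP
    have hQlen : (SimpleGraph.Walk.cons ha P').length = sSup S := by
      rw [SimpleGraph.Walk.length_cons]
      rw [SimpleGraph.Walk.length_cons] at hPlen
      exact hPlen
    obtain ⟨z, hz, hzx1⟩ := hdeg x1 a ha.symm
    have hzQ : z ∈ (SimpleGraph.Walk.cons ha P').support :=
      hext a xk _ hQ hQlen z hz.symm
    have hzP' : z ∈ P'.support := by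
      rw [SimpleGraph.Walk.support_cons, List.mem_cons] at hzQ
      rcases hzQ with h' | h'
      · exact absurd h'.symm hz.ne
      · exact h'
    by_cases hzb : z = b
    · subst hzb
      refine build_cycle h01 ha hb hax0 hbx1
        (SimpleGraph.Walk.cons hz.symm SimpleGraph.Walk.nil) ?_ ?_ ?_
      · simp [SimpleGraph.Walk.cons_isPath_iff, hz.ne']
      · intro h'
        simp only [SimpleGraph.Walk.support_cons, SimpleGraph.Walk.support_nil,
          List.mem_cons, List.not_mem_nil, or_false] at h'
        rcases h' with h' | h'
        · exact hb.ne h'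
        · exact hax0 h'.symm
      · intro h'
        simp only [SimpleGraph.Walk.support_cons, SimpleGraph.Walk.support_nil,
          List.mem_cons, List.not_mem_nil, or_false] at h'
        rcases h' with h' | h'
        · exact hbx1 h'.symm
        · exact ha.ne h'.symm
    · obtain ⟨q1, hq1, h1q1, hsub1⟩ := exists_path_between P' hP' hzP' hbP' hzx1 hbx1
      have haq1 : a ∉ q1.support := fun hx => haP (hsub1 _ hx)
      have hq : (q1.concat hz.symm).IsPath := isPath_concat_aux hq1 hz.symm haq1
      have h0q : x0 ∉ (q1.concat hz.symm).support := by
        rw [SimpleGraph.Walk.support_concat, List.mem_append]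
        rintro (h' | h')
        · exact hx0P' (hsub1 _ h')
        · simp only [List.mem_singleton] at h'
          exact hax0 h'.symm
      have h1q : x1 ∉ (q1.concat hz.symm).support := by
        rw [SimpleGraph.Walk.support_concat, List.mem_append]
        rintro (h' | h')
        · exact h1q1 h'
        · simp only [List.mem_singleton] at h'
          exact ha.ne h'.symm
      exact build_cycle h01 ha hb hax0 hbx1 _ hq h0q h1q
end

section
/- Every $1$-perfect orientation of a graph G is hole-cyclic, i.e., if an orientation of G has the property that the out-neighborhood of every vertex induces a tournament, then every induced cycle of length at least four in G is oriented cyclically. -/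
open SimpleGraph

section Aux

variable {V : Type*} {G : SimpleGraph V}

lemma aux_getVert_eq_support_getElem {u v : V} (p : G.Walk u v) {i : ℕ}
    (h : i < p.support.length) : p.getVert i = p.support[i] := by
  induction p generalizing i with
  | nil =>
    simp only [SimpleGraph.Walk.support_nil, List.length_cons, List.length_nil] at h
    interval_cases i
    rfl
  | cons hadj q ih =>
    cases i with
    | zero => rfl
    | succ n =>
      have h' : n < q.support.length := by
        simp only [SimpleGraph.Walk.support_cons, List.length_cons] at h
        omega
      simpa [SimpleGraph.Walk.getVert_cons_succ, SimpleGraph.Walk.support_cons] using ih h'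

lemma aux_darts_getElem {u v : V} (p : G.Walk u v) {i : ℕ} (h : i < p.length) :
    (p.darts[i]'(by simpa [SimpleGraph.Walk.length_darts] using h)).fst = p.getVert i ∧
    (p.darts[i]'(by simpa [SimpleGraph.Walk.length_darts] using h)).snd = p.getVert (i + 1) := by
  induction p generalizing i with
  | nil => simp at h
  | cons hadj q ih =>
    cases i with
    | zero =>
      refine ⟨rfl, ?_⟩
      simp [SimpleGraph.Walk.getVert_cons_succ, SimpleGraph.Walk.getVert_zero]
    | succ n =>
      have h' : n < q.length := by
        simpa using Nat.lt_of_succ_lt_succ (by simpa using h)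
      simpa [SimpleGraph.Walk.getVert_cons_succ] using ih h'

end Aux

/-- Every 1-perfect orientation of a graph is hole-cyclic: if `D` orients `G` so that
the out-neighborhood of every vertex induces a tournament, then every induced cycle of
length at least four is oriented cyclically. -/
theorem stmt_10 {V : Type*} (G : SimpleGraph V) (D : V → V → Prop)
    (horient : ∀ u v : V, G.Adj u v ↔ (D u v ∨ D v u))
    (hasymm : ∀ u v : V, D u v → ¬ D v u)
    (hperf : ∀ v a b : V, D v a → D v b → a ≠ b → G.Adj a b) :
    ∀ (v : V) (c : G.Walk v v), IsInducedCycle G c → 4 ≤ c.length →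
      (∀ d ∈ c.darts, D d.fst d.snd) ∨ (∀ d ∈ c.darts, D d.snd d.fst) := by
  intro v c hic hlen
  obtain ⟨hcyc, hind⟩ := hic
  set n := c.length with hn
  have hn4 : 4 ≤ n := hlen
  have hnpos : 0 < n := by omega
  have hsuplen : c.support.length = n + 1 := by
    rw [SimpleGraph.Walk.length_support]
  -- injectivity of getVert on [0, n)
  have hinj : ∀ a b : ℕ, a < n → b < n → c.getVert a = c.getVert b → a = b := by
    have hnd := hcyc.support_nodup
    have htl : c.support.tail.length = n := by
      rw [List.length_tail, hsuplen]
      omega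
    have hT : ∀ j : ℕ, 1 ≤ j → (h2 : j ≤ n) → c.getVert j = c.support.tail[j-1]'(by omega) := by
      intro j h1 h2
      rw [aux_getVert_eq_support_getElem c (show j < c.support.length by omega),
        List.getElem_tail]
      congr 1
      omega
    have key : ∀ p q : ℕ, 1 ≤ p → p ≤ n → 1 ≤ q → q ≤ n →
        c.getVert p = c.getVert q → p = q := by
      intro p q hp1 hp2 hq1 hq2 h
      rw [hT p hp1 hp2, hT q hq1 hq2] at h
      have := (List.Nodup.getElem_inj_iff hnd (hi := by omega) (hj := by omega)).mp h
      omega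
    have h0n : c.getVert 0 = c.getVert n := by
      rw [SimpleGraph.Walk.getVert_zero, hn, SimpleGraph.Walk.getVert_length]
    intro a b ha hb hab
    rcases Nat.eq_zero_or_pos a with ha0 | ha0 <;> rcases Nat.eq_zero_or_pos b with hb0 | hb0
    · omega
    · subst ha0
      rw [h0n] at hab
      have := key n b (by omega) le_rfl hb0 (by omega) hab
      omega
    · subst hb0
      rw [h0n] at hab
      have := key a n ha0 (by omega) (by omega) le_rfl hab
      omega
    · exact key a b ha0 (by omega) hb0 (by omega) hab
  -- the cyclic vertex function
  set g : ℕ → V := fun i => c.getVert (i % n) with hg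
  have hgeq : ∀ j : ℕ, j ≤ n → c.getVert j = g j := by
    intro j hj
    rcases eq_or_lt_of_le hj with h | h
    · subst h
      simp only [hg, Nat.mod_self]
      rw [hn, SimpleGraph.Walk.getVert_length, SimpleGraph.Walk.getVert_zero]
    · simp only [hg]
      rw [Nat.mod_eq_of_lt h]
  have hmodsucc : ∀ a : ℕ, (a % n + 1) % n = (a + 1) % n := by
    intro a
    conv_rhs => rw [Nat.add_mod a 1 n]
    rw [Nat.mod_eq_of_lt (show 1 < n by omega)]
  have hgsucc : ∀ i : ℕ, c.getVert (i % n + 1) = g (i + 1) := by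
    intro i
    have hlt : i % n < n := Nat.mod_lt _ hnpos
    rcases Nat.lt_or_ge (i % n + 1) n with h | h
    · simp only [hg]
      congr 1
      rw [← hmodsucc i, Nat.mod_eq_of_lt h]
    · have heq : i % n + 1 = n := by omega
      rw [heq, hn, SimpleGraph.Walk.getVert_length]
      simp only [hg]
      rw [← hmodsucc, heq, Nat.mod_self, SimpleGraph.Walk.getVert_zero]
  have hgper : ∀ i : ℕ, g (i + n) = g i := by
    intro i; simp only [hg, Nat.add_mod_right]
  have hadjg : ∀ i : ℕ, G.Adj (g i) (g (i + 1)) := by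
    intro i
    have hlt : i % n < n := Nat.mod_lt _ hnpos
    have := c.adj_getVert_succ (i := i % n) (by omega)
    rwa [hgsucc i] at this
  have hinjmod : ∀ a b : ℕ, g a = g b → a % n = b % n := by
    intro a b h
    exact hinj _ _ (Nat.mod_lt _ hnpos) (Nat.mod_lt _ hnpos) h
  have hdvd : ∀ a k : ℕ, a % n = (a + k) % n → n ∣ k := by
    intro a k h
    have : a ≡ a + k [MOD n] := h
    have := (Nat.modEq_iff_dvd' (Nat.le_add_right a k)).mp this
    simpa using this
  have hmem : ∀ j : ℕ, g j ∈ c.support := by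
    intro j
    have hlt : j % n < n := Nat.mod_lt _ hnpos
    have : g j = c.support[j % n]'(by omega) :=
      aux_getVert_eq_support_getElem c (by omega)
    rw [this]
    exact List.getElem_mem _
  -- the key step: backward propagation of forwardness
  have hstep : ∀ i : ℕ, D (g (i + 1)) (g (i + 2)) → D (g i) (g (i + 1)) := by
    intro i hD
    by_contra hnd
    have h21 : D (g (i + 1)) (g i) := ((horient _ _).1 (hadjg i)).resolve_left hnd
    have hne : g i ≠ g (i + 2) := by
      intro h
      have := hdvd i 2 (hinjmod _ _ h)
      have := Nat.le_of_dvd (by omega) this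
      omega
    have hadj02 : G.Adj (g i) (g (i + 2)) := hperf (g (i + 1)) _ _ h21 hD hne
    have hedge : s(g i, g (i + 2)) ∈ c.edges := hind _ (hmem i) _ (hmem (i + 2)) hadj02
    simp only [SimpleGraph.Walk.edges, List.mem_map] at hedge
    obtain ⟨d, hd, hde⟩ := hedge
    obtain ⟨j, hj, hdj⟩ := List.mem_iff_getElem.mp hd
    have hjn : j < n := by simpa [SimpleGraph.Walk.length_darts] using hj
    obtain ⟨hfst, hsnd⟩ := aux_darts_getElem c hjn
    rw [hdj] at hfst hsnd
    rw [SimpleGraph.dart_edge_eq_mk'_iff] at hde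
    have hjg : c.getVert j = g j := by
      simp only [hg]; rw [Nat.mod_eq_of_lt hjn]
    have hjg1 : c.getVert (j + 1) = g (j + 1) := hgeq _ (by omega)
    rcases hde with hde | hde
    · have h1 : g j = g i := by
        rw [← hjg, ← hfst, hde]
      have h2 : g (j + 1) = g (i + 2) := by
        rw [← hjg1, ← hsnd, hde]
      have hj1 : j % n = i % n := hinjmod _ _ h1
      have hj2 : (j + 1) % n = (i + 2) % n := hinjmod _ _ h2
      rw [← hmodsucc j, hj1, hmodsucc i,
        show i + 2 = i + 1 + 1 from by omega] at hj2
      have := hdvd (i + 1) 1 hj2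
      have := Nat.le_of_dvd (by omega) this
      omega
    · have h1 : g j = g (i + 2) := by
        rw [← hjg, ← hfst, hde]
      have h2 : g (j + 1) = g i := by
        rw [← hjg1, ← hsnd, hde]
      have hj1 : j % n = (i + 2) % n := hinjmod _ _ h1
      have hj2 : (j + 1) % n = i % n := hinjmod _ _ h2
      rw [← hmodsucc j, hj1, hmodsucc (i + 2),
        show i + 2 + 1 = i + 3 from by omega] at hj2
      have := hdvd i 3 hj2.symm
      have := Nat.le_of_dvd (by omega) this
      omega
  -- propagation
  have hback : ∀ k i : ℕ, D (g (i + k)) (g (i + k + 1)) → D (g i) (g (i + 1)) := by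
    intro k
    induction k with
    | zero => intro i h; simpa using h
    | succ m ih =>
      intro i h
      apply ih
      apply hstep
      have e1 : i + m + 1 = i + (m + 1) := by omega
      have e2 : i + m + 2 = i + (m + 1) + 1 := by omega
      rw [e1, e2]
      exact h
  have hdartsdata : ∀ d ∈ c.darts, ∃ j : ℕ, j < n ∧ d.fst = g j ∧ d.snd = g (j + 1) := by
    intro d hd
    obtain ⟨j, hj, hdj⟩ := List.mem_iff_getElem.mp hd
    have hjn : j < n := by simpa [SimpleGraph.Walk.length_darts] using hj
    obtain ⟨hfst, hsnd⟩ := aux_darts_getElem c hjn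
    rw [hdj] at hfst hsnd
    refine ⟨j, hjn, ?_, ?_⟩
    · rw [hfst]; simp only [hg]; rw [Nat.mod_eq_of_lt hjn]
    · rw [hsnd]; exact hgeq _ (by omega)
  by_cases hF0 : D (g 0) (g 1)
  · left
    intro d hd
    obtain ⟨j, hjn, hf, hs⟩ := hdartsdata d hd
    rw [hf, hs]
    -- F n holds by periodicity
    have hFn : D (g n) (g (n + 1)) := by
      have h1 : g n = g 0 := by have := hgper 0; simpa using this
      have h2 : g (n + 1) = g 1 := by have := hgper 1; rwa [show 1 + n = n + 1 by omega] at this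
      rw [h1, h2]; exact hF0
    have := hback (n - j) j
    rw [show j + (n - j) = n by omega] at this
    exact this hFn
  · right
    intro d hd
    obtain ⟨j, hjn, hf, hs⟩ := hdartsdata d hd
    rw [hf, hs]
    have hnFj : ¬ D (g j) (g (j + 1)) := by
      intro h
      exact hF0 (hback j 0 (by simpa using h))
    exact ((horient _ _).1 (hadjg j)).resolve_left hnFj
end

section
/- In a graph admitting a hole-cyclic orientation, every avoidable vertex is bisimplicial. -/
open SimpleGraph

/-- A vertex is bisimplicial if its neighborhood is the union of two cliques. -/
def Bisimplicial {V : Type*} (G : SimpleGraph V) (v : V) : Prop :=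
  ∃ A B : Set V, G.neighborSet v = A ∪ B ∧ G.IsClique A ∧ G.IsClique B

/-- An orientation `D` of `G` is hole-cyclic if every induced cycle of length at least
four is oriented cyclically. -/
def HoleCyclicOrientation {V : Type*} (G : SimpleGraph V) (D : V → V → Prop) : Prop :=
  (∀ u v : V, G.Adj u v ↔ (D u v ∨ D v u)) ∧ (∀ u v : V, D u v → ¬ D v u) ∧
    ∀ (v : V) (c : G.Walk v v), IsInducedCycle G c → 4 ≤ c.length →
      (∀ d ∈ c.darts, D d.fst d.snd) ∨ (∀ d ∈ c.darts, D d.snd d.fst)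

/-!
Orient the neighbourhood of `v` into in-neighbours and out-neighbours. Two non-adjacent
in-neighbours `x, y` would, by avoidability, lie on a hole through `x - v - y`; a hole-cyclic
orientation turns it into a directed cycle, on which `v` has only one in-neighbour. Hence
both halves of the neighbourhood are cliques.
-/

namespace SimpleGraph.Walk

variable {V : Type*} {G : SimpleGraph V} {v : V}

lemma IsCycle.dart_eq_of_snd_eq {c : G.Walk v v} (hc : c.IsCycle) {d₁ d₂ : G.Dart}
    (h₁ : d₁ ∈ c.darts) (h₂ : d₂ ∈ c.darts) (h : d₁.snd = d₂.snd) : d₁ = d₂ :=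
  List.inj_on_of_nodup_map (by rw [map_snd_darts]; exact hc.support_nodup) h₁ h₂ h

lemma adj_of_length_eq_three {x y : V} (c : G.Walk v v) (hc : c.length = 3)
    (hx : s(x, v) ∈ c.edges) (hy : s(v, y) ∈ c.edges) (hxy : x ≠ y) : G.Adj x y := by
  rcases c with _ | ⟨hva, _ | ⟨hab, _ | ⟨hbv, _ | ⟨_, _⟩⟩⟩⟩ <;> simp at hc
  have := hva.ne
  have := hbv.ne
  have := hab.symm
  simp only [edges_cons, edges_nil, List.mem_cons, List.not_mem_nil, or_false,
    Sym2.eq_iff] at hx hy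
  grind

variable {D : V → V → Prop}

lemma IsCycle.eq_of_rel_of_forall_darts {c : G.Walk v v} (hc : c.IsCycle)
    (hasymm : ∀ u w, D u w → ¬ D w u) (hdir : ∀ d ∈ c.darts, D d.fst d.snd) {w x y : V}
    (hx : s(x, w) ∈ c.edges) (hy : s(y, w) ∈ c.edges) (hxw : D x w) (hyw : D y w) : x = y := by
  have hin : ∀ z, s(z, w) ∈ c.edges → D z w → ∃ d ∈ c.darts, d.fst = z ∧ d.snd = w := by
    intro z hz hzw
    obtain ⟨d, hd, hdz⟩ := List.mem_map.mp hz
    rcases Sym2.eq_iff.mp hdz with hd' | ⟨hfst, hsnd⟩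
    · exact ⟨d, hd, hd'⟩
    · exact absurd hzw (hasymm _ _ (hfst ▸ hsnd ▸ hdir d hd))
  obtain ⟨d₁, hd₁, rfl, h₁⟩ := hin x hx hxw
  obtain ⟨d₂, hd₂, rfl, h₂⟩ := hin y hy hyw
  rw [hc.dart_eq_of_snd_eq hd₁ hd₂ (h₁.trans h₂.symm)]

lemma IsCycle.eq_of_rel_of_forall_darts_symm {c : G.Walk v v} (hc : c.IsCycle)
    (hasymm : ∀ u w, D u w → ¬ D w u) (hdir : ∀ d ∈ c.darts, D d.snd d.fst) {w x y : V}
    (hx : s(x, w) ∈ c.edges) (hy : s(y, w) ∈ c.edges) (hxw : D x w) (hyw : D y w) : x = y :=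
  hc.reverse.eq_of_rel_of_forall_darts hasymm
    (fun d hd => hdir d.symm (mem_darts_reverse.mp hd)) (by simpa using hx) (by simpa using hy)
    hxw hyw

end SimpleGraph.Walk

section Orientation

variable {V : Type*} {G : SimpleGraph V} {D : V → V → Prop} {v : V}

lemma HoleCyclicOrientation.flip (hD : HoleCyclicOrientation G D) :
    HoleCyclicOrientation G (flip D) :=
  ⟨fun u w => (hD.1 u w).trans or_comm, fun u w huw hwu => hD.2.1 u w hwu huw,
    fun w c hc hlen => (hD.2.2 w c hc hlen).symm⟩

lemma Avoidable.isClique_setOf_rel (hv : Avoidable G v) (hD : HoleCyclicOrientation G D) :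
    G.IsClique {x | D x v} := by
  intro x hx y hy hxy
  by_contra hnadj
  have hadj : ∀ z, D z v → G.Adj v z := fun z hz => (hD.1 v z).2 (.inr hz)
  obtain ⟨c, hind, hxc, hyc⟩ := hv x y (hadj x hx) (hadj y hy) hxy hnadj
  have hlen : 4 ≤ c.length := by
    have := hind.1.three_le_length
    have : c.length ≠ 3 := fun h3 => hnadj (c.adj_of_length_eq_three h3 hxc hyc hxy)
    omega
  rw [Sym2.eq_swap] at hyc
  rcases hD.2.2 v c hind hlen with hfwd | hbwd
  · exact hxy (hind.1.eq_of_rel_of_forall_darts hD.2.1 hfwd hxc hyc hx hy)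
  · exact hxy (hind.1.eq_of_rel_of_forall_darts_symm hD.2.1 hbwd hxc hyc hx hy)

end Orientation

/-- In a graph admitting a hole-cyclic orientation, every avoidable vertex is
bisimplicial. -/
theorem stmt_11 {V : Type*} (G : SimpleGraph V)
    (h : ∃ D : V → V → Prop, HoleCyclicOrientation G D)
    (v : V) (hv : Avoidable G v) : Bisimplicial G v := by
  obtain ⟨D, hD⟩ := h
  refine ⟨{x | D x v}, {x | D v x}, ?_, hv.isClique_setOf_rel hD, hv.isClique_setOf_rel hD.flip⟩
  ext x
  exact (hD.1 v x).trans or_comm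
end
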